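/- arXiv:1506.04856 — 3 statements merged into one kernel-verified Lean document; each statement's English description precedes it below -/
import Mathlib

section
/- Let d ≥ 1, p > 0 and −∞ < β < α < ∞. Then the range of 𝔗_{β→α,p} is contained in the domain of Ψ_{β,p}: every Lévy measure of the form 𝔗_{β→α,p} M with M ∈ 𝔇(𝔗_{β→α,p}) belongs to 𝔇(Ψ_{β,p}). -/
open MeasureTheory Set
set_option maxHeartbeats 2000000

noncomputable section

variable {E : Type*} [NormedAddCommGroup E] [NormedSpace ℝ E]
  [MeasurableSpace E] [BorelSpace E]

/-- The upsilon transform with dilation measure `ρ` on `(0,∞) ⊆ ℝ`: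
`[Υ_ρ M](B) = ∫ M(s⁻¹ B) ρ(ds)`, realized as the image of `ρ ⊗ M` under `(s, x) ↦ s • x`. -/
def Upsilon (ρ : Measure ℝ) (M : Measure E) : Measure E :=
  Measure.map (fun sx : ℝ × E => sx.1 • sx.2) (ρ.prod M)

/-- `M` is a Lévy measure: σ-finite, no mass at `0`, and `∫ (|x|² ∧ 1) M(dx) < ∞`. -/
def IsLevyMeasure (M : Measure E) : Prop :=
  SigmaFinite M ∧ M {0} = 0 ∧
    ∫⁻ x, ENNReal.ofReal (min (‖x‖ ^ 2) 1) ∂M < ⊤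

/-- The domain `𝔇(Υ_ρ)`: Lévy measures `M` such that `Υ_ρ M` is again a Lévy measure. -/
def UpsilonDomain (ρ : Measure ℝ) : Set (Measure E) :=
  {M | IsLevyMeasure M ∧ IsLevyMeasure (Upsilon ρ M)}

/-- The range `ℜ(Υ_ρ) = {Υ_ρ M : M ∈ 𝔇(Υ_ρ)}`. -/
def UpsilonRange (ρ : Measure ℝ) : Set (Measure E) :=
  Upsilon ρ '' UpsilonDomain (E := E) ρ

/-- The class `𝔐^α`: Borel measures with `M({0}) = 0` and `∫ (|x|² ∧ |x|^α) M(dx) < ∞`. -/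
def MemMAlpha (α : ℝ) (M : Measure E) : Prop :=
  M {0} = 0 ∧ ∫⁻ x, ENNReal.ofReal (min (‖x‖ ^ 2) (‖x‖ ^ α)) ∂M < ⊤

/-- The class `𝔐^log`: Lévy measures with `∫_{|x|>1} log|x| M(dx) < ∞`. -/
def MemMLog (M : Measure E) : Prop :=
  IsLevyMeasure M ∧
    ∫⁻ x in {x : E | 1 < ‖x‖}, ENNReal.ofReal (Real.log ‖x‖) ∂M < ⊤

/-- The dilation measure `ψ_{α,p}(ds) = s^{-α-1} e^{-s^p} 1_{s>0} ds`. -/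
def psiMeasure (α p : ℝ) : Measure ℝ :=
  (volume : Measure ℝ).withDensity fun s =>
    if 0 < s then ENNReal.ofReal (s ^ (-α - 1) * Real.exp (-(s ^ p))) else 0

/-- `K_{α,β,p} = ∫₀^∞ u^{α-β-1} e^{-u^p} du`. -/
def Kconst (α β p : ℝ) : ℝ :=
  ∫ u in Ioi (0 : ℝ), u ^ (α - β - 1) * Real.exp (-(u ^ p))

/-- The dilation measure
`τ_{β→α,p}(ds) = K_{α,β,p}⁻¹ s^{-α-1} (1-s^p)^{(α-β)/p - 1} 1_{0<s<1} ds`. -/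
def tauMeasure (β α p : ℝ) : Measure ℝ :=
  (volume : Measure ℝ).withDensity fun s =>
    if 0 < s ∧ s < 1 then
      ENNReal.ofReal ((Kconst α β p)⁻¹ * (s ^ (-α - 1) * (1 - s ^ p) ^ ((α - β) / p - 1)))
    else 0

/-- `f` is the density of the fully right-skewed `r`-stable distribution on `(0,∞)`:
a nonnegative measurable function with `∫₀^∞ e^{-t x} f(x) dx = e^{-t^r}` for all `t ≥ 0`. -/
def IsStableDensity (r : ℝ) (f : ℝ → ℝ) : Prop :=
  Measurable f ∧ (∀ x, 0 ≤ f x) ∧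
    ∀ t : ℝ, 0 ≤ t →
      ∫ x in Ioi (0 : ℝ), Real.exp (-(t * x)) * f x = Real.exp (-(t ^ r))

/-- The dilation measure `π_{α,p→q}(ds) = p f_{q/p}(s^{-p}) s^{-α-p-1} 1_{s>0} ds`,
where `f` is (to be assumed) the density of the fully right-skewed `q/p`-stable law. -/
def piMeasure (f : ℝ → ℝ) (α p : ℝ) : Measure ℝ :=
  (volume : Measure ℝ).withDensity fun s =>
    if 0 < s then ENNReal.ofReal (p * f (s ^ (-p)) * s ^ (-α - p - 1)) else 0

/-- The measure `ρ(ds) = g(s) 1_{s>0} ds`. -/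
def densMeasure (g : ℝ → ℝ) : Measure ℝ :=
  (volume : Measure ℝ).withDensity fun s => if 0 < s then ENNReal.ofReal (g s) else 0

namespace Stmt3Aux
open scoped ENNReal NNReal
open intervalIntegral

lemma measurable_rpow_const (q : ℝ) : Measurable fun x : ℝ => x ^ q := by
  have hfe : (fun x : ℝ => x ^ q) = fun x =>
      if x = 0 then (if q = 0 then 1 else 0)
      else Real.exp (Real.log x * q) * (if 0 < x then 1 else Real.cos (q * Real.pi)) := by
    funext x
    rcases lt_trichotomy x 0 with hx | rfl | hx
    · rw [if_neg hx.ne, if_neg (not_lt.mpr hx.le), Real.rpow_def_of_neg hx]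
    · simp only [if_pos rfl]
      rcases eq_or_ne q 0 with rfl | hq
      · simp [Real.rpow_zero]
      · simp [Real.zero_rpow hq, hq]
    · rw [if_neg hx.ne', if_pos hx, Real.rpow_def_of_pos hx, mul_one]
  rw [hfe]
  apply Measurable.ite (measurableSet_singleton 0) measurable_const
  exact ((Real.measurable_log.mul_const q).exp).mul
    (Measurable.ite measurableSet_Ioi measurable_const measurable_const)

/-- The standard truncation function `min (u^2) 1` as an `ℝ≥0∞` value. -/
def mfun (u : ℝ) : ℝ≥0∞ := ENNReal.ofReal (min (u ^ 2) 1)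

lemma mfun_meas : Measurable mfun :=
  ((measurable_id.pow_const 2).min measurable_const).ennreal_ofReal

lemma mfun_ne_top (u : ℝ) : mfun u ≠ ⊤ := ENNReal.ofReal_ne_top

lemma mfun_mul_le {r : ℝ} (hr : |r| ≤ 1) (c : ℝ) : mfun (r * c) ≤ mfun c := by
  apply ENNReal.ofReal_le_ofReal
  have h1 : r ^ 2 ≤ 1 := by nlinarith [sq_abs r, abs_nonneg r]
  have h2 : (r * c) ^ 2 ≤ c ^ 2 := by nlinarith [sq_nonneg c]
  exact min_le_min h2 le_rfl

lemma mfun_le_sq_mul {r : ℝ} (hr : 1 ≤ r) (c : ℝ) :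
    mfun (r * c) ≤ ENNReal.ofReal (r ^ 2) * mfun c := by
  rw [mfun, mfun, ← ENNReal.ofReal_mul (by positivity : (0:ℝ) ≤ r ^ 2)]
  apply ENNReal.ofReal_le_ofReal
  rcases le_total (c ^ 2) 1 with h | h
  · rw [min_eq_left h]
    exact (min_le_left _ _).trans_eq (by ring)
  · rw [min_eq_right h]
    have : (1:ℝ) ≤ r ^ 2 := by nlinarith
    exact (min_le_right _ _).trans (by nlinarith)

lemma mfun_le_four_mul {r : ℝ} (hr : 1/2 ≤ r) (c : ℝ) : mfun c ≤ 4 * mfun (r * c) := by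
  rw [mfun, mfun, show (4:ℝ≥0∞) = ENNReal.ofReal 4 by norm_num,
    ← ENNReal.ofReal_mul (by norm_num)]
  apply ENNReal.ofReal_le_ofReal
  rcases le_total ((r * c) ^ 2) 1 with h | h
  · rw [min_eq_left h]
    have h5 : (0:ℝ) ≤ (2*r - 1) * (2*r + 1) :=
      mul_nonneg (by linarith) (by linarith)
    nlinarith [sq_nonneg c, min_le_left (c ^ 2) (1:ℝ), mul_nonneg (sq_nonneg c) h5]
  · rw [min_eq_right h]
    linarith [min_le_right (c ^ 2) (1:ℝ)]

lemma exp_decay (q b a : ℝ) (hq : 0 < q) (hb : 0 < b) (ha : 0 ≤ a) :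
    ∃ C : ℝ, 0 < C ∧ ∀ v : ℝ, 0 < v → v ^ a * Real.exp (-(b * v ^ q)) ≤ C := by
  obtain ⟨n, hn⟩ := exists_nat_ge (a / q)
  set m : ℕ := n + 1 with hm
  have hm0 : (0:ℝ) < m := by positivity
  have ham : a ≤ q * m := by
    have h1 : a / q ≤ (m:ℝ) := hn.trans (by exact_mod_cast Nat.le_succ n)
    calc a = q * (a / q) := by field_simp
    _ ≤ q * m := by nlinarith
  have key : ∀ x : ℝ, 0 ≤ x → x ^ m ≤ (m:ℝ) ^ m * Real.exp x := by
    intro x hx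
    have h1 : x / m ≤ Real.exp (x / m) := by linarith [Real.add_one_le_exp (x / m)]
    have h2 : (x / m) ^ m ≤ Real.exp (x / m) ^ m := pow_le_pow_left₀ (by positivity) h1 m
    have h3 : Real.exp (x / m) ^ m = Real.exp x := by
      rw [← Real.exp_nat_mul]
      congr 1
      field_simp
    rw [h3, div_pow] at h2
    have hmm : (0:ℝ) < (m:ℝ) ^ m := by positivity
    calc x ^ m = (m:ℝ) ^ m * (x ^ m / (m:ℝ) ^ m) := by field_simp
    _ ≤ (m:ℝ) ^ m * Real.exp x := by nlinarith
  refine ⟨max 1 ((m:ℝ) ^ m / b ^ m), lt_max_of_lt_left one_pos, fun v hv => ?_⟩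
  rcases le_or_gt v 1 with hv1 | hv1
  · have h1 : v ^ a ≤ 1 := Real.rpow_le_one hv.le hv1 ha
    have h2 : Real.exp (-(b * v ^ q)) ≤ 1 := by
      rw [Real.exp_le_one_iff]
      have := Real.rpow_pos_of_pos hv q
      nlinarith
    calc v ^ a * Real.exp (-(b * v ^ q)) ≤ 1 * 1 :=
          mul_le_mul h1 h2 (Real.exp_pos _).le zero_le_one
    _ ≤ max 1 ((m:ℝ) ^ m / b ^ m) := by rw [mul_one]; exact le_max_left _ _
  · have hvq : 0 < v ^ q := Real.rpow_pos_of_pos hv q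
    have hx : 0 ≤ b * v ^ q := by positivity
    have h1 : v ^ a ≤ (v ^ q) ^ m := by
      have h := Real.rpow_le_rpow_of_exponent_le hv1.le ham
      rwa [Real.rpow_mul hv.le, Real.rpow_natCast] at h
    have h2 : (v ^ q) ^ m = (b * v ^ q) ^ m / b ^ m := by
      rw [mul_pow]
      field_simp
    have h3 := key (b * v ^ q) hx
    have hexp := Real.exp_pos (-(b * v ^ q))
    have hbm : (0:ℝ) < b ^ m := by positivity
    have h4 : v ^ a * Real.exp (-(b * v ^ q)) ≤
        ((b * v ^ q) ^ m / b ^ m) * Real.exp (-(b * v ^ q)) := by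
      rw [← h2]
      exact mul_le_mul_of_nonneg_right h1 hexp.le
    have h5 : ((b * v ^ q) ^ m / b ^ m) * Real.exp (-(b * v ^ q)) ≤
        (((m:ℝ) ^ m * Real.exp (b * v ^ q)) / b ^ m) * Real.exp (-(b * v ^ q)) := by
      apply mul_le_mul_of_nonneg_right _ hexp.le
      gcongr
    have h6 : (((m:ℝ) ^ m * Real.exp (b * v ^ q)) / b ^ m) * Real.exp (-(b * v ^ q))
        = (m:ℝ) ^ m / b ^ m := by
      rw [Real.exp_neg]
      field_simp
    have h7 := (h4.trans h5)
    rw [h6] at h7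
    exact h7.trans (le_max_right _ _)

lemma one_sub_rpow_le_max (p : ℝ) (hp : 0 < p) {t : ℝ} (ht0 : 0 ≤ t) (ht1 : t ≤ 1) :
    1 - t ^ p ≤ max 1 p * (1 - t) := by
  rcases le_or_gt p 1 with h1 | h1
  · have htp : t ≤ t ^ p := by
      rcases eq_or_lt_of_le ht0 with h | h
      · rw [← h, Real.zero_rpow hp.ne']
      · calc t = t ^ (1:ℝ) := (Real.rpow_one t).symm
        _ ≤ t ^ p := Real.rpow_le_rpow_of_exponent_ge h ht1 h1
    rw [max_eq_left h1]
    linarith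
  · have hB := one_add_mul_self_le_rpow_one_add (show (-1:ℝ) ≤ t - 1 by linarith) h1.le
    rw [show (1:ℝ) + (t - 1) = t by ring] at hB
    rw [max_eq_right h1.le]
    nlinarith

lemma min_le_one_sub_rpow (p : ℝ) (hp : 0 < p) {t : ℝ} (ht0 : 0 ≤ t) (ht1 : t ≤ 1) :
    min 1 p * (1 - t) ≤ 1 - t ^ p := by
  rcases le_or_gt 1 p with h1 | h1
  · have htp : t ^ p ≤ t := by
      rcases eq_or_lt_of_le ht0 with h | h
      · rw [← h, Real.zero_rpow hp.ne']
      · calc t ^ p ≤ t ^ (1:ℝ) := Real.rpow_le_rpow_of_exponent_ge h ht1 h1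
        _ = t := Real.rpow_one t
    rw [min_eq_left h1]
    linarith
  · have key : t ^ p * 1 ^ (1 - p) ≤ p * t + (1 - p) * 1 :=
      Real.geom_mean_le_arith_mean2_weighted hp.le (by linarith) ht0 zero_le_one (by ring)
    rw [Real.one_rpow, mul_one, mul_one] at key
    rw [min_eq_right h1.le]
    nlinarith

lemma rpow_le_max {a b x : ℝ} (e : ℝ) (ha : 0 < a) (hax : a ≤ x) (hxb : x ≤ b) :
    x ^ e ≤ max (a ^ e) (b ^ e) := by
  rcases le_or_gt 0 e with he | he
  · exact le_max_of_le_right (Real.rpow_le_rpow (ha.le.trans hax) hxb he)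
  · exact le_max_of_le_left (Real.rpow_le_rpow_of_nonpos ha hax he.le)

lemma min_rpow_le {a b x : ℝ} (e : ℝ) (ha : 0 < a) (hax : a ≤ x) (hxb : x ≤ b) :
    min (a ^ e) (b ^ e) ≤ x ^ e := by
  rcases le_or_gt 0 e with he | he
  · exact (min_le_left _ _).trans (Real.rpow_le_rpow ha.le hax he)
  · exact (min_le_right _ _).trans (Real.rpow_le_rpow_of_nonpos (ha.trans_le hax) hxb he.le)

lemma lintegral_eq_set {f : ℝ → ℝ≥0∞} {s : Set ℝ} (hs : MeasurableSet s)
    (h : ∀ x, x ∉ s → f x = 0) : ∫⁻ x, f x = ∫⁻ x in s, f x := by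
  rw [← lintegral_indicator hs]
  refine lintegral_congr fun x => ?_
  by_cases hx : x ∈ s
  · rw [indicator_of_mem hx]
  · rw [indicator_of_notMem hx, h x hx]

lemma lintegral_scale_Ioi {G : ℝ → ℝ≥0∞} (hG : Measurable G) {t : ℝ} (ht : 0 < t) :
    ∫⁻ s in Ioi (0:ℝ), G s = ENNReal.ofReal t⁻¹ * ∫⁻ r in Ioi (0:ℝ), G (r / t) := by
  have hmap : ∀ (F : ℝ → ℝ≥0∞), Measurable F →
      (∫⁻ s, F (t * s)) = ENNReal.ofReal t⁻¹ * ∫⁻ y, F y := by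
    intro F hF
    have h1 : (∫⁻ s, F (t * s)) = ∫⁻ y, F y ∂(Measure.map (t * ·) volume) :=
      (lintegral_map hF (measurable_const_mul t)).symm
    rw [h1, Real.map_volume_mul_left ht.ne', lintegral_smul_measure, smul_eq_mul,
      abs_of_pos (inv_pos.mpr ht)]
  set F : ℝ → ℝ≥0∞ := (Ioi (0:ℝ)).indicator (fun y => G (y / t)) with hF_def
  have hFm : Measurable F := (hG.comp (measurable_id.div_const t)).indicator measurableSet_Ioi
  have h1 : ∀ s : ℝ, F (t * s) = (Ioi (0:ℝ)).indicator G s := by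
    intro s
    by_cases hs : 0 < s
    · rw [hF_def, indicator_of_mem (show t * s ∈ Ioi (0:ℝ) from mul_pos ht hs),
        indicator_of_mem (show s ∈ Ioi (0:ℝ) from hs)]
      congr 1
      field_simp
    · have hts : ¬ (0 < t * s) := by
        push_neg at hs ⊢
        nlinarith [mul_nonneg ht.le (neg_nonneg.mpr hs)]
      rw [hF_def, indicator_of_notMem (by simpa using hts),
        indicator_of_notMem (by simpa using hs)]
  calc ∫⁻ s in Ioi (0:ℝ), G s = ∫⁻ s, (Ioi (0:ℝ)).indicator G s :=
        (lintegral_indicator measurableSet_Ioi G).symm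
  _ = ∫⁻ s, F (t * s) := lintegral_congr fun s => (h1 s).symm
  _ = ENNReal.ofReal t⁻¹ * ∫⁻ y, F y := hmap F hFm
  _ = ENNReal.ofReal t⁻¹ * ∫⁻ r in Ioi (0:ℝ), G (r / t) := by
      rw [hF_def, lintegral_indicator measurableSet_Ioi]

lemma setLIntegral_ofReal_lt_top {f : ℝ → ℝ} {s : Set ℝ} (hf : IntegrableOn f s volume) :
    ∫⁻ x in s, ENNReal.ofReal (f x) < ⊤ :=
  lt_of_le_of_lt (lintegral_mono fun x => Real.ofReal_le_enorm (f x)) hf.2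

lemma lint_rpow_Ioc {a b e : ℝ} (ha : 0 < a) (hab : a ≤ b) (he : e ≠ -1) :
    ∫⁻ t in Ioc a b, ENNReal.ofReal (t ^ e)
      = ENNReal.ofReal ((b ^ (e+1) - a ^ (e+1)) / (e+1)) := by
  have h0 : (0:ℝ) ∉ uIcc a b := by
    rw [uIcc_of_le hab]
    intro h
    exact absurd h.1 (not_le.mpr ha)
  have hInt : IntegrableOn (fun t : ℝ => t ^ e) (Ioc a b) volume :=
    (intervalIntegrable_iff_integrableOn_Ioc_of_le hab).mp (intervalIntegrable_rpow (Or.inr h0))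
  rw [← ofReal_integral_eq_lintegral_ofReal hInt ?_]
  · congr 1
    rw [← integral_of_le hab, integral_rpow (Or.inr ⟨he, h0⟩)]
  · filter_upwards [ae_restrict_mem measurableSet_Ioc] with t ht
    exact Real.rpow_nonneg (ha.trans ht.1).le e

lemma lint_rpow_Ioc_zero {b e : ℝ} (hb : 0 < b) (he : -1 < e) :
    ∫⁻ t in Ioc 0 b, ENNReal.ofReal (t ^ e) = ENNReal.ofReal (b ^ (e+1) / (e+1)) := by
  have hInt : IntegrableOn (fun t : ℝ => t ^ e) (Ioc 0 b) volume :=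
    (intervalIntegrable_iff_integrableOn_Ioc_of_le hb.le).mp (intervalIntegrable_rpow' he)
  rw [← ofReal_integral_eq_lintegral_ofReal hInt ?_]
  · congr 1
    rw [← integral_of_le hb.le, integral_rpow (Or.inl he),
      Real.zero_rpow (by linarith : e + 1 ≠ 0)]
    ring
  · filter_upwards [ae_restrict_mem measurableSet_Ioc] with t ht
    exact Real.rpow_nonneg ht.1.le e


section Plumbing

lemma measurable_smul_pair : Measurable fun q : ℝ × E => q.1 • q.2 :=
  continuous_smul.measurable

lemma upsilon_expand {D : ℝ → ℝ≥0∞} (hD : Measurable D) (M : Measure E) [SFinite M]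
    {g : E → ℝ≥0∞} (hg : Measurable g) :
    ∫⁻ y, g y ∂(Upsilon ((volume : Measure ℝ).withDensity D) M)
      = ∫⁻ s, D s * ∫⁻ x, g (s • x) ∂M := by
  have hm : Measurable fun z : ℝ × E => g (z.1 • z.2) := hg.comp measurable_smul_pair
  rw [Upsilon, lintegral_map hg measurable_smul_pair,
    lintegral_prod _ hm.aemeasurable,
    lintegral_withDensity_eq_lintegral_mul _ hD hm.lintegral_prod_right']
  rfl

lemma upsilon_zero (D : ℝ → ℝ≥0∞) (M : Measure E) [SFinite M] (hM0 : M {0} = 0) :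
    Upsilon ((volume : Measure ℝ).withDensity D) M {0} = 0 := by
  rw [Upsilon, Measure.map_apply measurable_smul_pair (measurableSet_singleton 0)]
  have hsub : (fun q : ℝ × E => q.1 • q.2) ⁻¹' {0} ⊆
      (({0} : Set ℝ) ×ˢ (univ : Set E)) ∪ ((univ : Set ℝ) ×ˢ ({0} : Set E)) := by
    rintro ⟨s, x⟩ h
    simp only [mem_preimage, mem_singleton_iff, smul_eq_zero] at h
    rcases h with h | h
    · exact Or.inl ⟨by simpa using h, mem_univ _⟩
    · exact Or.inr ⟨mem_univ _, by simpa using h⟩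
  refine le_antisymm ((measure_mono hsub).trans ?_) bot_le
  refine (measure_union_le _ _).trans ?_
  rw [Measure.prod_prod, Measure.prod_prod]
  have hray : (volume : Measure ℝ).withDensity D {0} = 0 := by
    rw [withDensity_apply _ (measurableSet_singleton 0),
      Measure.restrict_eq_zero.mpr (by simp), lintegral_zero_measure]
  rw [hray, hM0, zero_mul, mul_zero, add_zero]

lemma sigmaFinite_of_levy (μ : Measure E) (h0 : μ {0} = 0)
    (hfin : ∫⁻ x, ENNReal.ofReal (min (‖x‖ ^ 2) 1) ∂μ < ⊤) : SigmaFinite μ := by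
  have hf : Measurable fun x : E => ENNReal.ofReal (min (‖x‖ ^ 2) 1) :=
    ((measurable_norm.pow_const 2).min measurable_const).ennreal_ofReal
  refine ⟨⟨⟨fun n => {x : E | 1 / (n + 1 : ℝ) ≤ ‖x‖} ∪ {0}, fun _ => trivial, fun n => ?_, ?_⟩⟩⟩
  · have hε : (0:ℝ) < 1 / (n + 1 : ℝ) := by positivity
    have hmin : (0:ℝ) < min ((1 / (n + 1 : ℝ)) ^ 2) 1 := lt_min (by positivity) one_pos
    have hsub : {x : E | 1 / (n + 1 : ℝ) ≤ ‖x‖} ⊆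
        {x : E | ENNReal.ofReal (min ((1 / (n + 1 : ℝ)) ^ 2) 1)
          ≤ ENNReal.ofReal (min (‖x‖ ^ 2) 1)} := by
      intro x hx
      simp only [mem_setOf_eq] at hx ⊢
      exact ENNReal.ofReal_le_ofReal (min_le_min (pow_le_pow_left₀ hε.le hx 2) le_rfl)
    have hb := meas_ge_le_lintegral_div (μ := μ) hf.aemeasurable
      (ne_of_gt (ENNReal.ofReal_pos.mpr hmin)) (ENNReal.ofReal_ne_top)
    calc μ ({x : E | 1 / (n + 1 : ℝ) ≤ ‖x‖} ∪ {0})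
        ≤ μ {x : E | 1 / (n + 1 : ℝ) ≤ ‖x‖} + μ {0} := measure_union_le _ _
    _ ≤ (∫⁻ x, ENNReal.ofReal (min (‖x‖ ^ 2) 1) ∂μ)
          / ENNReal.ofReal (min ((1 / (n + 1 : ℝ)) ^ 2) 1) + 0 := by
        gcongr
        · exact (measure_mono hsub).trans hb
        · exact le_of_eq h0
    _ < ⊤ := by
        rw [add_zero]
        exact ENNReal.div_lt_top hfin.ne (ne_of_gt (ENNReal.ofReal_pos.mpr hmin))
  · refine eq_univ_iff_forall.mpr fun x => mem_iUnion.mpr ?_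
    rcases eq_or_ne x 0 with rfl | hx
    · exact ⟨0, Or.inr rfl⟩
    · obtain ⟨n, hn⟩ := exists_nat_one_div_lt (norm_pos_iff.mpr hx)
      exact ⟨n, Or.inl hn.le⟩

end Plumbing

section Densities

/-- The `ℝ≥0∞`-valued density of `psiMeasure β p`. -/
def Dpsi (β p : ℝ) : ℝ → ℝ≥0∞ := fun s =>
  if 0 < s then ENNReal.ofReal (s ^ (-β - 1) * Real.exp (-(s ^ p))) else 0

/-- The real density of `psiMeasure β p` on `(0,∞)`. -/
def dpsi (β p : ℝ) (s : ℝ) : ℝ := s ^ (-β - 1) * Real.exp (-(s ^ p))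

/-- The `ℝ≥0∞`-valued density of `tauMeasure β α p`. -/
def Dtau (β α p : ℝ) : ℝ → ℝ≥0∞ := fun t =>
  if 0 < t ∧ t < 1 then
    ENNReal.ofReal ((Kconst α β p)⁻¹ * (t ^ (-α - 1) * (1 - t ^ p) ^ ((α - β) / p - 1)))
  else 0

/-- The real density of `tauMeasure β α p` on `(0,1)`. -/
def dtau (β α p : ℝ) (t : ℝ) : ℝ :=
  (Kconst α β p)⁻¹ * (t ^ (-α - 1) * (1 - t ^ p) ^ ((α - β) / p - 1))

lemma psiMeasure_eq (β p : ℝ) :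
    psiMeasure β p = (volume : Measure ℝ).withDensity (Dpsi β p) := rfl

lemma tauMeasure_eq (β α p : ℝ) :
    tauMeasure β α p = (volume : Measure ℝ).withDensity (Dtau β α p) := rfl

lemma meas_dpsi (β p : ℝ) : Measurable (dpsi β p) :=
  (measurable_rpow_const (-β - 1)).mul ((measurable_rpow_const p).neg.exp)

lemma meas_dtau (β α p : ℝ) : Measurable (dtau β α p) :=
  measurable_const.mul ((measurable_rpow_const (-α - 1)).mul
    ((measurable_rpow_const ((α - β) / p - 1)).comp
      (measurable_const.sub (measurable_rpow_const p))))

lemma meas_Dpsi (β p : ℝ) : Measurable (Dpsi β p) := by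
  apply Measurable.ite measurableSet_Ioi ((meas_dpsi β p).ennreal_ofReal) measurable_const

lemma meas_Dtau (β α p : ℝ) : Measurable (Dtau β α p) := by
  apply Measurable.ite (measurableSet_Ioo (a := (0:ℝ)) (b := (1:ℝ))) ((meas_dtau β α p).ennreal_ofReal) measurable_const

lemma Dpsi_ne_top (β p : ℝ) (s : ℝ) : Dpsi β p s ≠ ⊤ := by
  rw [Dpsi]
  split <;> simp

lemma Dtau_ne_top (β α p : ℝ) (t : ℝ) : Dtau β α p t ≠ ⊤ := by
  rw [Dtau]
  split <;> simp

lemma Dpsi_eq_of_pos {β p s : ℝ} (hs : 0 < s) : Dpsi β p s = ENNReal.ofReal (dpsi β p s) := by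
  rw [Dpsi, if_pos hs]; rfl

lemma Dpsi_eq_zero {β p s : ℝ} (hs : s ∉ Ioi (0:ℝ)) : Dpsi β p s = 0 := by
  rw [Dpsi, if_neg (by simpa using hs)]

lemma Dtau_eq_of_mem {β α p t : ℝ} (ht : t ∈ Ioo (0:ℝ) 1) :
    Dtau β α p t = ENNReal.ofReal (dtau β α p t) := by
  rw [Dtau, if_pos (by simpa [mem_Ioo] using ht)]; rfl

lemma Dtau_eq_zero {β α p t : ℝ} (ht : t ∉ Ioo (0:ℝ) 1) : Dtau β α p t = 0 := by
  rw [Dtau, if_neg (by simpa [mem_Ioo] using ht)]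

lemma K_integrable {β α p : ℝ} (hβα : β < α) (hp : 0 < p) :
    IntegrableOn (fun u : ℝ => u ^ (α - β - 1) * Real.exp (-(u ^ p))) (Ioi 0) volume := by
  have hA : 0 < α - β := sub_pos.mpr hβα
  have hmeas : Measurable fun u : ℝ => u ^ (α - β - 1) * Real.exp (-(u ^ p)) :=
    (measurable_rpow_const (α - β - 1)).mul ((measurable_rpow_const p).neg.exp)
  rw [show Ioi (0:ℝ) = Ioc 0 1 ∪ Ioi 1 from (Ioc_union_Ioi_eq_Ioi zero_le_one).symm]
  apply IntegrableOn.union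
  · have h1 : IntegrableOn (fun u : ℝ => u ^ (α - β - 1)) (Ioc 0 1) volume :=
      (intervalIntegrable_iff_integrableOn_Ioc_of_le zero_le_one).mp
        (intervalIntegrable_rpow' (by linarith))
    apply Integrable.mono' h1 hmeas.aestronglyMeasurable
    filter_upwards [ae_restrict_mem measurableSet_Ioc] with u hu
    have hu0 : (0:ℝ) < u := hu.1
    have h2 : Real.exp (-(u ^ p)) ≤ 1 := by
      rw [Real.exp_le_one_iff]
      have := Real.rpow_pos_of_pos hu0 p
      linarith
    rw [Real.norm_eq_abs, abs_of_nonneg (mul_nonneg (Real.rpow_nonneg hu0.le _) (Real.exp_pos _).le)]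
    exact mul_le_of_le_one_right (Real.rpow_nonneg hu0.le _) h2
  · obtain ⟨C, hC0, hCb⟩ := exp_decay p 1 (max (α - β + 1) 0) hp one_pos (le_max_right _ _)
    have h2 : IntegrableOn (fun u : ℝ => C * u ^ (-2 : ℝ)) (Ioi 1) volume :=
      (integrableOn_Ioi_rpow_of_lt (by norm_num) one_pos).const_mul C
    apply Integrable.mono' h2 hmeas.aestronglyMeasurable
    filter_upwards [ae_restrict_mem measurableSet_Ioi] with u hu
    have hu0 : (0:ℝ) < u := lt_trans one_pos hu
    rw [Real.norm_eq_abs, abs_of_nonneg (mul_nonneg (Real.rpow_nonneg hu0.le _) (Real.exp_pos _).le)]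
    have e1 : u ^ (α - β - 1) = u ^ (-2:ℝ) * u ^ (α - β + 1) := by
      rw [← Real.rpow_add hu0]
      ring_nf
    have e2 : u ^ (α - β + 1) ≤ u ^ (max (α - β + 1) 0) :=
      Real.rpow_le_rpow_of_exponent_le hu.le (le_max_left _ _)
    have e3 := hCb u hu0
    rw [one_mul] at e3
    calc u ^ (α - β - 1) * Real.exp (-(u ^ p))
        = u ^ (-2:ℝ) * (u ^ (α - β + 1) * Real.exp (-(u ^ p))) := by rw [e1]; ring
    _ ≤ u ^ (-2:ℝ) * (u ^ (max (α - β + 1) 0) * Real.exp (-(u ^ p))) := by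
        apply mul_le_mul_of_nonneg_left _ (Real.rpow_nonneg hu0.le _)
        exact mul_le_mul_of_nonneg_right e2 (Real.exp_pos _).le
    _ ≤ u ^ (-2:ℝ) * C := mul_le_mul_of_nonneg_left e3 (Real.rpow_nonneg hu0.le _)
    _ = C * u ^ (-2:ℝ) := mul_comm _ _

lemma K_pos {β α p : ℝ} (hβα : β < α) (hp : 0 < p) : 0 < Kconst α β p := by
  rw [Kconst]
  rw [setIntegral_pos_iff_support_of_nonneg_ae ?_ (K_integrable hβα hp)]
  · apply lt_of_lt_of_le _ (measure_mono (show Ioi (1:ℝ) ⊆ _ from ?_))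
    · rw [Real.volume_Ioi]
      exact ENNReal.zero_lt_top
    · intro u hu
      have hu0 : (0:ℝ) < u := lt_trans one_pos hu
      constructor
      · exact ne_of_gt (mul_pos (Real.rpow_pos_of_pos hu0 _) (Real.exp_pos _))
      · exact lt_trans one_pos (mem_Ioi.mp hu)
  · filter_upwards [ae_restrict_mem measurableSet_Ioi] with u hu
    exact mul_nonneg (Real.rpow_nonneg (le_of_lt hu) _) (Real.exp_pos _).le

end Densities

section Core

lemma mul_le_mul4 {k r x1 x2 y1 y2 z1 z2 : ℝ} (hk : 0 ≤ k) (hr : 0 ≤ r)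
    (hx : x1 ≤ x2) (hy : y1 ≤ y2) (hz : z1 ≤ z2)
    (hy1 : 0 ≤ y1) (hz1 : 0 ≤ z1) (hx2 : 0 ≤ x2) (hy2 : 0 ≤ y2) :
    k * (r * (x1 * (y1 * z1))) ≤ k * (r * (x2 * (y2 * z2))) := by
  have h1 : y1 * z1 ≤ y2 * z2 := mul_le_mul hy hz hz1 hy2
  have h2 : x1 * (y1 * z1) ≤ x2 * (y2 * z2) := mul_le_mul hx h1 (mul_nonneg hy1 hz1) hx2
  exact mul_le_mul_of_nonneg_left (mul_le_mul_of_nonneg_left h2 hr) hk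

lemma dw_eq {β α p : ℝ} (hp : 0 < p) {r t : ℝ} (hr : 0 < r) (ht : 0 < t) (ht1 : t < 1) :
    dtau β α p t * t⁻¹ * dpsi β p (r / t)
      = (Kconst α β p)⁻¹ * (r ^ (-β - 1) * (t ^ (β - α - 1) *
          ((1 - t ^ p) ^ ((α - β) / p - 1) * Real.exp (-((r / t) ^ p))))) := by
  have h1 : (r / t) ^ (-β - 1) = r ^ (-β - 1) * t ^ (β + 1) := by
    rw [div_eq_mul_inv, Real.mul_rpow hr.le (inv_nonneg.mpr ht.le), Real.inv_rpow ht.le,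
      ← Real.rpow_neg ht.le, show -(-β - 1) = β + 1 by ring]
  have h2 : t ^ (-α - 1) * (t⁻¹ * t ^ (β + 1)) = t ^ (β - α - 1) := by
    rw [show (t:ℝ)⁻¹ = t ^ (-1:ℝ) from (Real.rpow_neg_one t).symm,
      ← Real.rpow_add ht, ← Real.rpow_add ht]
    congr 1
    ring
  calc dtau β α p t * t⁻¹ * dpsi β p (r / t)
      = (Kconst α β p)⁻¹ * (r ^ (-β - 1) * ((t ^ (-α - 1) * (t⁻¹ * t ^ (β + 1))) *
          ((1 - t ^ p) ^ ((α - β) / p - 1) * Real.exp (-((r / t) ^ p))))) := by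
        simp only [dtau, dpsi]
        rw [h1]
        ring
  _ = _ := by rw [h2]

lemma W_bounds {β α p : ℝ} (hβα : β < α) (hp : 0 < p) :
    ∃ C₁ C₂ : ℝ≥0∞, C₁ ≠ ⊤ ∧ C₂ ≠ ⊤ ∧
      (∀ r ∈ Ioc (0:ℝ) 1,
        (∫⁻ t in Ioo (0:ℝ) 1, ENNReal.ofReal (dtau β α p t * t⁻¹ * dpsi β p (r / t)))
          ≤ C₁ * ENNReal.ofReal (r ^ (-α - 1))) ∧
      (∀ r ∈ Ioi (1:ℝ),
        (∫⁻ t in Ioo (0:ℝ) 1, ENNReal.ofReal (dtau β α p t * t⁻¹ * dpsi β p (r / t)))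
          ≤ C₂ * ENNReal.ofReal (r ^ (-β - 1) * Real.exp (-(r ^ p) / 2))) := by
  have hA : 0 < α - β := sub_pos.mpr hβα
  have hK := K_pos (β := β) (α := α) hβα hp
  set Ki : ℝ := (Kconst α β p)⁻¹ with hKi_def
  have hKi0 : (0:ℝ) ≤ Ki := inv_nonneg.mpr hK.le
  set δ1 : ℝ := (α - β) / p - 1 with hδ1
  have hδ : -1 < δ1 := by
    rw [hδ1]
    have := div_pos hA hp
    linarith
  have hhalfp : (0:ℝ) < 1 - (1/2:ℝ) ^ p := by
    have := Real.rpow_lt_one (by norm_num : (0:ℝ) ≤ 1/2) (by norm_num) hp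
    linarith
  set Ca : ℝ := max ((1 - (1/2:ℝ) ^ p) ^ δ1) 1 with hCa_def
  have hCa0 : 0 < Ca := lt_of_lt_of_le one_pos (le_max_right _ _)
  have hCa : ∀ t : ℝ, 0 < t → t ≤ 1/2 → (1 - t ^ p) ^ δ1 ≤ Ca := by
    intro t ht0 ht
    have h1 : 1 - (1/2:ℝ) ^ p ≤ 1 - t ^ p := by
      have := Real.rpow_le_rpow ht0.le ht hp.le
      linarith
    have h2 : 1 - t ^ p ≤ 1 := by
      have := Real.rpow_pos_of_pos ht0 p
      linarith
    have := rpow_le_max δ1 hhalfp h1 h2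
    rwa [Real.one_rpow] at this
  obtain ⟨Cb, hCb0, hCb⟩ := exp_decay p 1 (α - β + p) hp one_pos (by linarith)
  obtain ⟨Cb2, hCb20, hCb2⟩ := exp_decay p (1/2) (α - β + p) hp (by norm_num) (by linarith)
  set Cq : ℝ := max ((min 1 p) ^ δ1) ((max 1 p) ^ δ1) with hCq_def
  have hminp : (0:ℝ) < min 1 p := lt_min one_pos hp
  have hCq0 : 0 < Cq := lt_of_lt_of_le (Real.rpow_pos_of_pos hminp δ1) (le_max_left _ _)
  have hCq : ∀ t : ℝ, 1/2 ≤ t → t < 1 → (1 - t ^ p) ^ δ1 ≤ Cq * (1 - t) ^ δ1 := by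
    intro t ht2 ht1
    have ht0 : (0:ℝ) ≤ t := by linarith
    have h1t : (0:ℝ) < 1 - t := by linarith
    have hb1 := one_sub_rpow_le_max p hp ht0 ht1.le
    have hb2 := min_le_one_sub_rpow p hp ht0 ht1.le
    rcases le_or_gt 0 δ1 with hd | hd
    · have h0 : (0:ℝ) ≤ 1 - t ^ p := le_trans (by positivity) hb2
      calc (1 - t ^ p) ^ δ1 ≤ (max 1 p * (1 - t)) ^ δ1 := Real.rpow_le_rpow h0 hb1 hd
      _ = (max 1 p) ^ δ1 * (1 - t) ^ δ1 := Real.mul_rpow (by positivity) h1t.le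
      _ ≤ Cq * (1 - t) ^ δ1 :=
          mul_le_mul_of_nonneg_right (le_max_right _ _) (Real.rpow_nonneg h1t.le _)
    · have hmp : 0 < min 1 p * (1 - t) := mul_pos hminp h1t
      calc (1 - t ^ p) ^ δ1 ≤ (min 1 p * (1 - t)) ^ δ1 :=
            Real.rpow_le_rpow_of_nonpos hmp hb2 hd.le
      _ = (min 1 p) ^ δ1 * (1 - t) ^ δ1 := Real.mul_rpow hminp.le h1t.le
      _ ≤ Cq * (1 - t) ^ δ1 :=
          mul_le_mul_of_nonneg_right (le_max_left _ _) (Real.rpow_nonneg h1t.le _)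
  set I2 : ℝ≥0∞ := ∫⁻ t in Ioo (1/2:ℝ) 1, ENNReal.ofReal ((1 - t) ^ δ1) with hI2_def
  have hI2 : I2 ≠ ⊤ := by
    have h0 : IntervalIntegrable (fun x : ℝ => x ^ δ1) volume 0 (1/2) :=
      intervalIntegrable_rpow' hδ
    have h1 := h0.comp_sub_left 1
    norm_num at h1
    have h2 : IntegrableOn (fun x : ℝ => (1 - x) ^ δ1) (Ioc (1/2:ℝ) 1) volume :=
      (intervalIntegrable_iff_integrableOn_Ioc_of_le (by norm_num : (1/2:ℝ) ≤ 1)).mp h1.symm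
    exact ((setLIntegral_ofReal_lt_top (h2.mono_set Ioo_subset_Ioc_self))).ne
  have hhalf_rpow : ∀ e : ℝ, ((1/2:ℝ)) ^ e = 2 ^ (-e) := by
    intro e
    rw [show (1/2:ℝ) = 2⁻¹ by norm_num, Real.inv_rpow (by norm_num : (0:ℝ) ≤ 2),
      Real.rpow_neg (by norm_num : (0:ℝ) ≤ 2)]
  have h2pow : ∀ e : ℝ, 0 ≤ e → (1:ℝ) ≤ 2 ^ e := by
    intro e he
    have := Real.rpow_le_rpow_of_exponent_le (by norm_num : (1:ℝ) ≤ 2) he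
    rwa [Real.rpow_zero] at this
  -- disjointness facts
  have hd23 : Disjoint (Ioc (0:ℝ) (1/2)) (Ioo (1/2:ℝ) 1) :=
    (Iic_disjoint_Ioi le_rfl).mono Ioc_subset_Iic_self Ioo_subset_Ioi_self
  have hsplit2 : Ioo (0:ℝ) 1 = Ioc (0:ℝ) (1/2) ∪ Ioo (1/2:ℝ) 1 := by
    ext x
    simp only [mem_Ioo, mem_union, mem_Ioc]
    constructor
    · rintro ⟨h0, h1⟩
      rcases le_or_gt x (1/2) with h | h
      · exact Or.inl ⟨h0, h⟩
      · exact Or.inr ⟨h, h1⟩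
    · rintro (⟨h0, h⟩ | ⟨h, h1⟩)
      · exact ⟨h0, lt_of_le_of_lt h (by norm_num)⟩
      · exact ⟨lt_trans (by norm_num) h, h1⟩
  -- piece 3 : shared bound on (1/2,1) for every r > 0
  have piece3 : ∀ r : ℝ, 0 < r →
      (∫⁻ t in Ioo (1/2:ℝ) 1, ENNReal.ofReal (dtau β α p t * t⁻¹ * dpsi β p (r / t)))
        ≤ ENNReal.ofReal (Ki * 2 ^ (α - β + 1) * Cq) * I2
            * ENNReal.ofReal (r ^ (-β - 1) * Real.exp (-(r ^ p) / 2)) := by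
    intro r hr0
    have hb : ∀ t ∈ Ioo (1/2:ℝ) 1,
        ENNReal.ofReal (dtau β α p t * t⁻¹ * dpsi β p (r / t))
          ≤ ENNReal.ofReal ((Ki * 2 ^ (α - β + 1) * Cq * (r ^ (-β - 1)
              * Real.exp (-(r ^ p) / 2))) * (1 - t) ^ δ1) := by
      intro t ht
      obtain ⟨ht2, ht1⟩ := ht
      have ht0 : (0:ℝ) < t := lt_trans (by norm_num) ht2
      rw [dw_eq hp hr0 ht0 ht1]
      apply ENNReal.ofReal_le_ofReal
      have htpow : t ^ (β - α - 1) ≤ 2 ^ (α - β + 1) := by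
        have h := Real.rpow_le_rpow_of_nonpos (by norm_num : (0:ℝ) < 1/2) ht2.le
          (by linarith : β - α - 1 ≤ 0)
        rwa [hhalf_rpow, show -(β - α - 1) = α - β + 1 by ring] at h
      have hexp : Real.exp (-((r / t) ^ p)) ≤ Real.exp (-(r ^ p) / 2) := by
        apply Real.exp_le_exp.mpr
        have h1 : r ^ p ≤ (r / t) ^ p := by
          apply Real.rpow_le_rpow hr0.le _ hp.le
          rw [le_div_iff₀ ht0]
          nlinarith
        have h2 : (0:ℝ) ≤ r ^ p := Real.rpow_nonneg hr0.le p
        linarith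
      have hcq := hCq t ht2.le ht1
      have key := mul_le_mul4 hKi0 (Real.rpow_nonneg hr0.le (-β - 1)) htpow hcq hexp
        (Real.rpow_nonneg (by nlinarith [Real.rpow_lt_one ht0.le ht1 hp] : (0:ℝ) ≤ 1 - t ^ p) δ1)
        (Real.exp_pos _).le (Real.rpow_nonneg (by norm_num : (0:ℝ) ≤ 2) _)
        (mul_nonneg hCq0.le (Real.rpow_nonneg (by linarith) δ1))
      calc Ki * (r ^ (-β - 1) * (t ^ (β - α - 1) * ((1 - t ^ p) ^ δ1 * Real.exp (-((r / t) ^ p)))))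
          ≤ Ki * (r ^ (-β - 1) * (2 ^ (α - β + 1) * ((Cq * (1 - t) ^ δ1)
              * Real.exp (-(r ^ p) / 2)))) := key
      _ = (Ki * 2 ^ (α - β + 1) * Cq * (r ^ (-β - 1) * Real.exp (-(r ^ p) / 2)))
            * (1 - t) ^ δ1 := by ring
    have hcoef : (0:ℝ) ≤ Ki * 2 ^ (α - β + 1) * Cq * (r ^ (-β - 1) * Real.exp (-(r ^ p) / 2)) :=
      mul_nonneg (mul_nonneg (mul_nonneg hKi0 (Real.rpow_nonneg (by norm_num) _)) hCq0.le)
        (mul_nonneg (Real.rpow_nonneg hr0.le _) (Real.exp_pos _).le)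
    calc (∫⁻ t in Ioo (1/2:ℝ) 1, ENNReal.ofReal (dtau β α p t * t⁻¹ * dpsi β p (r / t)))
        ≤ ∫⁻ t in Ioo (1/2:ℝ) 1, ENNReal.ofReal ((Ki * 2 ^ (α - β + 1) * Cq * (r ^ (-β - 1)
            * Real.exp (-(r ^ p) / 2))) * (1 - t) ^ δ1) :=
          setLIntegral_mono' measurableSet_Ioo hb
    _ = ENNReal.ofReal (Ki * 2 ^ (α - β + 1) * Cq * (r ^ (-β - 1) * Real.exp (-(r ^ p) / 2)))
          * I2 := by
        simp_rw [ENNReal.ofReal_mul hcoef]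
        rw [hI2_def, lintegral_const_mul' _ _ ENNReal.ofReal_ne_top]
    _ = ENNReal.ofReal (Ki * 2 ^ (α - β + 1) * Cq) * I2
          * ENNReal.ofReal (r ^ (-β - 1) * Real.exp (-(r ^ p) / 2)) := by
        rw [ENNReal.ofReal_mul (mul_nonneg (mul_nonneg hKi0
          (Real.rpow_nonneg (by norm_num) _)) hCq0.le)]
        ring

  -- piece A : bound on (0,1/2] for r ≥ 1
  have pieceA : ∀ r : ℝ, 1 ≤ r →
      (∫⁻ t in Ioc (0:ℝ) (1/2), ENNReal.ofReal (dtau β α p t * t⁻¹ * dpsi β p (r / t)))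
        ≤ ENNReal.ofReal (Ki * Ca * Cb2 * ((1/2:ℝ) ^ p / p))
            * ENNReal.ofReal (r ^ (-β - 1) * Real.exp (-(r ^ p) / 2)) := by
    intro r hr1
    have hr0 : (0:ℝ) < r := lt_of_lt_of_le one_pos hr1
    have hb : ∀ t ∈ Ioc (0:ℝ) (1/2:ℝ),
        ENNReal.ofReal (dtau β α p t * t⁻¹ * dpsi β p (r / t))
          ≤ ENNReal.ofReal ((Ki * Ca * Cb2 * (r ^ (-β - 1) * Real.exp (-(r ^ p) / 2)))
              * t ^ (p - 1)) := by
      intro t ht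
      obtain ⟨ht0, hth⟩ := ht
      have ht1 : t < 1 := lt_of_le_of_lt hth (by norm_num)
      rw [dw_eq hp hr0 ht0 ht1]
      apply ENNReal.ofReal_le_ofReal
      have hv : 0 < r / t := div_pos hr0 ht0
      have hrt : r ≤ r / t := by
        rw [le_div_iff₀ ht0]
        nlinarith
      have hexp : Real.exp (-((r / t) ^ p))
          ≤ Real.exp (-(r ^ p) / 2) * (Cb2 * t ^ (α - β + p)) := by
        have hsp : Real.exp (-((r / t) ^ p))
            = Real.exp (-((r / t) ^ p) / 2) * Real.exp (-((r / t) ^ p) / 2) := by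
          rw [← Real.exp_add]
          congr 1
          ring
        have h1 : Real.exp (-((r / t) ^ p) / 2) ≤ Real.exp (-(r ^ p) / 2) := by
          apply Real.exp_le_exp.mpr
          have := Real.rpow_le_rpow hr0.le hrt hp.le
          linarith
        have h2 : Real.exp (-((r / t) ^ p) / 2) ≤ Cb2 * t ^ (α - β + p) := by
          have h3 := hCb2 (r / t) hv
          have h4 : Real.exp (-((r / t) ^ p) / 2) ≤ Cb2 / (r / t) ^ (α - β + p) := by
            rw [le_div_iff₀ (Real.rpow_pos_of_pos hv _), show -((r / t) ^ p) / 2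
              = -(1/2 * (r / t) ^ p) by ring, mul_comm]
            exact h3
          have h5 : (r / t) ^ (α - β + p) = r ^ (α - β + p) * t ^ (-(α - β + p)) := by
            rw [div_eq_mul_inv, Real.mul_rpow hr0.le (inv_nonneg.mpr ht0.le),
              Real.inv_rpow ht0.le, ← Real.rpow_neg ht0.le]
          have h6 : Cb2 / (r ^ (α - β + p) * t ^ (-(α - β + p)))
              = Cb2 * (t ^ (α - β + p) * r ^ (-(α - β + p))) := by
            rw [Real.rpow_neg hr0.le, Real.rpow_neg ht0.le]
            field_simp
          have h7 : Cb2 * (t ^ (α - β + p) * r ^ (-(α - β + p)))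
              ≤ Cb2 * (t ^ (α - β + p) * 1) := by
            apply mul_le_mul_of_nonneg_left _ hCb20.le
            exact mul_le_mul_of_nonneg_left
              (Real.rpow_le_one_of_one_le_of_nonpos hr1 (by linarith))
              (Real.rpow_nonneg ht0.le _)
          rw [h5, h6] at h4
          calc Real.exp (-((r / t) ^ p) / 2)
              ≤ Cb2 * (t ^ (α - β + p) * r ^ (-(α - β + p))) := h4
          _ ≤ Cb2 * (t ^ (α - β + p) * 1) := h7
          _ = Cb2 * t ^ (α - β + p) := by ring
        calc Real.exp (-((r / t) ^ p))
            = Real.exp (-((r / t) ^ p) / 2) * Real.exp (-((r / t) ^ p) / 2) := hsp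
        _ ≤ Real.exp (-(r ^ p) / 2) * (Cb2 * t ^ (α - β + p)) :=
            mul_le_mul h1 h2 (Real.exp_pos _).le (Real.exp_pos _).le
      have hca := hCa t ht0 hth
      have key := mul_le_mul4 hKi0 (Real.rpow_nonneg hr0.le (-β - 1))
        (le_refl (t ^ (β - α - 1))) hca hexp
        (Real.rpow_nonneg (by nlinarith [Real.rpow_lt_one ht0.le ht1 hp]
            : (0:ℝ) ≤ 1 - t ^ p) δ1)
        (Real.exp_pos _).le (Real.rpow_nonneg ht0.le _) hCa0.le
      calc Ki * (r ^ (-β - 1) * (t ^ (β - α - 1) * ((1 - t ^ p) ^ δ1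
              * Real.exp (-((r / t) ^ p)))))
          ≤ Ki * (r ^ (-β - 1) * (t ^ (β - α - 1) * (Ca * (Real.exp (-(r ^ p) / 2)
              * (Cb2 * t ^ (α - β + p)))))) := key
      _ = (Ki * Ca * Cb2 * (r ^ (-β - 1) * Real.exp (-(r ^ p) / 2)))
            * (t ^ (β - α - 1) * t ^ (α - β + p)) := by ring
      _ = (Ki * Ca * Cb2 * (r ^ (-β - 1) * Real.exp (-(r ^ p) / 2))) * t ^ (p - 1) := by
          rw [← Real.rpow_add ht0]
          congr 2
          ring
    have hcoef : (0:ℝ) ≤ Ki * Ca * Cb2 * (r ^ (-β - 1) * Real.exp (-(r ^ p) / 2)) :=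
      mul_nonneg (mul_nonneg (mul_nonneg hKi0 hCa0.le) hCb20.le)
        (mul_nonneg (Real.rpow_nonneg hr0.le _) (Real.exp_pos _).le)
    calc (∫⁻ t in Ioc (0:ℝ) (1/2), ENNReal.ofReal (dtau β α p t * t⁻¹ * dpsi β p (r / t)))
        ≤ ∫⁻ t in Ioc (0:ℝ) (1/2), ENNReal.ofReal ((Ki * Ca * Cb2 * (r ^ (-β - 1)
            * Real.exp (-(r ^ p) / 2))) * t ^ (p - 1)) :=
          setLIntegral_mono' measurableSet_Ioc hb
    _ = ENNReal.ofReal (Ki * Ca * Cb2 * (r ^ (-β - 1) * Real.exp (-(r ^ p) / 2)))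
          * ∫⁻ t in Ioc (0:ℝ) (1/2), ENNReal.ofReal (t ^ (p - 1)) := by
        simp_rw [ENNReal.ofReal_mul hcoef]
        rw [lintegral_const_mul' _ _ ENNReal.ofReal_ne_top]
    _ = ENNReal.ofReal (Ki * Ca * Cb2 * (r ^ (-β - 1) * Real.exp (-(r ^ p) / 2)))
          * ENNReal.ofReal ((1/2:ℝ) ^ p / p) := by
        rw [lint_rpow_Ioc_zero (by norm_num : (0:ℝ) < 1/2) (by linarith : (-1:ℝ) < p - 1),
          show p - 1 + 1 = p by ring]
    _ = ENNReal.ofReal (Ki * Ca * Cb2 * ((1/2:ℝ) ^ p / p))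
          * ENNReal.ofReal (r ^ (-β - 1) * Real.exp (-(r ^ p) / 2)) := by
        rw [← ENNReal.ofReal_mul hcoef, ← ENNReal.ofReal_mul (mul_nonneg (mul_nonneg
          (mul_nonneg hKi0 hCa0.le) hCb20.le) (div_nonneg (Real.rpow_nonneg
          (by norm_num) _) hp.le))]
        congr 1
        ring
  refine ⟨ENNReal.ofReal (Ki * Ca * Cb / p) + ENNReal.ofReal (Ki * Ca * 2 ^ (α - β) / (α - β))
      + ENNReal.ofReal (Ki * 2 ^ (α - β + 1) * Cq) * I2,
    ENNReal.ofReal (Ki * Ca * Cb2 * ((1/2:ℝ) ^ p / p))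
      + ENNReal.ofReal (Ki * 2 ^ (α - β + 1) * Cq) * I2, ?_, ?_, ?_, ?_⟩
  · exact ENNReal.add_ne_top.mpr ⟨ENNReal.add_ne_top.mpr
      ⟨ENNReal.ofReal_ne_top, ENNReal.ofReal_ne_top⟩,
      ENNReal.mul_ne_top ENNReal.ofReal_ne_top hI2⟩
  · exact ENNReal.add_ne_top.mpr ⟨ENNReal.ofReal_ne_top,
      ENNReal.mul_ne_top ENNReal.ofReal_ne_top hI2⟩
  · -- case r ∈ Ioc 0 1
    rintro r ⟨hr0, hr1⟩
    set t₀ : ℝ := min r (1/2) with ht₀_def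
    have ht₀0 : 0 < t₀ := lt_min hr0 (by norm_num)
    have ht₀h : t₀ ≤ 1/2 := min_le_right _ _
    have ht₀r : t₀ ≤ r := min_le_left _ _
    have hsplit1 : Ioo (0:ℝ) 1 = (Ioc 0 t₀ ∪ Ioc t₀ (1/2)) ∪ Ioo (1/2:ℝ) 1 := by
      rw [Ioc_union_Ioc_eq_Ioc ht₀0.le ht₀h]
      exact hsplit2
    have hdisj1 : Disjoint (Ioc (0:ℝ) t₀ ∪ Ioc t₀ (1/2)) (Ioo (1/2:ℝ) 1) := by
      rw [Ioc_union_Ioc_eq_Ioc ht₀0.le ht₀h]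
      exact hd23
    rw [hsplit1, lintegral_union measurableSet_Ioo hdisj1,
      lintegral_union measurableSet_Ioc (Ioc_disjoint_Ioc_of_le le_rfl)]
    -- piece 1
    have piece1 : (∫⁻ t in Ioc (0:ℝ) t₀, ENNReal.ofReal (dtau β α p t * t⁻¹ * dpsi β p (r / t)))
        ≤ ENNReal.ofReal (Ki * Ca * Cb / p) * ENNReal.ofReal (r ^ (-α - 1)) := by
      have hb : ∀ t ∈ Ioc (0:ℝ) t₀,
          ENNReal.ofReal (dtau β α p t * t⁻¹ * dpsi β p (r / t))
            ≤ ENNReal.ofReal ((Ki * Ca * Cb * r ^ (-α - 1 - p)) * t ^ (p - 1)) := by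
        intro t ht
        obtain ⟨ht0, htt⟩ := ht
        have hth : t ≤ 1/2 := htt.trans ht₀h
        have ht1 : t < 1 := lt_of_le_of_lt hth (by norm_num)
        rw [dw_eq hp hr0 ht0 ht1]
        apply ENNReal.ofReal_le_ofReal
        have hv : 0 < r / t := div_pos hr0 ht0
        have hexp : Real.exp (-((r / t) ^ p))
            ≤ Cb * (t ^ (α - β + p) * r ^ (-(α - β + p))) := by
          have h3 := hCb (r / t) hv
          rw [one_mul] at h3
          have h4 : Real.exp (-((r / t) ^ p)) ≤ Cb / (r / t) ^ (α - β + p) := by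
            rw [le_div_iff₀ (Real.rpow_pos_of_pos hv _), mul_comm]
            exact h3
          have h5 : (r / t) ^ (α - β + p) = r ^ (α - β + p) * t ^ (-(α - β + p)) := by
            rw [div_eq_mul_inv, Real.mul_rpow hr0.le (inv_nonneg.mpr ht0.le),
              Real.inv_rpow ht0.le, ← Real.rpow_neg ht0.le]
          have h6 : Cb / (r ^ (α - β + p) * t ^ (-(α - β + p)))
              = Cb * (t ^ (α - β + p) * r ^ (-(α - β + p))) := by
            rw [Real.rpow_neg hr0.le, Real.rpow_neg ht0.le]
            field_simp
          rw [h5, h6] at h4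
          exact h4
        have hca := hCa t ht0 hth
        have key := mul_le_mul4 hKi0 (Real.rpow_nonneg hr0.le (-β - 1))
          (le_refl (t ^ (β - α - 1))) hca hexp
          (Real.rpow_nonneg (by nlinarith [Real.rpow_lt_one ht0.le ht1 hp]
              : (0:ℝ) ≤ 1 - t ^ p) δ1)
          (Real.exp_pos _).le (Real.rpow_nonneg ht0.le _) hCa0.le
        calc Ki * (r ^ (-β - 1) * (t ^ (β - α - 1) * ((1 - t ^ p) ^ δ1
                * Real.exp (-((r / t) ^ p)))))
            ≤ Ki * (r ^ (-β - 1) * (t ^ (β - α - 1) * (Ca * (Cb * (t ^ (α - β + p)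
                * r ^ (-(α - β + p))))))) := key
        _ = (Ki * Ca * Cb * (r ^ (-β - 1) * r ^ (-(α - β + p))))
              * (t ^ (β - α - 1) * t ^ (α - β + p)) := by ring
        _ = (Ki * Ca * Cb * r ^ (-α - 1 - p)) * t ^ (p - 1) := by
            rw [← Real.rpow_add hr0, ← Real.rpow_add ht0]
            congr 2
            · congr 1
              ring
            · ring
      have hcoef : (0:ℝ) ≤ Ki * Ca * Cb * r ^ (-α - 1 - p) :=
        mul_nonneg (mul_nonneg (mul_nonneg hKi0 hCa0.le) hCb0.le)
          (Real.rpow_nonneg hr0.le _)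
      calc (∫⁻ t in Ioc (0:ℝ) t₀, ENNReal.ofReal (dtau β α p t * t⁻¹ * dpsi β p (r / t)))
          ≤ ∫⁻ t in Ioc (0:ℝ) t₀,
              ENNReal.ofReal ((Ki * Ca * Cb * r ^ (-α - 1 - p)) * t ^ (p - 1)) :=
            setLIntegral_mono' measurableSet_Ioc hb
      _ = ENNReal.ofReal (Ki * Ca * Cb * r ^ (-α - 1 - p))
            * ∫⁻ t in Ioc (0:ℝ) t₀, ENNReal.ofReal (t ^ (p - 1)) := by
          simp_rw [ENNReal.ofReal_mul hcoef]
          rw [lintegral_const_mul' _ _ ENNReal.ofReal_ne_top]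
      _ = ENNReal.ofReal (Ki * Ca * Cb * r ^ (-α - 1 - p)) * ENNReal.ofReal (t₀ ^ p / p) := by
          rw [lint_rpow_Ioc_zero ht₀0 (by linarith : (-1:ℝ) < p - 1),
            show p - 1 + 1 = p by ring]
      _ ≤ ENNReal.ofReal (Ki * Ca * Cb / p) * ENNReal.ofReal (r ^ (-α - 1)) := by
          rw [← ENNReal.ofReal_mul hcoef, ← ENNReal.ofReal_mul (div_nonneg (mul_nonneg
            (mul_nonneg hKi0 hCa0.le) hCb0.le) hp.le)]
          apply ENNReal.ofReal_le_ofReal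
          have h7 : t₀ ^ p ≤ r ^ p := Real.rpow_le_rpow ht₀0.le ht₀r hp.le
          have h8 : r ^ (-α - 1 - p) * r ^ p = r ^ (-α - 1) := by
            rw [← Real.rpow_add hr0]
            congr 1
            ring
          have h9 : Ki * Ca * Cb * r ^ (-α - 1 - p) * (t₀ ^ p / p)
              ≤ Ki * Ca * Cb * r ^ (-α - 1 - p) * (r ^ p / p) :=
            mul_le_mul_of_nonneg_left (by apply div_le_div_of_nonneg_right h7 hp.le) hcoef
          calc Ki * Ca * Cb * r ^ (-α - 1 - p) * (t₀ ^ p / p)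
              ≤ Ki * Ca * Cb * r ^ (-α - 1 - p) * (r ^ p / p) := h9
          _ = Ki * Ca * Cb / p * (r ^ (-α - 1 - p) * r ^ p) := by ring
          _ = Ki * Ca * Cb / p * r ^ (-α - 1) := by rw [h8]
    -- piece 2
    have piece2 : (∫⁻ t in Ioc t₀ (1/2:ℝ), ENNReal.ofReal (dtau β α p t * t⁻¹ * dpsi β p (r / t)))
        ≤ ENNReal.ofReal (Ki * Ca * 2 ^ (α - β) / (α - β)) * ENNReal.ofReal (r ^ (-α - 1)) := by
      have hb : ∀ t ∈ Ioc t₀ (1/2:ℝ),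
          ENNReal.ofReal (dtau β α p t * t⁻¹ * dpsi β p (r / t))
            ≤ ENNReal.ofReal ((Ki * Ca * r ^ (-β - 1)) * t ^ (β - α - 1)) := by
        intro t ht
        obtain ⟨htt, hth⟩ := ht
        have ht0 : (0:ℝ) < t := lt_of_lt_of_le ht₀0 htt.le
        have ht1 : t < 1 := lt_of_le_of_lt hth (by norm_num)
        rw [dw_eq hp hr0 ht0 ht1]
        apply ENNReal.ofReal_le_ofReal
        have hexp : Real.exp (-((r / t) ^ p)) ≤ 1 := by
          rw [Real.exp_le_one_iff]
          have := Real.rpow_pos_of_pos (div_pos hr0 ht0) p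
          linarith
        have hca := hCa t ht0 hth
        have key := mul_le_mul4 hKi0 (Real.rpow_nonneg hr0.le (-β - 1))
          (le_refl (t ^ (β - α - 1))) hca hexp
          (Real.rpow_nonneg (by nlinarith [Real.rpow_lt_one ht0.le ht1 hp]
              : (0:ℝ) ≤ 1 - t ^ p) δ1)
          (Real.exp_pos _).le (Real.rpow_nonneg ht0.le _) hCa0.le
        calc Ki * (r ^ (-β - 1) * (t ^ (β - α - 1) * ((1 - t ^ p) ^ δ1
                * Real.exp (-((r / t) ^ p)))))
            ≤ Ki * (r ^ (-β - 1) * (t ^ (β - α - 1) * (Ca * 1))) := key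
        _ = (Ki * Ca * r ^ (-β - 1)) * t ^ (β - α - 1) := by ring
      have hcoef : (0:ℝ) ≤ Ki * Ca * r ^ (-β - 1) :=
        mul_nonneg (mul_nonneg hKi0 hCa0.le) (Real.rpow_nonneg hr0.le _)
      have ht₀bound : t₀ ^ (β - α) ≤ 2 ^ (α - β) * r ^ (β - α) := by
        rcases min_cases r (1/2:ℝ) with ⟨he, _⟩ | ⟨he, hlt⟩
        · rw [ht₀_def, he]
          have h1 := h2pow (α - β) hA.le
          nlinarith [Real.rpow_nonneg hr0.le (β - α)]
        · rw [ht₀_def, he, hhalf_rpow, show -(β - α) = α - β by ring]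
          have h1 : (1:ℝ) ≤ r ^ (β - α) :=
            Real.one_le_rpow_of_pos_of_le_one_of_nonpos hr0 hr1 (by linarith)
          nlinarith [Real.rpow_pos_of_pos (show (0:ℝ) < 2 by norm_num) (α - β)]
      calc (∫⁻ t in Ioc t₀ (1/2:ℝ), ENNReal.ofReal (dtau β α p t * t⁻¹ * dpsi β p (r / t)))
          ≤ ∫⁻ t in Ioc t₀ (1/2:ℝ),
              ENNReal.ofReal ((Ki * Ca * r ^ (-β - 1)) * t ^ (β - α - 1)) :=
            setLIntegral_mono' measurableSet_Ioc hb
      _ = ENNReal.ofReal (Ki * Ca * r ^ (-β - 1))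
            * ∫⁻ t in Ioc t₀ (1/2:ℝ), ENNReal.ofReal (t ^ (β - α - 1)) := by
          simp_rw [ENNReal.ofReal_mul hcoef]
          rw [lintegral_const_mul' _ _ ENNReal.ofReal_ne_top]
      _ = ENNReal.ofReal (Ki * Ca * r ^ (-β - 1))
            * ENNReal.ofReal (((1/2:ℝ) ^ (β - α) - t₀ ^ (β - α)) / (β - α)) := by
          rw [lint_rpow_Ioc ht₀0 ht₀h (show (β - α - 1 : ℝ) ≠ -1 by
            intro h
            have : α - β = 0 := by linarith
            exact hA.ne' this), show β - α - 1 + 1 = β - α by ring]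
      _ ≤ ENNReal.ofReal (Ki * Ca * 2 ^ (α - β) / (α - β)) * ENNReal.ofReal (r ^ (-α - 1)) := by
          rw [← ENNReal.ofReal_mul hcoef, ← ENNReal.ofReal_mul (div_nonneg (mul_nonneg
            (mul_nonneg hKi0 hCa0.le) (Real.rpow_nonneg (by norm_num) _)) hA.le)]
          apply ENNReal.ofReal_le_ofReal
          have hv1 : ((1/2:ℝ) ^ (β - α) - t₀ ^ (β - α)) / (β - α)
              = (t₀ ^ (β - α) - (1/2:ℝ) ^ (β - α)) / (α - β) := by
            rw [show (β - α : ℝ) = -(α - β) by ring, div_neg, ← neg_div, neg_sub]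
          have hv2 : t₀ ^ (β - α) - (1/2:ℝ) ^ (β - α) ≤ 2 ^ (α - β) * r ^ (β - α) :=
            le_trans (sub_le_self _ (Real.rpow_nonneg (by norm_num) _)) ht₀bound
          have hv3 : (t₀ ^ (β - α) - (1/2:ℝ) ^ (β - α)) / (α - β)
              ≤ 2 ^ (α - β) * r ^ (β - α) / (α - β) := by
            apply div_le_div_of_nonneg_right hv2 hA.le
          have h8 : r ^ (-β - 1) * r ^ (β - α) = r ^ (-α - 1) := by
            rw [← Real.rpow_add hr0]
            congr 1
            ring
          calc Ki * Ca * r ^ (-β - 1) * (((1/2:ℝ) ^ (β - α) - t₀ ^ (β - α)) / (β - α))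
              = Ki * Ca * r ^ (-β - 1) * ((t₀ ^ (β - α) - (1/2:ℝ) ^ (β - α)) / (α - β)) := by
                rw [hv1]
          _ ≤ Ki * Ca * r ^ (-β - 1) * (2 ^ (α - β) * r ^ (β - α) / (α - β)) :=
              mul_le_mul_of_nonneg_left hv3 hcoef
          _ = Ki * Ca * 2 ^ (α - β) / (α - β) * (r ^ (-β - 1) * r ^ (β - α)) := by ring
          _ = Ki * Ca * 2 ^ (α - β) / (α - β) * r ^ (-α - 1) := by rw [h8]
    -- piece 3 adapted
    have piece3' : (∫⁻ t in Ioo (1/2:ℝ) 1, ENNReal.ofReal (dtau β α p t * t⁻¹ * dpsi β p (r / t)))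
        ≤ ENNReal.ofReal (Ki * 2 ^ (α - β + 1) * Cq) * I2 * ENNReal.ofReal (r ^ (-α - 1)) := by
      refine le_trans (piece3 r hr0) (mul_le_mul_right (ENNReal.ofReal_le_ofReal ?_) _)
      have h1 : Real.exp (-(r ^ p) / 2) ≤ 1 := by
        rw [Real.exp_le_one_iff]
        have := Real.rpow_nonneg hr0.le p
        linarith
      have h2 : r ^ (-β - 1 : ℝ) ≤ r ^ (-α - 1 : ℝ) :=
        Real.rpow_le_rpow_of_exponent_ge hr0 hr1 (by linarith)
      calc r ^ (-β - 1) * Real.exp (-(r ^ p) / 2) ≤ r ^ (-β - 1) * 1 :=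
            mul_le_mul_of_nonneg_left h1 (Real.rpow_nonneg hr0.le _)
      _ = r ^ (-β - 1) := mul_one _
      _ ≤ r ^ (-α - 1) := h2
    calc (∫⁻ t in Ioc (0:ℝ) t₀, ENNReal.ofReal (dtau β α p t * t⁻¹ * dpsi β p (r / t)))
          + (∫⁻ t in Ioc t₀ (1/2:ℝ), ENNReal.ofReal (dtau β α p t * t⁻¹ * dpsi β p (r / t)))
          + (∫⁻ t in Ioo (1/2:ℝ) 1, ENNReal.ofReal (dtau β α p t * t⁻¹ * dpsi β p (r / t)))
        ≤ ENNReal.ofReal (Ki * Ca * Cb / p) * ENNReal.ofReal (r ^ (-α - 1))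
          + ENNReal.ofReal (Ki * Ca * 2 ^ (α - β) / (α - β)) * ENNReal.ofReal (r ^ (-α - 1))
          + ENNReal.ofReal (Ki * 2 ^ (α - β + 1) * Cq) * I2 * ENNReal.ofReal (r ^ (-α - 1)) :=
          add_le_add (add_le_add piece1 piece2) piece3'
    _ = (ENNReal.ofReal (Ki * Ca * Cb / p) + ENNReal.ofReal (Ki * Ca * 2 ^ (α - β) / (α - β))
          + ENNReal.ofReal (Ki * 2 ^ (α - β + 1) * Cq) * I2) * ENNReal.ofReal (r ^ (-α - 1)) := by
        rw [add_mul, add_mul]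
  · -- case r > 1
    intro r hr
    have hr1 : (1:ℝ) ≤ r := hr.le
    have hr0 : (0:ℝ) < r := lt_trans one_pos hr
    rw [hsplit2, lintegral_union measurableSet_Ioo hd23]
    calc (∫⁻ t in Ioc (0:ℝ) (1/2), ENNReal.ofReal (dtau β α p t * t⁻¹ * dpsi β p (r / t)))
          + (∫⁻ t in Ioo (1/2:ℝ) 1, ENNReal.ofReal (dtau β α p t * t⁻¹ * dpsi β p (r / t)))
        ≤ ENNReal.ofReal (Ki * Ca * Cb2 * ((1/2:ℝ) ^ p / p))
            * ENNReal.ofReal (r ^ (-β - 1) * Real.exp (-(r ^ p) / 2))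
          + ENNReal.ofReal (Ki * 2 ^ (α - β + 1) * Cq) * I2
            * ENNReal.ofReal (r ^ (-β - 1) * Real.exp (-(r ^ p) / 2)) :=
          add_le_add (pieceA r hr1) (piece3 r hr0)
    _ = (ENNReal.ofReal (Ki * Ca * Cb2 * ((1/2:ℝ) ^ p / p))
          + ENNReal.ofReal (Ki * 2 ^ (α - β + 1) * Cq) * I2)
            * ENNReal.ofReal (r ^ (-β - 1) * Real.exp (-(r ^ p) / 2)) := by
        rw [add_mul]

lemma lhs_eq {β α p : ℝ} (hβα : β < α) (hp : 0 < p) (c : ℝ) :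
    (∫⁻ s, Dpsi β p s * ∫⁻ t, Dtau β α p t * mfun (|s| * (|t| * c)))
      = ∫⁻ r in Ioi (0:ℝ),
          (∫⁻ t in Ioo (0:ℝ) 1, ENNReal.ofReal (dtau β α p t * t⁻¹ * dpsi β p (r / t)))
            * mfun (r * c) := by
  have hK := K_pos (β := β) (α := α) hβα hp
  have hKi0 : (0:ℝ) ≤ (Kconst α β p)⁻¹ := inv_nonneg.mpr hK.le
  have hdtau0 : ∀ t : ℝ, 0 < t → t < 1 → 0 ≤ dtau β α p t := by
    intro t ht0 ht1
    have h1 : (0:ℝ) < 1 - t ^ p := by nlinarith [Real.rpow_lt_one ht0.le ht1 hp]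
    exact mul_nonneg hKi0 (mul_nonneg (Real.rpow_nonneg ht0.le _)
      (Real.rpow_nonneg h1.le _))
  have hm1 : Measurable (Function.uncurry fun s t : ℝ =>
      Dpsi β p s * (Dtau β α p t * mfun (|s| * (|t| * c)))) := by
    apply Measurable.mul ((meas_Dpsi β p).comp measurable_fst)
    apply Measurable.mul ((meas_Dtau β α p).comp measurable_snd)
    exact mfun_meas.comp ((measurable_fst.abs).mul ((measurable_snd.abs).mul_const c))
  have step1 : (∫⁻ s, Dpsi β p s * ∫⁻ t, Dtau β α p t * mfun (|s| * (|t| * c)))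
      = ∫⁻ t, Dtau β α p t * ∫⁻ s, Dpsi β p s * mfun (|s| * (|t| * c)) := by
    have e1 : ∀ s : ℝ, Dpsi β p s * ∫⁻ t, Dtau β α p t * mfun (|s| * (|t| * c))
        = ∫⁻ t, Dpsi β p s * (Dtau β α p t * mfun (|s| * (|t| * c))) := fun s =>
      (lintegral_const_mul' _ _ (Dpsi_ne_top β p s)).symm
    have e2 : ∀ t : ℝ, Dtau β α p t * ∫⁻ s, Dpsi β p s * mfun (|s| * (|t| * c))
        = ∫⁻ s, Dpsi β p s * (Dtau β α p t * mfun (|s| * (|t| * c))) := by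
      intro t
      rw [← lintegral_const_mul' (Dtau β α p t) _ (Dtau_ne_top β α p t)]
      exact lintegral_congr fun s => by ring
    simp_rw [e1, e2]
    exact lintegral_lintegral_swap hm1.aemeasurable
  have step2 : (∫⁻ t, Dtau β α p t * ∫⁻ s, Dpsi β p s * mfun (|s| * (|t| * c)))
      = ∫⁻ t in Ioo (0:ℝ) 1, ENNReal.ofReal (dtau β α p t)
          * (ENNReal.ofReal t⁻¹
             * ∫⁻ r in Ioi (0:ℝ), ENNReal.ofReal (dpsi β p (r / t)) * mfun (r * c)) := by
    rw [lintegral_eq_set measurableSet_Ioo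
      (fun t ht => by rw [Dtau_eq_zero ht, zero_mul])]
    refine setLIntegral_congr_fun measurableSet_Ioo (fun t ht => ?_)
    obtain ⟨ht0, ht1⟩ := ht
    rw [Dtau_eq_of_mem ⟨ht0, ht1⟩]
    congr 1
    have i1 : (∫⁻ s, Dpsi β p s * mfun (|s| * (|t| * c)))
        = ∫⁻ s in Ioi (0:ℝ), ENNReal.ofReal (dpsi β p s) * mfun (s * (t * c)) := by
      rw [lintegral_eq_set measurableSet_Ioi
        (fun s hs => by rw [Dpsi_eq_zero hs, zero_mul])]
      refine setLIntegral_congr_fun measurableSet_Ioi (fun s hs => ?_)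
      rw [Dpsi_eq_of_pos hs, abs_of_pos hs, abs_of_pos ht0]
    have i2 : (∫⁻ s in Ioi (0:ℝ), ENNReal.ofReal (dpsi β p s) * mfun (s * (t * c)))
        = ENNReal.ofReal t⁻¹
          * ∫⁻ r in Ioi (0:ℝ), ENNReal.ofReal (dpsi β p (r / t))
              * mfun ((r / t) * (t * c)) :=
      lintegral_scale_Ioi (((meas_dpsi β p).ennreal_ofReal).mul
        (mfun_meas.comp (measurable_id.mul_const (t * c)))) ht0
    rw [i1, i2]
    congr 1
    refine setLIntegral_congr_fun measurableSet_Ioi (fun r hr => ?_)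
    congr 2
    field_simp
  have step3 : (∫⁻ t in Ioo (0:ℝ) 1, ENNReal.ofReal (dtau β α p t)
          * (ENNReal.ofReal t⁻¹
             * ∫⁻ r in Ioi (0:ℝ), ENNReal.ofReal (dpsi β p (r / t)) * mfun (r * c)))
      = ∫⁻ t in Ioo (0:ℝ) 1, ∫⁻ r in Ioi (0:ℝ),
          ENNReal.ofReal (dtau β α p t * t⁻¹ * dpsi β p (r / t)) * mfun (r * c) := by
    refine setLIntegral_congr_fun measurableSet_Ioo (fun t ht => ?_)
    obtain ⟨ht0, ht1⟩ := ht
    rw [← lintegral_const_mul' (ENNReal.ofReal t⁻¹) _ ENNReal.ofReal_ne_top,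
      ← lintegral_const_mul' (ENNReal.ofReal (dtau β α p t)) _ ENNReal.ofReal_ne_top]
    refine setLIntegral_congr_fun measurableSet_Ioi (fun r hr => ?_)
    rw [show ENNReal.ofReal (dtau β α p t) * (ENNReal.ofReal t⁻¹
        * (ENNReal.ofReal (dpsi β p (r / t)) * mfun (r * c)))
      = ((ENNReal.ofReal (dtau β α p t) * ENNReal.ofReal t⁻¹)
          * ENNReal.ofReal (dpsi β p (r / t))) * mfun (r * c) from by ring,
      ← ENNReal.ofReal_mul (hdtau0 t ht0 ht1),
      ← ENNReal.ofReal_mul (mul_nonneg (hdtau0 t ht0 ht1) (inv_nonneg.mpr ht0.le))]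
  have hswap_m : Measurable (Function.uncurry fun t r : ℝ =>
      ENNReal.ofReal (dtau β α p t * t⁻¹ * dpsi β p (r / t)) * mfun (r * c)) := by
    refine Measurable.mul (f := fun q : ℝ × ℝ => ENNReal.ofReal (dtau β α p q.1 * q.1⁻¹
      * dpsi β p (q.2 / q.1))) (g := fun q : ℝ × ℝ => mfun (q.2 * c)) ?_ ?_
    · apply Measurable.ennreal_ofReal
      exact (((meas_dtau β α p).comp measurable_fst).mul (measurable_fst.inv)).mul
        ((meas_dpsi β p).comp (measurable_snd.div measurable_fst))
    · exact mfun_meas.comp (measurable_snd.mul_const c)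
  have step4 : (∫⁻ t in Ioo (0:ℝ) 1, ∫⁻ r in Ioi (0:ℝ),
        ENNReal.ofReal (dtau β α p t * t⁻¹ * dpsi β p (r / t)) * mfun (r * c))
      = ∫⁻ r in Ioi (0:ℝ), ∫⁻ t in Ioo (0:ℝ) 1,
          ENNReal.ofReal (dtau β α p t * t⁻¹ * dpsi β p (r / t)) * mfun (r * c) :=
    lintegral_lintegral_swap hswap_m.aemeasurable
  rw [step1, step2, step3, step4]
  exact lintegral_congr fun r => lintegral_mul_const' _ _ (mfun_ne_top _)

lemma phi_lower {β α p : ℝ} (hβα : β < α) (hp : 0 < p) :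
    ∃ CL : ℝ≥0∞, CL ≠ ⊤ ∧ ∀ c : ℝ,
      mfun c ≤ CL * ∫⁻ t, Dtau β α p t * mfun (|t| * c) := by
  have hK := K_pos (β := β) (α := α) hβα hp
  have hKi0 : (0:ℝ) ≤ (Kconst α β p)⁻¹ := inv_nonneg.mpr hK.le
  set δ1 : ℝ := (α - β) / p - 1 with hδ1
  set d1 : ℝ := min ((1/2:ℝ) ^ (-α - 1)) ((3/4:ℝ) ^ (-α - 1)) with hd1_def
  have hd10 : 0 < d1 := lt_min (Real.rpow_pos_of_pos (by norm_num) _)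
    (Real.rpow_pos_of_pos (by norm_num) _)
  have h34 : (0:ℝ) < 1 - (3/4:ℝ) ^ p := by
    nlinarith [Real.rpow_lt_one (show (0:ℝ) ≤ 3/4 by norm_num) (by norm_num : (3:ℝ)/4 < 1) hp]
  set d2 : ℝ := min ((1 - (3/4:ℝ) ^ p) ^ δ1) 1 with hd2_def
  have hd20 : 0 < d2 := lt_min (Real.rpow_pos_of_pos h34 _) one_pos
  set clow : ℝ := (Kconst α β p)⁻¹ * (d1 * d2) with hclow_def
  have hclow0 : 0 < clow := mul_pos (inv_pos.mpr hK) (mul_pos hd10 hd20)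
  refine ⟨ENNReal.ofReal (16 * clow⁻¹), ENNReal.ofReal_ne_top, fun c => ?_⟩
  have hpt : ∀ t ∈ Ioo (1/2:ℝ) (3/4), ENNReal.ofReal clow * mfun c
      ≤ 4 * (Dtau β α p t * mfun (|t| * c)) := by
    intro t ht
    obtain ⟨ht2, ht3⟩ := ht
    have ht0 : (0:ℝ) < t := lt_trans (by norm_num) ht2
    have ht1 : t < 1 := lt_trans ht3 (by norm_num)
    rw [Dtau_eq_of_mem ⟨ht0, ht1⟩, abs_of_pos ht0]
    have hb1 : d1 ≤ t ^ (-α - 1 : ℝ) := min_rpow_le _ (by norm_num) ht2.le ht3.le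
    have hb2 : d2 ≤ (1 - t ^ p) ^ δ1 := by
      have h1 : 1 - (3/4:ℝ) ^ p ≤ 1 - t ^ p := by
        nlinarith [Real.rpow_le_rpow ht0.le ht3.le hp.le]
      have h2 : 1 - t ^ p ≤ 1 := by nlinarith [Real.rpow_pos_of_pos ht0 p]
      have := min_rpow_le δ1 h34 h1 h2
      rwa [Real.one_rpow] at this
    have hdt : clow ≤ dtau β α p t := by
      rw [hclow_def]
      simp only [dtau]
      apply mul_le_mul_of_nonneg_left _ hKi0
      exact mul_le_mul hb1 hb2 hd20.le (Real.rpow_nonneg ht0.le _)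
    have hm : mfun c ≤ 4 * mfun (t * c) := mfun_le_four_mul ht2.le c
    calc ENNReal.ofReal clow * mfun c
        ≤ ENNReal.ofReal (dtau β α p t) * (4 * mfun (t * c)) :=
          mul_le_mul' (ENNReal.ofReal_le_ofReal hdt) hm
    _ = 4 * (ENNReal.ofReal (dtau β α p t) * mfun (t * c)) := by ring
  have hS : (ENNReal.ofReal clow * mfun c) * ENNReal.ofReal ((3:ℝ)/4 - 1/2)
      ≤ 4 * ∫⁻ t, Dtau β α p t * mfun (|t| * c) := by
    rw [← Real.volume_Ioo]
    calc (ENNReal.ofReal clow * mfun c) * volume (Ioo (1/2:ℝ) (3/4))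
        = ∫⁻ _ in Ioo (1/2:ℝ) (3/4), ENNReal.ofReal clow * mfun c :=
          (setLIntegral_const _ _).symm
    _ ≤ ∫⁻ t in Ioo (1/2:ℝ) (3/4), 4 * (Dtau β α p t * mfun (|t| * c)) :=
        setLIntegral_mono' measurableSet_Ioo hpt
    _ = 4 * ∫⁻ t in Ioo (1/2:ℝ) (3/4), Dtau β α p t * mfun (|t| * c) :=
        lintegral_const_mul' _ _ (by norm_num)
    _ ≤ 4 * ∫⁻ t, Dtau β α p t * mfun (|t| * c) :=
        mul_le_mul_right (setLIntegral_le_lintegral _ _) _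
  have key : (4:ℝ≥0∞) * mfun c = ENNReal.ofReal (16 * clow⁻¹)
      * ((ENNReal.ofReal clow * mfun c) * ENNReal.ofReal ((3:ℝ)/4 - 1/2)) := by
    have h16 : (0:ℝ) ≤ 16 * clow⁻¹ := mul_nonneg (by norm_num) (inv_nonneg.mpr hclow0.le)
    rw [show ENNReal.ofReal (16 * clow⁻¹)
        * ((ENNReal.ofReal clow * mfun c) * ENNReal.ofReal ((3:ℝ)/4 - 1/2))
      = (ENNReal.ofReal (16 * clow⁻¹) * ENNReal.ofReal clow
          * ENNReal.ofReal ((3:ℝ)/4 - 1/2)) * mfun c from by ring,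
      ← ENNReal.ofReal_mul h16,
      ← ENNReal.ofReal_mul (mul_nonneg h16 hclow0.le)]
    rw [show 16 * clow⁻¹ * clow * ((3:ℝ)/4 - 1/2) = 4 * (clow⁻¹ * clow) by ring,
      inv_mul_cancel₀ hclow0.ne', mul_one]
    norm_num
  have h3 : (4:ℝ≥0∞) * mfun c
      ≤ 4 * (ENNReal.ofReal (16 * clow⁻¹) * ∫⁻ t, Dtau β α p t * mfun (|t| * c)) := by
    rw [key]
    calc ENNReal.ofReal (16 * clow⁻¹)
        * ((ENNReal.ofReal clow * mfun c) * ENNReal.ofReal ((3:ℝ)/4 - 1/2))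
        ≤ ENNReal.ofReal (16 * clow⁻¹) * (4 * ∫⁻ t, Dtau β α p t * mfun (|t| * c)) :=
          mul_le_mul_right hS _
    _ = 4 * (ENNReal.ofReal (16 * clow⁻¹) * ∫⁻ t, Dtau β α p t * mfun (|t| * c)) := by
        ring
  exact (ENNReal.mul_le_mul_iff_right (by norm_num) (by norm_num)).mp h3

lemma phiP {β α p : ℝ} (hβα : β < α) (hp : 0 < p) :
    ∃ CP : ℝ≥0∞, CP ≠ ⊤ ∧ ∀ c : ℝ,
      (∫⁻ r in Ioc (0:ℝ) 1, ENNReal.ofReal (r ^ (-α - 1)) * mfun (r * c))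
        ≤ CP * (∫⁻ t, Dtau β α p t * mfun (|t| * c)) + CP * mfun c := by
  have hK := K_pos (β := β) (α := α) hβα hp
  have hKi0 : (0:ℝ) ≤ (Kconst α β p)⁻¹ := inv_nonneg.mpr hK.le
  set δ1 : ℝ := (α - β) / p - 1 with hδ1
  have hhalfp : (0:ℝ) < 1 - (1/2:ℝ) ^ p := by
    have := Real.rpow_lt_one (by norm_num : (0:ℝ) ≤ 1/2) (by norm_num) hp
    linarith
  set cmin : ℝ := min ((1 - (1/2:ℝ) ^ p) ^ δ1) 1 with hcmin_def
  have hcmin0 : 0 < cmin := lt_min (Real.rpow_pos_of_pos hhalfp _) one_pos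
  have hcmin : ∀ t : ℝ, 0 < t → t ≤ 1/2 → cmin ≤ (1 - t ^ p) ^ δ1 := by
    intro t ht0 ht
    have h1 : 1 - (1/2:ℝ) ^ p ≤ 1 - t ^ p := by
      have := Real.rpow_le_rpow ht0.le ht hp.le
      linarith
    have h2 : 1 - t ^ p ≤ 1 := by
      have := Real.rpow_pos_of_pos ht0 p
      linarith
    have := min_rpow_le δ1 hhalfp h1 h2
    rwa [Real.one_rpow] at this
  set d3 : ℝ := max ((1/2:ℝ) ^ (-α - 1)) 1 with hd3_def
  have hd30 : (0:ℝ) ≤ d3 := le_trans zero_le_one (le_max_right _ _)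
  set cP : ℝ := max (Kconst α β p / cmin) d3 with hcP_def
  have hcP0 : (0:ℝ) ≤ cP := le_trans hd30 (le_max_right _ _)
  refine ⟨ENNReal.ofReal cP, ENNReal.ofReal_ne_top, fun c => ?_⟩
  rw [show Ioc (0:ℝ) 1 = Ioc (0:ℝ) (1/2) ∪ Ioc (1/2:ℝ) 1 from
      (Ioc_union_Ioc_eq_Ioc (by norm_num) (by norm_num)).symm,
    lintegral_union measurableSet_Ioc (Ioc_disjoint_Ioc_of_le le_rfl)]
  have part1 : (∫⁻ r in Ioc (0:ℝ) (1/2), ENNReal.ofReal (r ^ (-α - 1)) * mfun (r * c))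
      ≤ ENNReal.ofReal cP * ∫⁻ t, Dtau β α p t * mfun (|t| * c) := by
    have hb : ∀ r ∈ Ioc (0:ℝ) (1/2:ℝ), ENNReal.ofReal (r ^ (-α - 1)) * mfun (r * c)
        ≤ ENNReal.ofReal cP * (Dtau β α p r * mfun (|r| * c)) := by
      intro r hr
      obtain ⟨hr0, hrh⟩ := hr
      have hr1 : r < 1 := lt_of_le_of_lt hrh (by norm_num)
      rw [Dtau_eq_of_mem ⟨hr0, hr1⟩, abs_of_pos hr0]
      have h1 := hcmin r hr0 hrh
      have hid : r ^ (-α - 1:ℝ)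
          = Kconst α β p / cmin * ((Kconst α β p)⁻¹ * (r ^ (-α - 1:ℝ) * cmin)) := by
        field_simp
      have h2 : r ^ (-α - 1:ℝ) ≤ Kconst α β p / cmin * dtau β α p r := by
        rw [hid]
        apply mul_le_mul_of_nonneg_left _ (div_nonneg hK.le hcmin0.le)
        simp only [dtau]
        apply mul_le_mul_of_nonneg_left _ hKi0
        exact mul_le_mul_of_nonneg_left h1 (Real.rpow_nonneg hr0.le _)
      have h3 : r ^ (-α - 1:ℝ) ≤ cP * dtau β α p r := by
        have hdt0 : 0 ≤ dtau β α p r := by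
          have h4 : (0:ℝ) < 1 - r ^ p := by
            nlinarith [Real.rpow_lt_one hr0.le hr1 hp]
          exact mul_nonneg hKi0 (mul_nonneg (Real.rpow_nonneg hr0.le _)
            (Real.rpow_nonneg h4.le _))
        calc r ^ (-α - 1:ℝ) ≤ Kconst α β p / cmin * dtau β α p r := h2
        _ ≤ cP * dtau β α p r :=
            mul_le_mul_of_nonneg_right (le_max_left _ _) hdt0
      calc ENNReal.ofReal (r ^ (-α - 1)) * mfun (r * c)
          ≤ ENNReal.ofReal (cP * dtau β α p r) * mfun (r * c) :=
            mul_le_mul_left (ENNReal.ofReal_le_ofReal h3) _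
      _ = ENNReal.ofReal cP * (ENNReal.ofReal (dtau β α p r) * mfun (r * c)) := by
          rw [ENNReal.ofReal_mul hcP0]
          ring
    calc (∫⁻ r in Ioc (0:ℝ) (1/2), ENNReal.ofReal (r ^ (-α - 1)) * mfun (r * c))
        ≤ ∫⁻ r in Ioc (0:ℝ) (1/2), ENNReal.ofReal cP * (Dtau β α p r * mfun (|r| * c)) :=
          setLIntegral_mono' measurableSet_Ioc hb
    _ = ENNReal.ofReal cP * ∫⁻ r in Ioc (0:ℝ) (1/2), Dtau β α p r * mfun (|r| * c) :=
        lintegral_const_mul' _ _ ENNReal.ofReal_ne_top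
    _ ≤ ENNReal.ofReal cP * ∫⁻ t, Dtau β α p t * mfun (|t| * c) :=
        mul_le_mul_right (setLIntegral_le_lintegral _ _) _
  have part2 : (∫⁻ r in Ioc (1/2:ℝ) 1, ENNReal.ofReal (r ^ (-α - 1)) * mfun (r * c))
      ≤ ENNReal.ofReal cP * mfun c := by
    have hb : ∀ r ∈ Ioc (1/2:ℝ) 1, ENNReal.ofReal (r ^ (-α - 1)) * mfun (r * c)
        ≤ ENNReal.ofReal d3 * mfun c := by
      intro r hr
      obtain ⟨hr2, hr1⟩ := hr
      have hr0 : (0:ℝ) < r := lt_trans (by norm_num) hr2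
      have h1 : r ^ (-α - 1:ℝ) ≤ d3 := by
        have := rpow_le_max (-α - 1) (by norm_num : (0:ℝ) < 1/2) hr2.le hr1
        rwa [Real.one_rpow] at this
      have h2 : mfun (r * c) ≤ mfun c :=
        mfun_mul_le (by rw [abs_of_pos hr0]; exact hr1) c
      exact mul_le_mul' (ENNReal.ofReal_le_ofReal h1) h2
    calc (∫⁻ r in Ioc (1/2:ℝ) 1, ENNReal.ofReal (r ^ (-α - 1)) * mfun (r * c))
        ≤ ∫⁻ _ in Ioc (1/2:ℝ) 1, ENNReal.ofReal d3 * mfun c :=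
          setLIntegral_mono' measurableSet_Ioc hb
    _ = (ENNReal.ofReal d3 * mfun c) * volume (Ioc (1/2:ℝ) 1) := setLIntegral_const _ _
    _ ≤ (ENNReal.ofReal d3 * mfun c) * 1 := by
        apply mul_le_mul_right
        rw [Real.volume_Ioc]
        exact ENNReal.ofReal_le_one.mpr (by norm_num)
    _ = ENNReal.ofReal d3 * mfun c := mul_one _
    _ ≤ ENNReal.ofReal cP * mfun c :=
        mul_le_mul_left (ENNReal.ofReal_le_ofReal (le_max_right _ _)) _
  exact add_le_add part1 part2

lemma phiQ {β : ℝ} (p : ℝ) (hp : 0 < p) :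
    ∃ TQ : ℝ≥0∞, TQ ≠ ⊤ ∧ ∀ c : ℝ,
      (∫⁻ r in Ioi (1:ℝ), ENNReal.ofReal (r ^ (-β - 1) * Real.exp (-(r ^ p) / 2)) * mfun (r * c))
        ≤ TQ * mfun c := by
  obtain ⟨C3, hC30, hC3⟩ := exp_decay p (1/2) (max (3 - β) 0) hp (by norm_num) (le_max_right _ _)
  refine ⟨∫⁻ r in Ioi (1:ℝ),
      ENNReal.ofReal (r ^ (-β - 1) * Real.exp (-(r ^ p) / 2) * r ^ (2:ℕ)), ?_, fun c => ?_⟩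
  · -- finiteness
    have hb : ∀ r ∈ Ioi (1:ℝ),
        ENNReal.ofReal (r ^ (-β - 1) * Real.exp (-(r ^ p) / 2) * r ^ (2:ℕ))
          ≤ ENNReal.ofReal (C3 * r ^ (-2:ℝ)) := by
      intro r hr
      have hr0 : (0:ℝ) < r := lt_trans one_pos hr
      apply ENNReal.ofReal_le_ofReal
      have hnat : (r:ℝ) ^ (2:ℕ) = r ^ ((2:ℕ):ℝ) := (Real.rpow_natCast r 2).symm
      have e1 : r ^ (-β - 1:ℝ) * r ^ ((2:ℕ):ℝ) = r ^ (-2:ℝ) * r ^ (3 - β:ℝ) := by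
        rw [← Real.rpow_add hr0, ← Real.rpow_add hr0]
        congr 1
        push_cast
        ring
      have e2 : r ^ (3 - β:ℝ) ≤ r ^ (max (3 - β) 0) :=
        Real.rpow_le_rpow_of_exponent_le hr.le (le_max_left _ _)
      have e3 := hC3 r hr0
      rw [show -(1/2 * r ^ p) = -(r ^ p) / 2 by ring] at e3
      calc r ^ (-β - 1:ℝ) * Real.exp (-(r ^ p) / 2) * r ^ (2:ℕ)
          = r ^ (-2:ℝ) * (r ^ (3 - β:ℝ) * Real.exp (-(r ^ p) / 2)) := by
            rw [hnat]
            rw [show r ^ (-β - 1:ℝ) * Real.exp (-(r ^ p) / 2) * r ^ ((2:ℕ):ℝ)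
              = (r ^ (-β - 1:ℝ) * r ^ ((2:ℕ):ℝ)) * Real.exp (-(r ^ p) / 2) from by ring, e1]
            ring
      _ ≤ r ^ (-2:ℝ) * (r ^ (max (3 - β) 0) * Real.exp (-(r ^ p) / 2)) := by
          apply mul_le_mul_of_nonneg_left _ (Real.rpow_nonneg hr0.le _)
          exact mul_le_mul_of_nonneg_right e2 (Real.exp_pos _).le
      _ ≤ r ^ (-2:ℝ) * C3 := mul_le_mul_of_nonneg_left e3 (Real.rpow_nonneg hr0.le _)
      _ = C3 * r ^ (-2:ℝ) := mul_comm _ _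
    have hfin : (∫⁻ r in Ioi (1:ℝ), ENNReal.ofReal (C3 * r ^ (-2:ℝ))) < ⊤ :=
      setLIntegral_ofReal_lt_top ((integrableOn_Ioi_rpow_of_lt (by norm_num) one_pos).const_mul C3)
    exact (lt_of_le_of_lt (setLIntegral_mono' measurableSet_Ioi hb) hfin).ne
  · have hb : ∀ r ∈ Ioi (1:ℝ),
        ENNReal.ofReal (r ^ (-β - 1) * Real.exp (-(r ^ p) / 2)) * mfun (r * c)
          ≤ ENNReal.ofReal (r ^ (-β - 1) * Real.exp (-(r ^ p) / 2) * r ^ (2:ℕ)) * mfun c := by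
      intro r hr
      have hr0 : (0:ℝ) < r := lt_trans one_pos hr
      have hexp0 : (0:ℝ) ≤ r ^ (-β - 1:ℝ) * Real.exp (-(r ^ p) / 2) :=
        mul_nonneg (Real.rpow_nonneg hr0.le _) (Real.exp_pos _).le
      calc ENNReal.ofReal (r ^ (-β - 1) * Real.exp (-(r ^ p) / 2)) * mfun (r * c)
          ≤ ENNReal.ofReal (r ^ (-β - 1) * Real.exp (-(r ^ p) / 2))
              * (ENNReal.ofReal (r ^ (2:ℕ)) * mfun c) :=
            mul_le_mul_right (mfun_le_sq_mul hr.le c) _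
      _ = ENNReal.ofReal (r ^ (-β - 1) * Real.exp (-(r ^ p) / 2) * r ^ (2:ℕ)) * mfun c := by
          rw [ENNReal.ofReal_mul hexp0]
          ring
    calc (∫⁻ r in Ioi (1:ℝ),
          ENNReal.ofReal (r ^ (-β - 1) * Real.exp (-(r ^ p) / 2)) * mfun (r * c))
        ≤ ∫⁻ r in Ioi (1:ℝ),
            ENNReal.ofReal (r ^ (-β - 1) * Real.exp (-(r ^ p) / 2) * r ^ (2:ℕ)) * mfun c :=
          setLIntegral_mono' measurableSet_Ioi hb
    _ = (∫⁻ r in Ioi (1:ℝ),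
          ENNReal.ofReal (r ^ (-β - 1) * Real.exp (-(r ^ p) / 2) * r ^ (2:ℕ))) * mfun c :=
        lintegral_mul_const' _ _ (mfun_ne_top _)

lemma main_bound {β α p : ℝ} (hβα : β < α) (hp : 0 < p) :
    ∃ C : ℝ≥0∞, C ≠ ⊤ ∧ ∀ c : ℝ,
      (∫⁻ s, Dpsi β p s * ∫⁻ t, Dtau β α p t * mfun (|s| * (|t| * c)))
        ≤ C * ∫⁻ t, Dtau β α p t * mfun (|t| * c) := by
  obtain ⟨C₁, C₂, hC₁, hC₂, hW1, hW2⟩ := W_bounds hβα hp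
  obtain ⟨CL, hCL, hlow⟩ := phi_lower hβα hp
  obtain ⟨CP, hCP, hP⟩ := phiP hβα hp
  obtain ⟨TQ, hTQ, hQ⟩ := phiQ (β := β) p hp
  refine ⟨C₁ * (CP + CP * CL) + C₂ * (TQ * CL), ?_, fun c => ?_⟩
  · apply ENNReal.add_ne_top.mpr
    constructor
    · exact ENNReal.mul_ne_top hC₁ (ENNReal.add_ne_top.mpr
        ⟨hCP, ENNReal.mul_ne_top hCP hCL⟩)
    · exact ENNReal.mul_ne_top hC₂ (ENNReal.mul_ne_top hTQ hCL)
  · rw [lhs_eq hβα hp c]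
    rw [show Ioi (0:ℝ) = Ioc (0:ℝ) 1 ∪ Ioi (1:ℝ) from (Ioc_union_Ioi_eq_Ioi zero_le_one).symm,
      lintegral_union measurableSet_Ioi
        ((Iic_disjoint_Ioi le_rfl).mono Ioc_subset_Iic_self Subset.rfl)]
    have half1 : (∫⁻ r in Ioc (0:ℝ) 1,
          (∫⁻ t in Ioo (0:ℝ) 1, ENNReal.ofReal (dtau β α p t * t⁻¹ * dpsi β p (r / t)))
            * mfun (r * c))
        ≤ C₁ * (CP * (∫⁻ t, Dtau β α p t * mfun (|t| * c))
            + CP * (CL * ∫⁻ t, Dtau β α p t * mfun (|t| * c))) := by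
      have hb : ∀ r ∈ Ioc (0:ℝ) 1,
          (∫⁻ t in Ioo (0:ℝ) 1, ENNReal.ofReal (dtau β α p t * t⁻¹ * dpsi β p (r / t)))
            * mfun (r * c)
          ≤ C₁ * (ENNReal.ofReal (r ^ (-α - 1)) * mfun (r * c)) := by
        intro r hr
        calc (∫⁻ t in Ioo (0:ℝ) 1, ENNReal.ofReal (dtau β α p t * t⁻¹ * dpsi β p (r / t)))
              * mfun (r * c)
            ≤ (C₁ * ENNReal.ofReal (r ^ (-α - 1))) * mfun (r * c) :=
              mul_le_mul_left (hW1 r hr) _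
        _ = C₁ * (ENNReal.ofReal (r ^ (-α - 1)) * mfun (r * c)) := mul_assoc _ _ _
      calc (∫⁻ r in Ioc (0:ℝ) 1,
            (∫⁻ t in Ioo (0:ℝ) 1, ENNReal.ofReal (dtau β α p t * t⁻¹ * dpsi β p (r / t)))
              * mfun (r * c))
          ≤ ∫⁻ r in Ioc (0:ℝ) 1, C₁ * (ENNReal.ofReal (r ^ (-α - 1)) * mfun (r * c)) :=
            setLIntegral_mono' measurableSet_Ioc hb
      _ = C₁ * ∫⁻ r in Ioc (0:ℝ) 1, ENNReal.ofReal (r ^ (-α - 1)) * mfun (r * c) :=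
          lintegral_const_mul' _ _ hC₁
      _ ≤ C₁ * (CP * (∫⁻ t, Dtau β α p t * mfun (|t| * c)) + CP * mfun c) :=
          mul_le_mul_right (hP c) _
      _ ≤ C₁ * (CP * (∫⁻ t, Dtau β α p t * mfun (|t| * c))
            + CP * (CL * ∫⁻ t, Dtau β α p t * mfun (|t| * c))) := by
          apply mul_le_mul_right
          apply add_le_add_right
          exact mul_le_mul_right (hlow c) _
    have half2 : (∫⁻ r in Ioi (1:ℝ),
          (∫⁻ t in Ioo (0:ℝ) 1, ENNReal.ofReal (dtau β α p t * t⁻¹ * dpsi β p (r / t)))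
            * mfun (r * c))
        ≤ C₂ * (TQ * (CL * ∫⁻ t, Dtau β α p t * mfun (|t| * c))) := by
      have hb : ∀ r ∈ Ioi (1:ℝ),
          (∫⁻ t in Ioo (0:ℝ) 1, ENNReal.ofReal (dtau β α p t * t⁻¹ * dpsi β p (r / t)))
            * mfun (r * c)
          ≤ C₂ * (ENNReal.ofReal (r ^ (-β - 1) * Real.exp (-(r ^ p) / 2)) * mfun (r * c)) := by
        intro r hr
        calc (∫⁻ t in Ioo (0:ℝ) 1, ENNReal.ofReal (dtau β α p t * t⁻¹ * dpsi β p (r / t)))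
              * mfun (r * c)
            ≤ (C₂ * ENNReal.ofReal (r ^ (-β - 1) * Real.exp (-(r ^ p) / 2))) * mfun (r * c) :=
              mul_le_mul_left (hW2 r hr) _
        _ = C₂ * (ENNReal.ofReal (r ^ (-β - 1) * Real.exp (-(r ^ p) / 2)) * mfun (r * c)) :=
            mul_assoc _ _ _
      calc (∫⁻ r in Ioi (1:ℝ),
            (∫⁻ t in Ioo (0:ℝ) 1, ENNReal.ofReal (dtau β α p t * t⁻¹ * dpsi β p (r / t)))
              * mfun (r * c))
          ≤ ∫⁻ r in Ioi (1:ℝ),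
              C₂ * (ENNReal.ofReal (r ^ (-β - 1) * Real.exp (-(r ^ p) / 2)) * mfun (r * c)) :=
            setLIntegral_mono' measurableSet_Ioi hb
      _ = C₂ * ∫⁻ r in Ioi (1:ℝ),
            ENNReal.ofReal (r ^ (-β - 1) * Real.exp (-(r ^ p) / 2)) * mfun (r * c) :=
          lintegral_const_mul' _ _ hC₂
      _ ≤ C₂ * (TQ * mfun c) := mul_le_mul_right (hQ c) _
      _ ≤ C₂ * (TQ * (CL * ∫⁻ t, Dtau β α p t * mfun (|t| * c))) := by
          apply mul_le_mul_right
          exact mul_le_mul_right (hlow c) _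
    calc (∫⁻ r in Ioc (0:ℝ) 1,
          (∫⁻ t in Ioo (0:ℝ) 1, ENNReal.ofReal (dtau β α p t * t⁻¹ * dpsi β p (r / t)))
            * mfun (r * c))
        + (∫⁻ r in Ioi (1:ℝ),
            (∫⁻ t in Ioo (0:ℝ) 1, ENNReal.ofReal (dtau β α p t * t⁻¹ * dpsi β p (r / t)))
              * mfun (r * c))
        ≤ C₁ * (CP * (∫⁻ t, Dtau β α p t * mfun (|t| * c))
            + CP * (CL * ∫⁻ t, Dtau β α p t * mfun (|t| * c)))
          + C₂ * (TQ * (CL * ∫⁻ t, Dtau β α p t * mfun (|t| * c))) := add_le_add half1 half2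
    _ = (C₁ * (CP + CP * CL) + C₂ * (TQ * CL)) * ∫⁻ t, Dtau β α p t * mfun (|t| * c) := by
        ring

end Core

end Stmt3Aux

theorem stmt3 (d : ℕ) (hd : 1 ≤ d) (β α p : ℝ) (hβα : β < α) (hp : 0 < p) :
    UpsilonRange (E := EuclideanSpace ℝ (Fin d)) (tauMeasure β α p) ⊆
      UpsilonDomain (psiMeasure β p) := by
  classical
  rintro N ⟨M, hM, rfl⟩
  obtain ⟨hMlevy, hNlevy⟩ := hM
  haveI hMsf : SigmaFinite M := hMlevy.1
  haveI hNsf : SigmaFinite (Upsilon (tauMeasure β α p) M) := hNlevy.1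
  have hτ : tauMeasure β α p = (volume : Measure ℝ).withDensity (Stmt3Aux.Dtau β α p) := rfl
  have hψ : psiMeasure β p = (volume : Measure ℝ).withDensity (Stmt3Aux.Dpsi β p) := rfl
  have hgm : (fun y : EuclideanSpace ℝ (Fin d) => ENNReal.ofReal (min (‖y‖ ^ 2) 1))
      = fun y => Stmt3Aux.mfun ‖y‖ := rfl
  -- the second moment of `N`, written as an iterated integral
  have hmomN : (∫⁻ y, ENNReal.ofReal (min (‖y‖ ^ 2) 1) ∂(Upsilon (tauMeasure β α p) M))
      = ∫⁻ x, (∫⁻ t, Stmt3Aux.Dtau β α p t * Stmt3Aux.mfun (|t| * ‖x‖)) ∂M := by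
    rw [hgm, hτ, Stmt3Aux.upsilon_expand (Stmt3Aux.meas_Dtau β α p) M
      (g := fun y => Stmt3Aux.mfun ‖y‖) (Stmt3Aux.mfun_meas.comp measurable_norm)]
    have e0 : ∀ t : ℝ, (∫⁻ x, Stmt3Aux.mfun ‖t • x‖ ∂M)
        = ∫⁻ x, Stmt3Aux.mfun (|t| * ‖x‖) ∂M := fun t =>
      lintegral_congr fun x => by rw [norm_smul, Real.norm_eq_abs]
    simp_rw [e0]
    have hm : Measurable (Function.uncurry fun (t : ℝ) (x : EuclideanSpace ℝ (Fin d)) =>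
        Stmt3Aux.Dtau β α p t * Stmt3Aux.mfun (|t| * ‖x‖)) := by
      apply Measurable.mul ((Stmt3Aux.meas_Dtau β α p).comp measurable_fst)
      exact Stmt3Aux.mfun_meas.comp ((measurable_fst.abs).mul (measurable_snd.norm))
    have e1 : ∀ t : ℝ, Stmt3Aux.Dtau β α p t * ∫⁻ x, Stmt3Aux.mfun (|t| * ‖x‖) ∂M
        = ∫⁻ x, Stmt3Aux.Dtau β α p t * Stmt3Aux.mfun (|t| * ‖x‖) ∂M := fun t =>
      (lintegral_const_mul' _ _ (Stmt3Aux.Dtau_ne_top β α p t)).symm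
    simp_rw [e1]
    exact lintegral_lintegral_swap hm.aemeasurable
  have hmomN_fin :
      (∫⁻ x, (∫⁻ t, Stmt3Aux.Dtau β α p t * Stmt3Aux.mfun (|t| * ‖x‖)) ∂M) < ⊤ := by
    rw [← hmomN]
    exact hNlevy.2.2
  have key_zero : (Upsilon (psiMeasure β p) (Upsilon (tauMeasure β α p) M)) {0} = 0 := by
    rw [hψ]
    exact Stmt3Aux.upsilon_zero _ _ hNlevy.2.1
  obtain ⟨C, hC, hmain⟩ := Stmt3Aux.main_bound (β := β) (α := α) (p := p) hβα hp
  have key_fin : (∫⁻ y, ENNReal.ofReal (min (‖y‖ ^ 2) 1)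
      ∂(Upsilon (psiMeasure β p) (Upsilon (tauMeasure β α p) M))) < ⊤ := by
    rw [hgm, hψ, Stmt3Aux.upsilon_expand (Stmt3Aux.meas_Dpsi β p) _
      (g := fun y => Stmt3Aux.mfun ‖y‖) (Stmt3Aux.mfun_meas.comp measurable_norm)]
    have inner_eq : ∀ s : ℝ, (∫⁻ y, Stmt3Aux.mfun ‖s • y‖ ∂(Upsilon (tauMeasure β α p) M))
        = ∫⁻ t, Stmt3Aux.Dtau β α p t
            * ∫⁻ x, Stmt3Aux.mfun (|s| * (|t| * ‖x‖)) ∂M := by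
      intro s
      have hgs : Measurable fun y : EuclideanSpace ℝ (Fin d) => Stmt3Aux.mfun ‖s • y‖ :=
        Stmt3Aux.mfun_meas.comp (measurable_norm.comp (continuous_const_smul s).measurable)
      rw [hτ, Stmt3Aux.upsilon_expand (Stmt3Aux.meas_Dtau β α p) M hgs]
      refine lintegral_congr fun t => ?_
      congr 1
      refine lintegral_congr fun x => ?_
      rw [norm_smul, norm_smul, Real.norm_eq_abs, Real.norm_eq_abs]
    have swapA : ∀ s : ℝ, (∫⁻ t, Stmt3Aux.Dtau β α p t
          * ∫⁻ x, Stmt3Aux.mfun (|s| * (|t| * ‖x‖)) ∂M)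
        = ∫⁻ x, (∫⁻ t, Stmt3Aux.Dtau β α p t * Stmt3Aux.mfun (|s| * (|t| * ‖x‖))) ∂M := by
      intro s
      have hm : Measurable (Function.uncurry fun (t : ℝ) (x : EuclideanSpace ℝ (Fin d)) =>
          Stmt3Aux.Dtau β α p t * Stmt3Aux.mfun (|s| * (|t| * ‖x‖))) := by
        apply Measurable.mul ((Stmt3Aux.meas_Dtau β α p).comp measurable_fst)
        exact Stmt3Aux.mfun_meas.comp
          (((measurable_fst.abs).mul (measurable_snd.norm)).const_mul (|s|))
      have e : ∀ t : ℝ, Stmt3Aux.Dtau β α p t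
            * ∫⁻ x, Stmt3Aux.mfun (|s| * (|t| * ‖x‖)) ∂M
          = ∫⁻ x, Stmt3Aux.Dtau β α p t * Stmt3Aux.mfun (|s| * (|t| * ‖x‖)) ∂M := fun t =>
        (lintegral_const_mul' _ _ (Stmt3Aux.Dtau_ne_top β α p t)).symm
      simp_rw [e]
      exact lintegral_lintegral_swap hm.aemeasurable
    have swapB : (∫⁻ s, Stmt3Aux.Dpsi β p s
          * ∫⁻ x, (∫⁻ t, Stmt3Aux.Dtau β α p t * Stmt3Aux.mfun (|s| * (|t| * ‖x‖))) ∂M)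
        = ∫⁻ x, (∫⁻ s, Stmt3Aux.Dpsi β p s
            * ∫⁻ t, Stmt3Aux.Dtau β α p t * Stmt3Aux.mfun (|s| * (|t| * ‖x‖))) ∂M := by
      have hinner : Measurable fun q : ℝ × EuclideanSpace ℝ (Fin d) =>
          ∫⁻ t, Stmt3Aux.Dtau β α p t * Stmt3Aux.mfun (|q.1| * (|t| * ‖q.2‖)) := by
        apply Measurable.lintegral_prod_right'
          (f := fun z : (ℝ × EuclideanSpace ℝ (Fin d)) × ℝ =>
            Stmt3Aux.Dtau β α p z.2 * Stmt3Aux.mfun (|z.1.1| * (|z.2| * ‖z.1.2‖)))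
        apply Measurable.mul ((Stmt3Aux.meas_Dtau β α p).comp measurable_snd)
        exact Stmt3Aux.mfun_meas.comp ((measurable_fst.fst.abs).mul
          ((measurable_snd.abs).mul (measurable_fst.snd.norm)))
      have hm : Measurable (Function.uncurry fun (s : ℝ) (x : EuclideanSpace ℝ (Fin d)) =>
          Stmt3Aux.Dpsi β p s
            * ∫⁻ t, Stmt3Aux.Dtau β α p t * Stmt3Aux.mfun (|s| * (|t| * ‖x‖))) :=
        Measurable.mul ((Stmt3Aux.meas_Dpsi β p).comp measurable_fst) hinner
      have e : ∀ s : ℝ, Stmt3Aux.Dpsi β p s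
            * ∫⁻ x, (∫⁻ t, Stmt3Aux.Dtau β α p t * Stmt3Aux.mfun (|s| * (|t| * ‖x‖))) ∂M
          = ∫⁻ x, (Stmt3Aux.Dpsi β p s
              * ∫⁻ t, Stmt3Aux.Dtau β α p t * Stmt3Aux.mfun (|s| * (|t| * ‖x‖))) ∂M := fun s =>
        (lintegral_const_mul' _ _ (Stmt3Aux.Dpsi_ne_top β p s)).symm
      simp_rw [e]
      exact lintegral_lintegral_swap hm.aemeasurable
    calc (∫⁻ s, Stmt3Aux.Dpsi β p s
          * ∫⁻ y, Stmt3Aux.mfun ‖s • y‖ ∂(Upsilon (tauMeasure β α p) M))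
        = ∫⁻ s, Stmt3Aux.Dpsi β p s
            * ∫⁻ x, (∫⁻ t, Stmt3Aux.Dtau β α p t
                * Stmt3Aux.mfun (|s| * (|t| * ‖x‖))) ∂M := by
          refine lintegral_congr fun s => ?_
          rw [inner_eq s, swapA s]
    _ = ∫⁻ x, (∫⁻ s, Stmt3Aux.Dpsi β p s
          * ∫⁻ t, Stmt3Aux.Dtau β α p t * Stmt3Aux.mfun (|s| * (|t| * ‖x‖))) ∂M := swapB
    _ ≤ ∫⁻ x, C * (∫⁻ t, Stmt3Aux.Dtau β α p t * Stmt3Aux.mfun (|t| * ‖x‖)) ∂M :=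
        lintegral_mono fun x => hmain ‖x‖
    _ = C * ∫⁻ x, (∫⁻ t, Stmt3Aux.Dtau β α p t * Stmt3Aux.mfun (|t| * ‖x‖)) ∂M :=
        lintegral_const_mul' _ _ hC
    _ < ⊤ := ENNReal.mul_lt_top hC.lt_top hmomN_fin
  exact ⟨hNlevy, Stmt3Aux.sigmaFinite_of_levy _ key_zero key_fin, key_zero, key_fin⟩
end
end

section
/- Let d ≥ 1, p > 0 and −∞ < γ < β < α < ∞. Then the range of 𝔗_{β→α,p} is contained in the domain of 𝔗_{γ→β,p}: every Lévy measure of the form 𝔗_{β→α,p} M with M ∈ 𝔇(𝔗_{β→α,p}) belongs to 𝔇(𝔗_{γ→β,p}). -/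
open MeasureTheory Set

noncomputable section

variable {E : Type*} [NormedAddCommGroup E] [NormedSpace ℝ E]
  [MeasurableSpace E] [BorelSpace E]

open scoped ENNReal NNReal
set_option maxHeartbeats 1000000
set_option linter.unusedVariables false

section AuxE
variable [SecondCountableTopology E]

section Aux
variable {E : Type*} [NormedAddCommGroup E] [NormedSpace ℝ E]
  [MeasurableSpace E] [BorelSpace E] [SecondCountableTopology E]

lemma measurable_smul_pair : Measurable (fun sx : ℝ × E => sx.1 • sx.2) :=
  (continuous_fst.smul continuous_snd).measurable

lemma upsilon_lintegral (ρ : Measure ℝ) (M : Measure E) [SFinite M] {g : E → ℝ≥0∞}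
    (hg : Measurable g) :
    ∫⁻ y, g y ∂(Upsilon ρ M) = ∫⁻ s, ∫⁻ x, g (s • x) ∂M ∂ρ := by
  rw [Upsilon, lintegral_map hg measurable_smul_pair]
  exact lintegral_prod _ ((hg.comp measurable_smul_pair).aemeasurable)

lemma upsilon_singleton (ρ : Measure ℝ) (M : Measure E) [SFinite M]
    (hρ : ρ {0} = 0) (hM : M {0} = 0) : Upsilon ρ M {0} = 0 := by
  rw [Upsilon, Measure.map_apply measurable_smul_pair (measurableSet_singleton 0)]
  have hsub : (fun sx : ℝ × E => sx.1 • sx.2) ⁻¹' {0} ⊆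
      (({0} : Set ℝ) ×ˢ (univ : Set E)) ∪ ((univ : Set ℝ) ×ˢ ({0} : Set E)) := by
    rintro ⟨s, x⟩ h
    simp only [mem_preimage, mem_singleton_iff, smul_eq_zero] at h
    rcases h with h | h
    · exact Or.inl (by simp [h])
    · exact Or.inr (by simp [h])
  refine le_antisymm (le_trans (measure_mono hsub) ?_) zero_le
  refine le_trans (measure_union_le _ _) ?_
  rw [Measure.prod_prod, Measure.prod_prod, hρ, hM, zero_mul, mul_zero, add_zero]

lemma sigmaFinite_of_min (M : Measure E) (h0 : M {0} = 0)
    (h : ∫⁻ x, ENNReal.ofReal (min (‖x‖ ^ 2) 1) ∂M < ⊤) : SigmaFinite M := by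
  refine ⟨⟨⟨fun n => {x : E | ((n : ℝ) + 1)⁻¹ < ‖x‖} ∪ {0}, fun _ => trivial, ?_, ?_⟩⟩⟩
  · intro n
    set c : ℝ := ((n : ℝ) + 1)⁻¹ with hc
    have hc0 : 0 < c := by positivity
    set A : Set E := {x : E | c < ‖x‖} with hA
    have key : ENNReal.ofReal (min (c ^ 2) 1) * M A ≤
        ∫⁻ x, ENNReal.ofReal (min (‖x‖ ^ 2) 1) ∂M := by
      rw [← setLIntegral_const A (ENNReal.ofReal (min (c ^ 2) 1))]
      refine le_trans (setLIntegral_mono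
        ((ENNReal.measurable_ofReal.comp ((continuous_norm.pow 2).min continuous_const).measurable))
        (fun x hx => ?_)) (setLIntegral_le_lintegral _ _)
      refine ENNReal.ofReal_le_ofReal (min_le_min ?_ le_rfl)
      exact pow_le_pow_left₀ hc0.le (le_of_lt hx) 2
    have hmin : 0 < min (c ^ 2) 1 := lt_min (by positivity) one_pos
    have hMA : M A < ⊤ := by
      by_contra hcon
      push_neg at hcon
      have hAtop : M A = ⊤ := top_le_iff.mp hcon
      rw [hAtop, ENNReal.mul_top (ENNReal.ofReal_pos.mpr hmin).ne'] at key
      exact h.ne (top_le_iff.mp key)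
    calc M (A ∪ {0}) ≤ M A + M {0} := measure_union_le _ _
      _ < ⊤ := by rw [h0, add_zero]; exact hMA
  · rw [eq_univ_iff_forall]
    intro x
    rcases eq_or_ne x 0 with rfl | hx
    · exact mem_iUnion.mpr ⟨0, Or.inr rfl⟩
    · have hx0 : 0 < ‖x‖ := norm_pos_iff.mpr hx
      obtain ⟨n, hn⟩ := exists_nat_one_div_lt hx0
      refine mem_iUnion.mpr ⟨n, Or.inl ?_⟩
      simpa [one_div] using hn

end Aux

end AuxE

def td (β α p : ℝ) : ℝ → ℝ≥0∞ := fun s =>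
  if 0 < s ∧ s < 1 then
    ENNReal.ofReal ((Kconst α β p)⁻¹ * (s ^ (-α - 1) * (1 - s ^ p) ^ ((α - β) / p - 1)))
  else 0

lemma tau_eq (β α p : ℝ) : tauMeasure β α p = (volume : Measure ℝ).withDensity (td β α p) := rfl

lemma td_meas (β α p : ℝ) : Measurable (td β α p) := by
  unfold td
  have h1 : Measurable fun s : ℝ => s ^ (-α - 1) := by measurability
  have h2 : Measurable fun s : ℝ => (1 - s ^ p) ^ ((α - β) / p - 1) := by measurability
  have hs : MeasurableSet {s : ℝ | 0 < s ∧ s < 1} := by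
    simpa [Set.Ioo] using (measurableSet_Ioo (a := (0:ℝ)) (b := 1))
  exact Measurable.ite hs
    (ENNReal.measurable_ofReal.comp ((h1.mul h2).const_mul _)) measurable_const

lemma Kconst_nonneg (α β p : ℝ) : 0 ≤ Kconst α β p := by
  refine setIntegral_nonneg measurableSet_Ioi fun x hx => ?_
  have : (0:ℝ) < x := hx
  positivity

instance tau_sigmaFinite (β α p : ℝ) : SigmaFinite (tauMeasure β α p) := by
  have : tauMeasure β α p = (volume : Measure ℝ).withDensity fun s =>
      ENNReal.ofReal (if 0 < s ∧ s < 1 then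
        (Kconst α β p)⁻¹ * (s ^ (-α - 1) * (1 - s ^ p) ^ ((α - β) / p - 1)) else 0) := by
    unfold tauMeasure
    congr 1
    funext s
    split_ifs <;> simp
  rw [this]
  infer_instance

lemma tau_singleton (β α p : ℝ) : tauMeasure β α p {0} = 0 := by
  rw [tau_eq, withDensity_apply _ (measurableSet_singleton 0),
    Measure.restrict_eq_zero.mpr Real.volume_singleton]
  simp

lemma lint_image_1d {s : Set ℝ} {f f' : ℝ → ℝ} (hs : MeasurableSet s)
    (hf' : ∀ x ∈ s, HasDerivWithinAt f (f' x) s x) (hf : InjOn f s) (g : ℝ → ℝ≥0∞) :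
    ∫⁻ x in f '' s, g x = ∫⁻ x in s, ENNReal.ofReal |f' x| * g (f x) := by
  simpa only [ContinuousLinearMap.det_toSpanSingleton] using
    MeasureTheory.lintegral_image_eq_lintegral_abs_det_fderiv_mul volume hs
      (fun x hx => (hf' x hx).hasFDerivWithinAt) hf g

lemma meas_rpow_c (c : ℝ) : Measurable fun x : ℝ => x ^ c := by measurability

lemma meas_one_sub_rpow (c : ℝ) : Measurable fun x : ℝ => (1 - x) ^ c :=
  (meas_rpow_c c).comp (measurable_const.sub measurable_id)

def B0 (a b : ℝ) : ℝ≥0∞ :=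
  ∫⁻ x in Ioo (0:ℝ) 1, ENNReal.ofReal ((1 - x) ^ (a - 1) * x ^ (b - 1))

lemma lint_rpow_Ioc_lt_top {b : ℝ} (hb : 0 < b) :
    ∫⁻ x in Ioc (0:ℝ) 2⁻¹, ENNReal.ofReal (x ^ (b - 1)) < ⊤ := by
  have h : IntegrableOn (fun x : ℝ => x ^ (b - 1)) (Ioc (0:ℝ) 2⁻¹) := by
    have := (intervalIntegral.intervalIntegrable_rpow' (a := (0:ℝ)) (b := 2⁻¹)
      (r := b - 1) (by linarith)).1
    simpa using this
  exact h.lintegral_lt_top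

lemma B0_lt_top {a b : ℝ} (ha : 0 < a) (hb : 0 < b) : B0 a b < ⊤ := by
  have hsplit : Ioo (0:ℝ) 1 = Ioc (0:ℝ) 2⁻¹ ∪ Ioo (2⁻¹:ℝ) 1 :=
    (Ioc_union_Ioo_eq_Ioo (by norm_num) (by norm_num)).symm
  have hdisj : Disjoint (Ioc (0:ℝ) 2⁻¹) (Ioo (2⁻¹:ℝ) 1) := by
    rw [Set.disjoint_left]
    rintro x ⟨_, hx2⟩ ⟨hx3, _⟩
    linarith
  rw [B0, hsplit, lintegral_union measurableSet_Ioo hdisj]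
  have c1pos : (0:ℝ) ≤ max 1 ((2:ℝ)⁻¹ ^ (a - 1)) := le_max_of_le_left zero_le_one
  have c2pos : (0:ℝ) ≤ max 1 ((2:ℝ)⁻¹ ^ (b - 1)) := le_max_of_le_left zero_le_one
  have part1 : ∫⁻ x in Ioc (0:ℝ) 2⁻¹, ENNReal.ofReal ((1 - x) ^ (a - 1) * x ^ (b - 1)) < ⊤ := by
    have hle : ∀ x ∈ Ioc (0:ℝ) 2⁻¹,
        ENNReal.ofReal ((1 - x) ^ (a - 1) * x ^ (b - 1)) ≤
        ENNReal.ofReal (max 1 ((2:ℝ)⁻¹ ^ (a - 1))) * ENNReal.ofReal (x ^ (b - 1)) := by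
      intro x ⟨hx0, hx2⟩
      rw [← ENNReal.ofReal_mul c1pos]
      refine ENNReal.ofReal_le_ofReal (mul_le_mul_of_nonneg_right ?_
        (Real.rpow_nonneg hx0.le _))
      rcases le_or_gt 1 a with hA | hA
      · refine le_max_of_le_left (Real.rpow_le_one (by linarith) (by linarith) (by linarith))
      · refine le_max_of_le_right (Real.rpow_le_rpow_of_nonpos (by norm_num) (by linarith)
          (by linarith))
    calc ∫⁻ x in Ioc (0:ℝ) 2⁻¹, ENNReal.ofReal ((1 - x) ^ (a - 1) * x ^ (b - 1))
        ≤ ∫⁻ x in Ioc (0:ℝ) 2⁻¹,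
            ENNReal.ofReal (max 1 ((2:ℝ)⁻¹ ^ (a - 1))) * ENNReal.ofReal (x ^ (b - 1)) :=
          setLIntegral_mono ((ENNReal.measurable_ofReal.comp (meas_rpow_c (b-1))).const_mul _) hle
      _ = ENNReal.ofReal (max 1 ((2:ℝ)⁻¹ ^ (a - 1))) *
            ∫⁻ x in Ioc (0:ℝ) 2⁻¹, ENNReal.ofReal (x ^ (b - 1)) :=
          lintegral_const_mul _ (ENNReal.measurable_ofReal.comp (meas_rpow_c (b-1)))
      _ < ⊤ := ENNReal.mul_lt_top ENNReal.ofReal_lt_top (lint_rpow_Ioc_lt_top hb)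
  have part2 : ∫⁻ x in Ioo (2⁻¹:ℝ) 1, ENNReal.ofReal ((1 - x) ^ (a - 1) * x ^ (b - 1)) < ⊤ := by
    have hle : ∀ x ∈ Ioo (2⁻¹:ℝ) 1,
        ENNReal.ofReal ((1 - x) ^ (a - 1) * x ^ (b - 1)) ≤
        ENNReal.ofReal (max 1 ((2:ℝ)⁻¹ ^ (b - 1))) * ENNReal.ofReal ((1 - x) ^ (a - 1)) := by
      intro x ⟨hx0, hx2⟩
      rw [← ENNReal.ofReal_mul c2pos, mul_comm ((1 - x) ^ (a - 1))]
      refine ENNReal.ofReal_le_ofReal (mul_le_mul_of_nonneg_right ?_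
        (Real.rpow_nonneg (by linarith) _))
      rcases le_or_gt 1 b with hB | hB
      · refine le_max_of_le_left (Real.rpow_le_one (by linarith) (by linarith) (by linarith))
      · refine le_max_of_le_right (Real.rpow_le_rpow_of_nonpos (by norm_num) (by linarith)
          (by linarith))
    have himg : ∫⁻ x in Ioo (2⁻¹:ℝ) 1, ENNReal.ofReal ((1 - x) ^ (a - 1)) < ⊤ := by
      have himage : (fun x : ℝ => 1 - x) '' Ioo (0:ℝ) 2⁻¹ = Ioo (2⁻¹:ℝ) 1 := by
        rw [Set.image_const_sub_Ioo]; norm_num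
      have := lint_image_1d (f := fun x : ℝ => 1 - x) (f' := fun _ => (-1:ℝ))
        (s := Ioo (0:ℝ) 2⁻¹) measurableSet_Ioo
        (fun x _ => ((hasDerivAt_id x).const_sub 1).hasDerivWithinAt)
        (fun x _ y _ h => by dsimp at h; linarith)
        (fun x => ENNReal.ofReal ((1 - x) ^ (a - 1)))
      rw [himage] at this
      rw [this]
      have heq : ∀ x ∈ Ioo (0:ℝ) 2⁻¹,
          ENNReal.ofReal |(-1:ℝ)| * ENNReal.ofReal ((1 - (1 - x)) ^ (a - 1)) =
          ENNReal.ofReal (x ^ (a - 1)) := by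
        intro x _
        norm_num
      rw [setLIntegral_congr_fun measurableSet_Ioo heq]
      calc ∫⁻ x in Ioo (0:ℝ) 2⁻¹, ENNReal.ofReal (x ^ (a - 1))
          ≤ ∫⁻ x in Ioc (0:ℝ) 2⁻¹, ENNReal.ofReal (x ^ (a - 1)) :=
            lintegral_mono_set Ioo_subset_Ioc_self
        _ < ⊤ := lint_rpow_Ioc_lt_top ha
    calc ∫⁻ x in Ioo (2⁻¹:ℝ) 1, ENNReal.ofReal ((1 - x) ^ (a - 1) * x ^ (b - 1))
        ≤ ∫⁻ x in Ioo (2⁻¹:ℝ) 1,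
            ENNReal.ofReal (max 1 ((2:ℝ)⁻¹ ^ (b - 1))) * ENNReal.ofReal ((1 - x) ^ (a - 1)) :=
          setLIntegral_mono ((ENNReal.measurable_ofReal.comp (meas_one_sub_rpow (a-1))).const_mul _) hle
      _ = ENNReal.ofReal (max 1 ((2:ℝ)⁻¹ ^ (b - 1))) *
            ∫⁻ x in Ioo (2⁻¹:ℝ) 1, ENNReal.ofReal ((1 - x) ^ (a - 1)) :=
          lintegral_const_mul _ (ENNReal.measurable_ofReal.comp (meas_one_sub_rpow (a-1)))
      _ < ⊤ := ENNReal.mul_lt_top ENNReal.ofReal_lt_top himg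
  exact ENNReal.add_lt_top.mpr ⟨part1, part2⟩

lemma image_rpow_Ioo {u p : ℝ} (hu : 0 < u) (hu1 : u < 1) (hp : 0 < p) :
    (fun x : ℝ => x ^ p) '' Ioo u 1 = Ioo (u ^ p) 1 := by
  ext w
  constructor
  · rintro ⟨x, ⟨hx1, hx2⟩, rfl⟩
    exact ⟨Real.rpow_lt_rpow hu.le hx1 hp,
      Real.rpow_lt_one (le_trans hu.le hx1.le) hx2 hp⟩
  · rintro ⟨hw1, hw2⟩
    have hw0 : 0 < w := lt_trans (Real.rpow_pos_of_pos hu _) hw1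
    refine ⟨w ^ p⁻¹, ⟨?_, ?_⟩, Real.rpow_inv_rpow hw0.le hp.ne'⟩
    · have h := Real.rpow_lt_rpow (Real.rpow_pos_of_pos hu p).le hw1 (inv_pos.mpr hp)
      rwa [Real.rpow_rpow_inv hu.le hp.ne'] at h
    · exact Real.rpow_lt_one hw0.le hw2 (inv_pos.mpr hp)

lemma injOn_rpow_Ioo {u p : ℝ} (hu : 0 < u) (hp : 0 < p) :
    InjOn (fun x : ℝ => x ^ p) (Ioo u 1) := by
  intro x hx y hy hxy
  have hx0 : (0:ℝ) ≤ x := le_of_lt (lt_trans hu hx.1)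
  have hy0 : (0:ℝ) ≤ y := le_of_lt (lt_trans hu hy.1)
  rw [← Real.rpow_rpow_inv hx0 hp.ne', ← Real.rpow_rpow_inv hy0 hp.ne']
  dsimp only at hxy
  rw [hxy]

lemma real_ident (α β p : ℝ) (hp : 0 < p) {u s : ℝ} (hu : 0 < u) (hus : u < s) (hs1 : s < 1)
    (c2 c1 A : ℝ) :
    (c2 * (s ^ (-β - 1) * (1 - s ^ p) ^ A)) * s⁻¹ *
      (c1 * ((u / s) ^ (-α - 1) * (1 - (u / s) ^ p) ^ ((α - β) / p - 1)))
    = (c2 * (c1 * u ^ (-α - 1))) *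
      (s ^ (p - 1) * ((1 - s ^ p) ^ A * (s ^ p - u ^ p) ^ ((α - β) / p - 1))) := by
  have hs0 : (0:ℝ) < s := lt_trans hu hus
  have hsp : (0:ℝ) < s ^ p := Real.rpow_pos_of_pos hs0 _
  have hd : (0:ℝ) < s ^ p - u ^ p := sub_pos.mpr (Real.rpow_lt_rpow hu.le hus hp)
  have e1 : (u / s) ^ (-α - 1) = u ^ (-α - 1) * s ^ (α + 1) := by
    rw [Real.div_rpow hu.le hs0.le, div_eq_mul_inv, ← Real.rpow_neg hs0.le]
    have h : -(-α - 1) = α + 1 := by ring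
    rw [h]
  have e2 : 1 - (u / s) ^ p = (s ^ p - u ^ p) * (s ^ p)⁻¹ := by
    rw [Real.div_rpow hu.le hs0.le]
    field_simp
  have e3 : ((s ^ p - u ^ p) * (s ^ p)⁻¹) ^ ((α - β) / p - 1)
      = (s ^ p - u ^ p) ^ ((α - β) / p - 1) * s ^ (-(p * ((α - β) / p - 1))) := by
    rw [Real.mul_rpow hd.le (inv_nonneg.mpr hsp.le), Real.inv_rpow hsp.le,
      ← Real.rpow_mul hs0.le, ← Real.rpow_neg hs0.le]
  have e4 : s⁻¹ = s ^ (-1 : ℝ) := (Real.rpow_neg_one s).symm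
  have key : s ^ (-β - 1) * s ^ (-1:ℝ) * s ^ (α + 1) * s ^ (-(p * ((α - β) / p - 1)))
      = s ^ (p - 1) := by
    rw [← Real.rpow_add hs0, ← Real.rpow_add hs0, ← Real.rpow_add hs0]
    congr 1
    field_simp
    ring
  rw [e1, e2, e3, e4, ← key]
  ring

def Cb (γ β α p : ℝ) : ℝ≥0∞ :=
  ENNReal.ofReal ((Kconst β γ p)⁻¹ * p⁻¹) * B0 ((β - γ) / p) ((α - β) / p)

lemma Cb_lt_top (γ β α p : ℝ) (hγβ : γ < β) (hβα : β < α) (hp : 0 < p) :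
    Cb γ β α p < ⊤ :=
  ENNReal.mul_lt_top ENNReal.ofReal_lt_top
    (B0_lt_top (div_pos (by linarith) hp) (div_pos (by linarith) hp))

lemma hpoint (γ β α p : ℝ) (hγβ : γ < β) (hβα : β < α) (hp : 0 < p) (u : ℝ) :
    ∫⁻ s in Ioo (0:ℝ) 1, td γ β p s * (ENNReal.ofReal s)⁻¹ * td β α p (u / s) ∂volume
      ≤ Cb γ β α p * td β α p u := by
  by_cases hcase : 0 < u ∧ u < 1
  swap
  · have hz : ∀ s ∈ Ioo (0:ℝ) 1,
        td γ β p s * (ENNReal.ofReal s)⁻¹ * td β α p (u / s) = 0 := by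
      intro s hs
      have hnot : ¬(0 < u / s ∧ u / s < 1) := by
        rcases not_and_or.mp hcase with hu | hu
        · push_neg at hu
          intro hc
          have : u / s ≤ 0 := div_nonpos_iff.mpr (Or.inr ⟨hu, hs.1.le⟩)
          linarith [hc.1]
        · push_neg at hu
          intro hc
          have h1 : u ≤ u / s := by
            rw [le_div_iff₀ hs.1]
            exact mul_le_of_le_one_right (by linarith) hs.2.le
          linarith [hc.2]
      have hz0 : td β α p (u / s) = 0 := by simp only [td, if_neg hnot]
      rw [hz0, mul_zero]
    rw [setLIntegral_congr_fun measurableSet_Ioo hz]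
    simp
  obtain ⟨hu0, hu1⟩ := hcase
  have hup1 : u ^ p < 1 := Real.rpow_lt_one hu0.le hu1 hp
  have hup0 : 0 < u ^ p := Real.rpow_pos_of_pos hu0 p
  have hL0 : (0:ℝ) < 1 - u ^ p := by linarith
  have hL1 : (1:ℝ) - u ^ p ≤ 1 := by linarith
  have hK2 : (0:ℝ) ≤ (Kconst β γ p)⁻¹ := inv_nonneg.mpr (Kconst_nonneg _ _ _)
  have hK1 : (0:ℝ) ≤ (Kconst α β p)⁻¹ := inv_nonneg.mpr (Kconst_nonneg _ _ _)
  have hune : (0:ℝ) ≤ u ^ (-α - 1) := Real.rpow_nonneg hu0.le _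
  have hLB : (0:ℝ) ≤ (1 - u ^ p) ^ ((α - β) / p - 1) := Real.rpow_nonneg hL0.le _
  have hmeas_core : Measurable fun s : ℝ =>
      ENNReal.ofReal (s ^ (p - 1) *
        ((1 - s ^ p) ^ ((β - γ) / p - 1) * (s ^ p - u ^ p) ^ ((α - β) / p - 1))) := by
    apply ENNReal.measurable_ofReal.comp
    exact (meas_rpow_c _).mul
      (((meas_rpow_c _).comp (measurable_const.sub (meas_rpow_c p))).mul
        ((meas_rpow_c _).comp ((meas_rpow_c p).sub measurable_const)))
  have hmeas_core2 : Measurable fun x : ℝ =>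
      ENNReal.ofReal ((1 - x) ^ ((β - γ) / p - 1) * x ^ ((α - β) / p - 1)) :=
    ENNReal.measurable_ofReal.comp ((meas_one_sub_rpow _).mul (meas_rpow_c _))
  have hdisj : Disjoint (Ioc (0:ℝ) u) (Ioo u 1) := by
    rw [Set.disjoint_left]
    rintro x ⟨_, h1⟩ ⟨h2, _⟩
    exact absurd h2 (not_lt.mpr h1)
  rw [show Ioo (0:ℝ) 1 = Ioc 0 u ∪ Ioo u 1 from (Ioc_union_Ioo_eq_Ioo hu0.le hu1).symm,
    lintegral_union measurableSet_Ioo hdisj]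
  have hfirst : ∫⁻ s in Ioc (0:ℝ) u,
      td γ β p s * (ENNReal.ofReal s)⁻¹ * td β α p (u / s) ∂volume = 0 := by
    have hz : ∀ s ∈ Ioc (0:ℝ) u,
        td γ β p s * (ENNReal.ofReal s)⁻¹ * td β α p (u / s) = 0 := by
      intro s hs
      have h1 : 1 ≤ u / s := (one_le_div hs.1).mpr hs.2
      have hnot : ¬(0 < u / s ∧ u / s < 1) := fun hc => absurd hc.2 (not_lt.mpr h1)
      simp only [td, if_neg hnot, mul_zero]
    rw [setLIntegral_congr_fun measurableSet_Ioc hz]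
    exact lintegral_zero
  rw [hfirst, zero_add]
  have hstep2 : ∀ s ∈ Ioo u 1,
      td γ β p s * (ENNReal.ofReal s)⁻¹ * td β α p (u / s)
        = ENNReal.ofReal ((Kconst β γ p)⁻¹ * ((Kconst α β p)⁻¹ * u ^ (-α - 1))) *
          ENNReal.ofReal (s ^ (p - 1) *
            ((1 - s ^ p) ^ ((β - γ) / p - 1) * (s ^ p - u ^ p) ^ ((α - β) / p - 1))) := by
    intro s hs
    have hs0 : (0:ℝ) < s := lt_trans hu0 hs.1
    have hsp1 : s ^ p < 1 := Real.rpow_lt_one hs0.le hs.2 hp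
    have hdiv : 0 < u / s ∧ u / s < 1 := ⟨div_pos hu0 hs0, (div_lt_one hs0).mpr hs.1⟩
    have hX2 : (0:ℝ) ≤ (Kconst β γ p)⁻¹ * (s ^ (-β - 1) * (1 - s ^ p) ^ ((β - γ) / p - 1)) :=
      mul_nonneg hK2 (mul_nonneg (Real.rpow_nonneg hs0.le _)
        (Real.rpow_nonneg (by linarith) _))
    rw [show td γ β p s = ENNReal.ofReal ((Kconst β γ p)⁻¹ *
          (s ^ (-β - 1) * (1 - s ^ p) ^ ((β - γ) / p - 1))) from by
        simp only [td, if_pos (⟨hs0, hs.2⟩ : 0 < s ∧ s < 1)],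
      show td β α p (u / s) = ENNReal.ofReal ((Kconst α β p)⁻¹ *
          ((u / s) ^ (-α - 1) * (1 - (u / s) ^ p) ^ ((α - β) / p - 1))) from by
        simp only [td, if_pos hdiv],
      ← ENNReal.ofReal_inv_of_pos hs0,
      ← ENNReal.ofReal_mul hX2,
      ← ENNReal.ofReal_mul (mul_nonneg hX2 (inv_nonneg.mpr hs0.le)),
      real_ident α β p hp hu0 hs.1 hs.2 _ _ _,
      ENNReal.ofReal_mul (mul_nonneg hK2 (mul_nonneg hK1 hune))]
  rw [setLIntegral_congr_fun measurableSet_Ioo hstep2,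
    lintegral_const_mul _ hmeas_core]
  -- change of variables s ↦ s ^ p
  have himg := lint_image_1d (s := Ioo u 1) measurableSet_Ioo
    (f := fun x : ℝ => x ^ p) (f' := fun x => p * x ^ (p - 1))
    (fun x hx => (Real.hasDerivAt_rpow_const
      (Or.inl (ne_of_gt (lt_trans hu0 hx.1)))).hasDerivWithinAt)
    (injOn_rpow_Ioo hu0 hp)
    (fun w => ENNReal.ofReal ((1 - w) ^ ((β - γ) / p - 1) * (w - u ^ p) ^ ((α - β) / p - 1)))
  rw [image_rpow_Ioo hu0 hu1 hp] at himg
  have hrw : ∀ s ∈ Ioo u 1,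
      ENNReal.ofReal |p * s ^ (p - 1)| *
        ENNReal.ofReal ((1 - s ^ p) ^ ((β - γ) / p - 1) * (s ^ p - u ^ p) ^ ((α - β) / p - 1))
      = ENNReal.ofReal p * ENNReal.ofReal (s ^ (p - 1) *
          ((1 - s ^ p) ^ ((β - γ) / p - 1) * (s ^ p - u ^ p) ^ ((α - β) / p - 1))) := by
    intro s hs
    have hs0 : (0:ℝ) < s := lt_trans hu0 hs.1
    have habs : |p * s ^ (p - 1)| = p * s ^ (p - 1) := by
      refine abs_of_pos (mul_pos hp (Real.rpow_pos_of_pos hs0 _))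
    rw [habs, ENNReal.ofReal_mul hp.le, mul_assoc,
      ← ENNReal.ofReal_mul (Real.rpow_nonneg hs0.le _)]
  rw [setLIntegral_congr_fun measurableSet_Ioo hrw,
    lintegral_const_mul _ hmeas_core] at himg
  have hI : ∫⁻ s in Ioo u 1, ENNReal.ofReal (s ^ (p - 1) *
        ((1 - s ^ p) ^ ((β - γ) / p - 1) * (s ^ p - u ^ p) ^ ((α - β) / p - 1))) ∂volume
      = ENNReal.ofReal p⁻¹ *
        ∫⁻ w in Ioo (u ^ p) 1,
          ENNReal.ofReal ((1 - w) ^ ((β - γ) / p - 1) * (w - u ^ p) ^ ((α - β) / p - 1)) ∂volume := by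
    rw [himg, ← mul_assoc, ← ENNReal.ofReal_mul (inv_nonneg.mpr hp.le),
      inv_mul_cancel₀ hp.ne', ENNReal.ofReal_one, one_mul]
  -- affine change of variables
  have himg2 := lint_image_1d (s := Ioo (0:ℝ) 1) measurableSet_Ioo
    (f := fun x : ℝ => u ^ p + (1 - u ^ p) * x) (f' := fun _ => 1 - u ^ p)
    (fun x _ => by
      simpa using (((hasDerivAt_id x).const_mul (1 - u ^ p)).const_add (u ^ p)).hasDerivWithinAt)
    (fun x _ y _ h => by
      dsimp only at h
      exact mul_left_cancel₀ hL0.ne' (add_left_cancel h))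
    (fun w => ENNReal.ofReal ((1 - w) ^ ((β - γ) / p - 1) * (w - u ^ p) ^ ((α - β) / p - 1)))
  have himage2 : (fun x : ℝ => u ^ p + (1 - u ^ p) * x) '' Ioo 0 1 = Ioo (u ^ p) 1 := by
    have h1 : (fun x : ℝ => u ^ p + (1 - u ^ p) * x)
        = (fun y : ℝ => u ^ p + y) ∘ (fun x : ℝ => (1 - u ^ p) * x) := rfl
    rw [h1, Set.image_comp, Set.image_mul_left_Ioo hL0, mul_zero, mul_one,
      Set.image_const_add_Ioo, add_zero]
    congr 1
    ring
  rw [himage2] at himg2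
  have hrw2 : ∀ x ∈ Ioo (0:ℝ) 1,
      ENNReal.ofReal |1 - u ^ p| *
        ENNReal.ofReal ((1 - (u ^ p + (1 - u ^ p) * x)) ^ ((β - γ) / p - 1) *
          ((u ^ p + (1 - u ^ p) * x) - u ^ p) ^ ((α - β) / p - 1))
      = ENNReal.ofReal ((1 - u ^ p) * ((1 - u ^ p) ^ ((β - γ) / p - 1) *
          (1 - u ^ p) ^ ((α - β) / p - 1))) *
        ENNReal.ofReal ((1 - x) ^ ((β - γ) / p - 1) * x ^ ((α - β) / p - 1)) := by
    intro x hx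
    have e1 : 1 - (u ^ p + (1 - u ^ p) * x) = (1 - u ^ p) * (1 - x) := by ring
    have e2 : (u ^ p + (1 - u ^ p) * x) - u ^ p = (1 - u ^ p) * x := by ring
    rw [e1, e2, Real.mul_rpow hL0.le (by linarith [hx.2] : (0:ℝ) ≤ 1 - x),
      Real.mul_rpow hL0.le hx.1.le, abs_of_pos hL0,
      ← ENNReal.ofReal_mul hL0.le,
      ← ENNReal.ofReal_mul (mul_nonneg hL0.le (mul_nonneg (Real.rpow_nonneg hL0.le _)
        (Real.rpow_nonneg hL0.le _)))]
    congr 1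
    ring
  rw [setLIntegral_congr_fun measurableSet_Ioo hrw2,
    lintegral_const_mul _ hmeas_core2] at himg2
  -- now combine
  have hLpow : (1 - u ^ p) * ((1 - u ^ p) ^ ((β - γ) / p - 1) * (1 - u ^ p) ^ ((α - β) / p - 1))
      = (1 - u ^ p) ^ (1 + ((β - γ) / p - 1) + ((α - β) / p - 1)) := by
    rw [Real.rpow_add hL0, Real.rpow_add hL0, Real.rpow_one]
    ring
  have hLle : (1 - u ^ p) ^ (1 + ((β - γ) / p - 1) + ((α - β) / p - 1))
      ≤ (1 - u ^ p) ^ ((α - β) / p - 1) := by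
    refine Real.rpow_le_rpow_of_exponent_ge hL0 hL1 ?_
    have h : 0 < (β - γ) / p := div_pos (by linarith) hp
    linarith
  have hofle : ENNReal.ofReal ((1 - u ^ p) * ((1 - u ^ p) ^ ((β - γ) / p - 1) *
        (1 - u ^ p) ^ ((α - β) / p - 1))) ≤ ENNReal.ofReal ((1 - u ^ p) ^ ((α - β) / p - 1)) :=
    ENNReal.ofReal_le_ofReal (by rw [hLpow]; exact hLle)
  calc ENNReal.ofReal ((Kconst β γ p)⁻¹ * ((Kconst α β p)⁻¹ * u ^ (-α - 1))) *
        ∫⁻ s in Ioo u 1, ENNReal.ofReal (s ^ (p - 1) *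
          ((1 - s ^ p) ^ ((β - γ) / p - 1) * (s ^ p - u ^ p) ^ ((α - β) / p - 1))) ∂volume
      = ENNReal.ofReal ((Kconst β γ p)⁻¹ * ((Kconst α β p)⁻¹ * u ^ (-α - 1))) *
        (ENNReal.ofReal p⁻¹ *
          (ENNReal.ofReal ((1 - u ^ p) * ((1 - u ^ p) ^ ((β - γ) / p - 1) *
            (1 - u ^ p) ^ ((α - β) / p - 1))) *
           B0 ((β - γ) / p) ((α - β) / p))) := by
        rw [hI, himg2]
        rfl
    _ ≤ ENNReal.ofReal ((Kconst β γ p)⁻¹ * ((Kconst α β p)⁻¹ * u ^ (-α - 1))) *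
        (ENNReal.ofReal p⁻¹ *
          (ENNReal.ofReal ((1 - u ^ p) ^ ((α - β) / p - 1)) *
           B0 ((β - γ) / p) ((α - β) / p))) := by
        exact mul_le_mul_right (mul_le_mul_right (mul_le_mul_left hofle _) _) _
    _ = Cb γ β α p * td β α p u := by
        rw [show td β α p u = ENNReal.ofReal ((Kconst α β p)⁻¹ *
            (u ^ (-α - 1) * (1 - u ^ p) ^ ((α - β) / p - 1))) from by
          simp only [td, if_pos (⟨hu0, hu1⟩ : 0 < u ∧ u < 1)], Cb]
        rw [ENNReal.ofReal_mul hK2, ENNReal.ofReal_mul hK1,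
          ENNReal.ofReal_mul hK2, ENNReal.ofReal_mul hK1, ENNReal.ofReal_mul hune]
        ring

lemma tau_comp_bound (γ β α p : ℝ) (hγβ : γ < β) (hβα : β < α) (hp : 0 < p)
    {F : ℝ → ℝ≥0∞} (hF : Measurable F) :
    ∫⁻ s, (∫⁻ t, F (s * t) ∂(tauMeasure β α p)) ∂(tauMeasure γ β p)
      ≤ Cb γ β α p * ∫⁻ u, F u ∂(tauMeasure β α p) := by
  have hτ1 : ∀ s : ℝ, ∫⁻ t, F (s * t) ∂(tauMeasure β α p)
      = ∫⁻ t, td β α p t * F (s * t) ∂volume := by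
    intro s
    have hg : Measurable fun t => F (s * t) := hF.comp (measurable_const_mul s)
    rw [tau_eq, lintegral_withDensity_eq_lintegral_mul _ (td_meas _ _ _) hg]
    rfl
  have houter_meas : Measurable fun s => ∫⁻ t, td β α p t * F (s * t) ∂volume := by
    apply Measurable.lintegral_prod_right (f := fun s t => td β α p t * F (s * t))
    exact ((td_meas _ _ _).comp measurable_snd).mul (hF.comp measurable_mul)
  rw [lintegral_congr hτ1, tau_eq γ β p,
    lintegral_withDensity_eq_lintegral_mul _ (td_meas _ _ _) houter_meas]
  simp only [Pi.mul_apply]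
  have hindic : ∀ s : ℝ, td γ β p s * (∫⁻ t, td β α p t * F (s * t) ∂volume)
      = (Ioo (0:ℝ) 1).indicator
          (fun s => td γ β p s * ∫⁻ t, td β α p t * F (s * t) ∂volume) s := by
    intro s
    by_cases hs : s ∈ Ioo (0:ℝ) 1
    · rw [indicator_of_mem hs]
    · rw [indicator_of_notMem hs]
      have h0 : td γ β p s = 0 := by
        simp only [td]
        rw [if_neg (fun hc => hs (Set.mem_Ioo.mpr hc))]
      rw [h0, zero_mul]
  rw [lintegral_congr hindic, lintegral_indicator measurableSet_Ioo]
  have hinner : ∀ s ∈ Ioo (0:ℝ) 1,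
      td γ β p s * (∫⁻ t, td β α p t * F (s * t) ∂volume)
      = ∫⁻ u, td γ β p s * (ENNReal.ofReal s)⁻¹ * (td β α p (u / s) * F u) ∂volume := by
    intro s hs
    have hs0 : (0:ℝ) < s := hs.1
    have hmeas_inner_s : Measurable fun t => td β α p t * F (s * t) :=
      (td_meas _ _ _).mul (hF.comp (measurable_const_mul s))
    have hmeas_div : Measurable fun u => td β α p (u / s) * F u :=
      ((td_meas _ _ _).comp (measurable_id.div_const s)).mul hF
    have himgu := lint_image_1d (s := (univ : Set ℝ)) MeasurableSet.univ
      (f := fun t : ℝ => s * t) (f' := fun _ => s)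
      (fun x _ => (((hasDerivAt_id x).const_mul s).hasDerivWithinAt : HasDerivWithinAt (fun t : ℝ => s * t) (s * 1) univ x).congr_deriv (mul_one s))
      (fun x _ y _ h => mul_left_cancel₀ hs0.ne' h)
      (fun u => td β α p (u / s) * F u)
    have himguniv : (fun t : ℝ => s * t) '' univ = univ := by
      rw [Set.image_univ]
      exact (mul_left_surjective₀ hs0.ne' : Function.Surjective fun t : ℝ => s * t).range_eq
    rw [himguniv] at himgu
    simp only [Measure.restrict_univ] at himgu
    have hcongr : ∀ t : ℝ, ENNReal.ofReal |s| * (td β α p ((s * t) / s) * F (s * t))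
        = ENNReal.ofReal s * (td β α p t * F (s * t)) := by
      intro t
      rw [show (s * t) / s = t from by field_simp, abs_of_pos hs0]
    rw [lintegral_congr hcongr, lintegral_const_mul _ hmeas_inner_s] at himgu
    rw [show (∫⁻ t, td β α p t * F (s * t) ∂volume)
        = (ENNReal.ofReal s)⁻¹ * ∫⁻ u, td β α p (u / s) * F u ∂volume from by
      rw [himgu, ← mul_assoc, ENNReal.inv_mul_cancel
        (by simpa [ENNReal.ofReal_eq_zero] using hs0) ENNReal.ofReal_ne_top, one_mul]]
    rw [← mul_assoc, ← lintegral_const_mul _ hmeas_div]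
  rw [setLIntegral_congr_fun measurableSet_Ioo hinner]
  have hswap : ∫⁻ s in Ioo (0:ℝ) 1,
        ∫⁻ u, td γ β p s * (ENNReal.ofReal s)⁻¹ * (td β α p (u / s) * F u) ∂volume ∂volume
      = ∫⁻ u, ∫⁻ s in Ioo (0:ℝ) 1,
          td γ β p s * (ENNReal.ofReal s)⁻¹ * (td β α p (u / s) * F u) ∂volume ∂volume := by
    apply lintegral_lintegral_swap
    apply Measurable.aemeasurable
    refine Measurable.mul (Measurable.mul ?_ ?_) (Measurable.mul ?_ ?_)
    · exact (td_meas γ β p).comp measurable_fst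
    · exact (ENNReal.measurable_ofReal.comp measurable_fst).inv
    · exact (td_meas β α p).comp (measurable_snd.div measurable_fst)
    · exact hF.comp measurable_snd
  rw [hswap]
  have hpull : ∀ u : ℝ,
      ∫⁻ s in Ioo (0:ℝ) 1,
        td γ β p s * (ENNReal.ofReal s)⁻¹ * (td β α p (u / s) * F u) ∂volume
      = (∫⁻ s in Ioo (0:ℝ) 1,
          td γ β p s * (ENNReal.ofReal s)⁻¹ * td β α p (u / s) ∂volume) * F u := by
    intro u
    rw [lintegral_congr (fun s : ℝ => (mul_assoc (td γ β p s * (ENNReal.ofReal s)⁻¹)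
      (td β α p (u / s)) (F u)).symm)]
    exact lintegral_mul_const _ (((td_meas γ β p).mul
      ENNReal.measurable_ofReal.inv).mul
      ((td_meas β α p).comp (measurable_const.div measurable_id)))
  rw [lintegral_congr hpull]
  refine le_trans (lintegral_mono fun u =>
    mul_le_mul_left (hpoint γ β α p hγβ hβα hp u) _) ?_
  have hm : Measurable fun u => td β α p u * F u := (td_meas _ _ _).mul hF
  rw [lintegral_congr (fun u : ℝ => mul_assoc (Cb γ β α p) (td β α p u) (F u)),
    lintegral_const_mul _ hm, tau_eq β α p,
    lintegral_withDensity_eq_lintegral_mul _ (td_meas _ _ _) hF]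
  rfl

theorem stmt4 (d : ℕ) (hd : 1 ≤ d) (γ β α p : ℝ) (hγβ : γ < β) (hβα : β < α) (hp : 0 < p) :
    UpsilonRange (E := EuclideanSpace ℝ (Fin d)) (tauMeasure β α p) ⊆
      UpsilonDomain (tauMeasure γ β p) := by
  rintro N ⟨M, hMdom, rfl⟩
  have hM : IsLevyMeasure M := hMdom.1
  have hN : IsLevyMeasure (Upsilon (tauMeasure β α p) M) := hMdom.2
  haveI := hM.1
  haveI := hN.1
  have hg : Measurable fun y : EuclideanSpace ℝ (Fin d) =>
      ENNReal.ofReal (min (‖y‖ ^ 2) 1) :=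
    ENNReal.measurable_ofReal.comp ((continuous_norm.pow 2).min continuous_const).measurable
  have hzero : (Upsilon (tauMeasure γ β p) (Upsilon (tauMeasure β α p) M)) {0} = 0 :=
    upsilon_singleton _ _ (tau_singleton _ _ _) hN.2.1
  have hPhimeas : Measurable fun u : ℝ =>
      ∫⁻ x, ENNReal.ofReal (min (‖u • x‖ ^ 2) 1) ∂M := by
    apply Measurable.lintegral_prod_right
      (f := fun (u : ℝ) (x : EuclideanSpace ℝ (Fin d)) => ENNReal.ofReal (min (‖u • x‖ ^ 2) 1))
    exact hg.comp measurable_smul_pair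
  have hint : ∫⁻ y, ENNReal.ofReal (min (‖y‖ ^ 2) 1)
      ∂(Upsilon (tauMeasure γ β p) (Upsilon (tauMeasure β α p) M)) < ⊤ := by
    rw [upsilon_lintegral _ _ hg]
    have hrw : ∀ s : ℝ,
        ∫⁻ y, ENNReal.ofReal (min (‖s • y‖ ^ 2) 1) ∂(Upsilon (tauMeasure β α p) M)
          = ∫⁻ t, (fun u : ℝ => ∫⁻ x, ENNReal.ofReal (min (‖u • x‖ ^ 2) 1) ∂M) (s * t)
              ∂(tauMeasure β α p) := by
      intro s
      have hgs : Measurable fun y : EuclideanSpace ℝ (Fin d) =>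
          ENNReal.ofReal (min (‖s • y‖ ^ 2) 1) := hg.comp (measurable_const_smul s)
      rw [upsilon_lintegral _ _ hgs]
      simp only [smul_smul]
    rw [lintegral_congr hrw]
    refine lt_of_le_of_lt (tau_comp_bound γ β α p hγβ hβα hp
      (F := fun u : ℝ => ∫⁻ x, ENNReal.ofReal (min (‖u • x‖ ^ 2) 1) ∂M) hPhimeas) ?_
    rw [← upsilon_lintegral _ _ hg]
    exact ENNReal.mul_lt_top (Cb_lt_top γ β α p hγβ hβα hp) hN.2.2
  exact ⟨hN, sigmaFinite_of_min _ hzero hint, hzero, hint⟩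
end
end

section
/- Let d ≥ 1, α ∈ ℝ and 0 < q < p < ∞. Then the range of Ψ_{α,p} is contained in the domain of 𝔓_{α,p→q}: every Lévy measure of the form Ψ_{α,p} M with M ∈ 𝔇(Ψ_{α,p}) belongs to 𝔇(𝔓_{α,p→q}). -/
open MeasureTheory Set
open scoped ENNReal NNReal

noncomputable section

variable {E : Type*} [NormedAddCommGroup E] [NormedSpace ℝ E]
  [MeasurableSpace E] [BorelSpace E]

set_option linter.unusedSectionVars false
set_option linter.unusedVariables false


private theorem lintegral_image_deriv {s : Set ℝ} {g g' : ℝ → ℝ}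
    (hs : MeasurableSet s) (hg' : ∀ x ∈ s, HasDerivWithinAt g (g' x) s x)
    (hg : InjOn g s) (F : ℝ → ℝ≥0∞) :
    ∫⁻ x in g '' s, F x = ∫⁻ x in s, ENNReal.ofReal |g' x| * F (g x) := by
  simpa only [ContinuousLinearMap.det_toSpanSingleton] using
    lintegral_image_eq_lintegral_abs_det_fderiv_mul volume hs
      (fun x hx => (hg' x hx).hasFDerivWithinAt) hg F

private theorem lintegral_comp_rpow' {b : ℝ} (hb : b ≠ 0) (F : ℝ → ℝ≥0∞) :
    ∫⁻ u in Ioi (0:ℝ), F u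
      = ∫⁻ x in Ioi (0:ℝ), ENNReal.ofReal (|b| * x ^ (b - 1)) * F (x ^ b) := by
  have a1 : ∀ x ∈ Ioi (0:ℝ), HasDerivWithinAt (fun t : ℝ => t ^ b) (b * x ^ (b - 1)) (Ioi 0) x :=
    fun x hx => (Real.hasDerivAt_rpow_const (Or.inl (mem_Ioi.mp hx).ne')).hasDerivWithinAt
  have a2 : InjOn (fun x : ℝ => x ^ b) (Ioi 0) := by
    rcases lt_or_gt_of_ne hb with (h | h)
    · apply StrictAntiOn.injOn
      intro x hx y hy hxy
      rw [← inv_lt_inv₀ (Real.rpow_pos_of_pos hx b) (Real.rpow_pos_of_pos hy b),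
        ← Real.rpow_neg (le_of_lt hx), ← Real.rpow_neg (le_of_lt hy)]
      exact Real.rpow_lt_rpow (le_of_lt hx) hxy (neg_pos.mpr h)
    · exact StrictMonoOn.injOn fun x hx y _ hxy => Real.rpow_lt_rpow (mem_Ioi.mp hx).le hxy h
  have a3 : (fun t : ℝ => t ^ b) '' (Ioi 0) = Ioi 0 := by
    ext x; rw [mem_image]; constructor
    · rintro ⟨y, hy, rfl⟩; exact Real.rpow_pos_of_pos hy b
    · intro hx
      exact ⟨x ^ (1/b), Real.rpow_pos_of_pos hx _, by
        rw [← Real.rpow_mul (le_of_lt hx), one_div_mul_cancel hb, Real.rpow_one]⟩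
  have h := lintegral_image_deriv measurableSet_Ioi a1 a2 F
  rw [a3] at h
  rw [h]
  refine setLIntegral_congr_fun measurableSet_Ioi (fun x hx => ?_)
  beta_reduce
  rw [abs_mul, abs_of_nonneg (Real.rpow_nonneg (le_of_lt hx) _)]

private theorem lintegral_comp_mul_left' {a : ℝ} (ha : 0 < a) (F : ℝ → ℝ≥0∞) :
    ∫⁻ u in Ioi (0:ℝ), F u = ∫⁻ t in Ioi (0:ℝ), ENNReal.ofReal a * F (a * t) := by
  have a1 : ∀ x ∈ Ioi (0:ℝ), HasDerivWithinAt (fun t : ℝ => a * t) a (Ioi 0) x :=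
    fun x hx => by simpa using ((hasDerivAt_id x).const_mul a).hasDerivWithinAt
  have a2 : InjOn (fun t : ℝ => a * t) (Ioi 0) :=
    fun x _ y _ h => mul_left_cancel₀ ha.ne' h
  have a3 : (fun t : ℝ => a * t) '' (Ioi 0) = Ioi 0 := by
    ext x; rw [mem_image]; constructor
    · rintro ⟨y, hy, rfl⟩; exact mul_pos ha hy
    · intro hx
      exact ⟨x / a, div_pos hx ha, by rw [mul_comm, div_mul_cancel₀ x ha.ne']⟩
  have h := lintegral_image_deriv measurableSet_Ioi a1 a2 F
  rw [a3] at h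
  rw [h]
  refine setLIntegral_congr_fun measurableSet_Ioi (fun x hx => ?_)
  beta_reduce
  rw [abs_of_pos ha]

private theorem lintegral_wdif {dns : ℝ → ℝ} (hd : Measurable dns) {F : ℝ → ℝ≥0∞}
    (hF : Measurable F) :
    ∫⁻ s, F s ∂((volume : Measure ℝ).withDensity fun s =>
        if 0 < s then ENNReal.ofReal (dns s) else 0)
      = ∫⁻ s in Ioi (0:ℝ), ENNReal.ofReal (dns s) * F s := by
  rw [lintegral_withDensity_eq_lintegral_mul _
      (Measurable.ite measurableSet_Ioi hd.ennreal_ofReal measurable_const) hF,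
    ← lintegral_indicator measurableSet_Ioi]
  refine lintegral_congr fun s => ?_
  by_cases h : 0 < s <;> simp [indicator, h, mem_Ioi]

private theorem sigmaFinite_wdif (dns : ℝ → ℝ) :
    SigmaFinite ((volume : Measure ℝ).withDensity fun s =>
      if 0 < s then ENNReal.ofReal (dns s) else 0) :=
  SigmaFinite.withDensity_of_ne_top' fun s => by split <;> simp

private theorem lintegral_upsilon (ρ : Measure ℝ) (M : Measure E) [SFinite M]
    {F : E → ℝ≥0∞} (hF : Measurable F) :
    ∫⁻ y, F y ∂Upsilon ρ M = ∫⁻ s, ∫⁻ x, F (s • x) ∂M ∂ρ := by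
  have hsm : Measurable fun sx : ℝ × E => sx.1 • sx.2 :=
    (continuous_fst.smul continuous_snd).measurable
  rw [Upsilon, lintegral_map hF hsm]
  exact lintegral_prod _ (hF.comp hsm).aemeasurable

private theorem upsilon_singleton_zero {ρ : Measure ℝ} {M : Measure E} [SFinite M]
    (hρ : ρ {0} = 0) (hM : M {0} = 0) : Upsilon ρ M {0} = 0 := by
  have hsm : Measurable fun sx : ℝ × E => sx.1 • sx.2 :=
    (continuous_fst.smul continuous_snd).measurable
  rw [Upsilon, Measure.map_apply hsm (measurableSet_singleton 0)]
  have hsub : (fun sx : ℝ × E => sx.1 • sx.2) ⁻¹' {0}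
      ⊆ (({0} : Set ℝ) ×ˢ (univ : Set E)) ∪ ((univ : Set ℝ) ×ˢ ({0} : Set E)) := by
    rintro ⟨s, x⟩ h
    simp only [mem_preimage, mem_singleton_iff] at h
    rcases eq_or_ne s 0 with rfl | hs
    · exact Or.inl (by simp)
    · refine Or.inr ?_
      have hx : x = 0 := by
        have h2 := congrArg (fun y : E => s⁻¹ • y) h
        simpa [smul_smul, inv_mul_cancel₀ hs] using h2
      simp [hx]
  refine le_antisymm ((measure_mono hsub).trans ?_) zero_le
  refine (measure_union_le _ _).trans ?_
  rw [Measure.prod_prod, Measure.prod_prod, hρ, hM, zero_mul, mul_zero, add_zero]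

private theorem sigmaFinite_of_levyIntegral {μ : Measure E} (h0 : μ {0} = 0)
    (hint : ∫⁻ x, ENNReal.ofReal (min (‖x‖ ^ 2) 1) ∂μ < ⊤) : SigmaFinite μ := by
  have hm : Measurable fun x : E => ENNReal.ofReal (min (‖x‖ ^ 2) 1) :=
    ((measurable_norm.pow_const 2).min measurable_const).ennreal_ofReal
  refine ⟨⟨⟨fun n => {0} ∪ {x : E |
      ENNReal.ofReal (min ((1/(n+1) : ℝ) ^ 2) 1) ≤ ENNReal.ofReal (min (‖x‖ ^ 2) 1)},
      fun _ => mem_univ _, fun n => ?_, ?_⟩⟩⟩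
  · have hε : (0:ℝ≥0∞) < ENNReal.ofReal (min ((1/(n+1):ℝ)^2) 1) := by
      apply ENNReal.ofReal_pos.mpr
      have h2 : (0:ℝ) < (1/(n+1):ℝ)^2 := by positivity
      exact lt_min h2 one_pos
    refine (measure_union_le _ _).trans_lt ?_
    rw [h0, zero_add]
    have hle := mul_meas_ge_le_lintegral₀ (μ := μ) hm.aemeasurable
      (ENNReal.ofReal (min ((1/(n+1):ℝ)^2) 1))
    by_contra hcon
    push_neg at hcon
    rw [top_le_iff] at hcon
    rw [hcon, ENNReal.mul_top hε.ne'] at hle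
    exact absurd (hle.trans_lt hint) (by simp)
  · rw [iUnion_eq_univ_iff]
    intro x
    rcases eq_or_ne x 0 with rfl | hx
    · exact ⟨0, Or.inl rfl⟩
    · obtain ⟨n, hn⟩ := exists_nat_one_div_lt (norm_pos_iff.mpr hx)
      refine ⟨n, Or.inr ?_⟩
      apply ENNReal.ofReal_le_ofReal
      have h1 : (1/(n+1):ℝ) ^ 2 ≤ ‖x‖ ^ 2 :=
        pow_le_pow_left₀ (by positivity) hn.le 2
      exact min_le_min h1 le_rfl

private theorem stable_integrable {r : ℝ} (hr : 0 < r) {f : ℝ → ℝ} (hf : IsStableDensity r f)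
    {c : ℝ} (hc : 0 ≤ c) :
    IntegrableOn (fun v => Real.exp (-(c * v)) * f v) (Ioi 0) ∧
      ∫ v in Ioi (0:ℝ), Real.exp (-(c * v)) * f v = Real.exp (-(c ^ r)) := by
  obtain ⟨hmeas, hnn, hlap⟩ := hf
  have hfint : IntegrableOn f (Ioi 0) := by
    by_contra hcon
    have h0 := hlap 0 le_rfl
    rw [Real.zero_rpow hr.ne'] at h0
    simp only [zero_mul, neg_zero, Real.exp_zero, one_mul] at h0
    rw [integral_undef hcon] at h0
    norm_num at h0
  have hint : IntegrableOn (fun v => Real.exp (-(c * v)) * f v) (Ioi 0) := by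
    refine Integrable.mono hfint ?_ ?_
    · exact ((Real.measurable_exp.comp
        ((measurable_const.mul measurable_id).neg)).mul hmeas).aestronglyMeasurable
    · filter_upwards [ae_restrict_mem measurableSet_Ioi] with v hv
      rw [Real.norm_eq_abs, Real.norm_eq_abs, abs_mul, Real.abs_exp]
      have hle1 : Real.exp (-(c*v)) ≤ 1 := by
        rw [Real.exp_le_one_iff]
        have := mem_Ioi.mp hv
        nlinarith
      nlinarith [abs_nonneg (f v), Real.exp_pos (-(c*v))]
  exact ⟨hint, hlap c hc⟩

private theorem core_lintegral {q p : ℝ} (hq : 0 < q) (hqp : q < p) {f : ℝ → ℝ}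
    (hf : IsStableDensity (q/p) f) {c : ℝ} (hc : 0 ≤ c) :
    ∫⁻ s in Ioi (0:ℝ),
        ENNReal.ofReal (p * f (s ^ (-p)) * s ^ (-p - 1) * Real.exp (-(c * s ^ (-p))))
      = ENNReal.ofReal (Real.exp (-(c ^ (q/p)))) := by
  have hp : 0 < p := hq.trans hqp
  have hr : 0 < q/p := div_pos hq hp
  obtain ⟨hint, hval⟩ := stable_integrable hr hf hc
  have hnn : 0 ≤ᵐ[volume.restrict (Ioi (0:ℝ))] fun v => Real.exp (-(c*v)) * f v :=
    ae_of_all _ fun v => mul_nonneg (Real.exp_pos _).le (hf.2.1 v)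
  have h1 : ∫⁻ v in Ioi (0:ℝ), ENNReal.ofReal (Real.exp (-(c*v)) * f v)
      = ENNReal.ofReal (Real.exp (-(c ^ (q/p)))) := by
    rw [← ofReal_integral_eq_lintegral_ofReal hint hnn, hval]
  rw [lintegral_comp_rpow' (b := -p) (neg_ne_zero.mpr hp.ne')
    (fun v => ENNReal.ofReal (Real.exp (-(c*v)) * f v))] at h1
  rw [← h1]
  refine setLIntegral_congr_fun measurableSet_Ioi (fun s hs => ?_)
  beta_reduce
  have hs0 : (0:ℝ) < s := hs
  rw [← ENNReal.ofReal_mul (mul_nonneg (abs_nonneg _) (Real.rpow_nonneg hs0.le _))]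
  congr 1
  rw [abs_neg, abs_of_pos hp]
  ring

private theorem dens_identity {α p : ℝ} (hp : 0 < p) (f : ℝ → ℝ) {u s : ℝ}
    (hu : 0 < u) (hs : 0 < s) :
    p * f (s ^ (-p)) * s ^ (-α - p - 1) * (s⁻¹ * ((u/s) ^ (-α-1) * Real.exp (-((u/s) ^ p))))
      = u ^ (-α - 1) * (p * f (s ^ (-p)) * s ^ (-p - 1) * Real.exp (-(u ^ p * s ^ (-p)))) := by
  have h1 : (u / s) ^ (-α - 1) = u ^ (-α - 1) * s ^ (α + 1) := by
    rw [Real.div_rpow hu.le hs.le, div_eq_mul_inv, ← Real.rpow_neg hs.le]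
    have h : -(-α-1) = α + 1 := by ring
    rw [h]
  have h2 : (u/s) ^ p = u ^ p * s ^ (-p) := by
    rw [Real.div_rpow hu.le hs.le, div_eq_mul_inv, ← Real.rpow_neg hs.le]
  have h3 : s ^ (-α - p - 1) * (s⁻¹ * s ^ (α + 1)) = s ^ (-p - 1) := by
    rw [← Real.rpow_neg_one s, ← Real.rpow_add hs, ← Real.rpow_add hs]
    congr 1
    ring
  rw [h1, h2, ← h3]
  ring

private def dpsi (α p : ℝ) : ℝ → ℝ := fun t => t ^ (-α - 1) * Real.exp (-(t ^ p))

private def dpi (f : ℝ → ℝ) (α p : ℝ) : ℝ → ℝ := fun s => p * f (s ^ (-p)) * s ^ (-α - p - 1)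

private theorem dpsi_apply (α p t : ℝ) : dpsi α p t = t ^ (-α - 1) * Real.exp (-(t ^ p)) := rfl

private theorem psiMeasure_eq (α p : ℝ) : psiMeasure α p
    = (volume : Measure ℝ).withDensity fun s =>
        if 0 < s then ENNReal.ofReal (dpsi α p s) else 0 := rfl

private theorem piMeasure_eq (f : ℝ → ℝ) (α p : ℝ) : piMeasure f α p
    = (volume : Measure ℝ).withDensity fun s =>
        if 0 < s then ENNReal.ofReal (dpi f α p s) else 0 := rfl

private theorem measurable_dpsi (α p : ℝ) : Measurable (dpsi α p) := by unfold dpsi; fun_prop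

private theorem measurable_dpi {f : ℝ → ℝ} (hfm : Measurable f) (α p : ℝ) :
    Measurable (dpi f α p) := by unfold dpi; fun_prop

private theorem dens_identity' {α p : ℝ} (hp : 0 < p) (f : ℝ → ℝ) {u s : ℝ}
    (hu : 0 < u) (hs : 0 < s) :
    dpi f α p s * (s⁻¹ * dpsi α p (u / s))
      = u ^ (-α - 1) * (p * f (s ^ (-p)) * s ^ (-p - 1) * Real.exp (-(u ^ p * s ^ (-p)))) := by
  unfold dpi dpsi
  exact dens_identity hp f hu hs

private theorem key_conv {q p α : ℝ} (hq : 0 < q) (hqp : q < p) {f : ℝ → ℝ}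
    (hf : IsStableDensity (q/p) f) {φ : ℝ → ℝ≥0∞} (hφ : Measurable φ) :
    ∫⁻ s, (∫⁻ t, φ (s * t) ∂psiMeasure α p) ∂piMeasure f α p
      = ∫⁻ u, φ u ∂psiMeasure α q := by
  have hp : 0 < p := hq.trans hqp
  have hfm : Measurable f := hf.1
  have hfnn : ∀ x, 0 ≤ f x := hf.2.1
  haveI : SigmaFinite (psiMeasure α p) := sigmaFinite_wdif _
  have hdψ := measurable_dpsi α p
  have hdψq := measurable_dpsi α q
  have hdπ := measurable_dpi hfm α p
  have hinner : ∀ s : ℝ, Measurable fun t => φ (s * t) :=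
    fun s => hφ.comp (measurable_id.const_mul s)
  have hFψ : Measurable fun s => ∫⁻ t, φ (s * t) ∂psiMeasure α p :=
    Measurable.lintegral_prod_right (f := fun s t => φ (s * t))
      (hφ.comp (measurable_fst.mul measurable_snd))
  have hmeas_in : ∀ s : ℝ, Measurable fun u => ENNReal.ofReal (s⁻¹ * dpsi α p (u/s)) * φ u :=
    fun s => ((measurable_const.mul (hdψ.comp (measurable_id.div_const s))).ennreal_ofReal).mul hφ
  calc
    ∫⁻ s, (∫⁻ t, φ (s * t) ∂psiMeasure α p) ∂piMeasure f α p
        = ∫⁻ s in Ioi (0:ℝ), ENNReal.ofReal (dpi f α p s)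
            * ∫⁻ t, φ (s * t) ∂psiMeasure α p := by
          rw [piMeasure_eq, lintegral_wdif hdπ hFψ]
    _ = ∫⁻ s in Ioi (0:ℝ), ∫⁻ u in Ioi (0:ℝ),
          ENNReal.ofReal (dpi f α p s) * (ENNReal.ofReal (s⁻¹ * dpsi α p (u/s)) * φ u) := by
          refine setLIntegral_congr_fun measurableSet_Ioi (fun s hs => ?_)
          beta_reduce
          have hs0 : (0:ℝ) < s := hs
          have haux : ∫⁻ t, φ (s * t) ∂psiMeasure α p
              = ∫⁻ u in Ioi (0:ℝ), ENNReal.ofReal (s⁻¹ * dpsi α p (u/s)) * φ u := by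
            rw [psiMeasure_eq, lintegral_wdif hdψ (hinner s),
              lintegral_comp_mul_left' hs0 (fun u => ENNReal.ofReal (s⁻¹ * dpsi α p (u/s)) * φ u)]
            refine setLIntegral_congr_fun measurableSet_Ioi (fun t _ => ?_)
            beta_reduce
            rw [mul_div_cancel_left₀ t hs0.ne', ← mul_assoc,
              ← ENNReal.ofReal_mul hs0.le, ← mul_assoc, mul_inv_cancel₀ hs0.ne', one_mul]
          rw [haux, ← lintegral_const_mul _ (hmeas_in s)]
    _ = ∫⁻ u in Ioi (0:ℝ), ∫⁻ s in Ioi (0:ℝ),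
          ENNReal.ofReal (dpi f α p s) * (ENNReal.ofReal (s⁻¹ * dpsi α p (u/s)) * φ u) := by
          refine lintegral_lintegral_swap ?_
          refine Measurable.aemeasurable ?_
          exact ((hdπ.comp measurable_fst).ennreal_ofReal).mul
            ((((measurable_fst.inv).mul (hdψ.comp (measurable_snd.div measurable_fst))).ennreal_ofReal).mul
              (hφ.comp measurable_snd))
    _ = ∫⁻ u in Ioi (0:ℝ), ENNReal.ofReal (dpsi α q u) * φ u := by
          refine setLIntegral_congr_fun measurableSet_Ioi (fun u hu => ?_)
          beta_reduce
          have hu0 : (0:ℝ) < u := hu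
          have hmeas2 : Measurable fun s : ℝ =>
              ENNReal.ofReal (p * f (s ^ (-p)) * s ^ (-p - 1) * Real.exp (-(u ^ p * s ^ (-p)))) := by
            fun_prop
          calc
            ∫⁻ s in Ioi (0:ℝ),
                ENNReal.ofReal (dpi f α p s) * (ENNReal.ofReal (s⁻¹ * dpsi α p (u/s)) * φ u)
              = ∫⁻ s in Ioi (0:ℝ), (ENNReal.ofReal (u ^ (-α - 1))
                  * ENNReal.ofReal (p * f (s ^ (-p)) * s ^ (-p - 1)
                      * Real.exp (-(u ^ p * s ^ (-p))))) * φ u := by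
                refine setLIntegral_congr_fun measurableSet_Ioi (fun s hs => ?_)
                beta_reduce
                have hs0 : (0:ℝ) < s := hs
                have hdπnn : 0 ≤ dpi f α p s :=
                  mul_nonneg (mul_nonneg hp.le (hfnn _)) (Real.rpow_nonneg hs0.le _)
                have e1 : ENNReal.ofReal (dpi f α p s)
                    * (ENNReal.ofReal (s⁻¹ * dpsi α p (u/s)) * φ u)
                    = ENNReal.ofReal (dpi f α p s * (s⁻¹ * dpsi α p (u/s))) * φ u := by
                  rw [ENNReal.ofReal_mul hdπnn, mul_assoc]
                have e2 : ENNReal.ofReal (u ^ (-α - 1))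
                    * ENNReal.ofReal (p * f (s ^ (-p)) * s ^ (-p - 1)
                        * Real.exp (-(u ^ p * s ^ (-p))))
                    = ENNReal.ofReal (u ^ (-α - 1) * (p * f (s ^ (-p)) * s ^ (-p - 1)
                        * Real.exp (-(u ^ p * s ^ (-p))))) :=
                  (ENNReal.ofReal_mul (Real.rpow_nonneg hu0.le _)).symm
                rw [e1, e2, dens_identity' (α := α) hp f hu0 hs0]
            _ = (∫⁻ s in Ioi (0:ℝ), ENNReal.ofReal (u ^ (-α - 1))
                  * ENNReal.ofReal (p * f (s ^ (-p)) * s ^ (-p - 1)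
                      * Real.exp (-(u ^ p * s ^ (-p))))) * φ u :=
                lintegral_mul_const _ (measurable_const.mul hmeas2)
            _ = (ENNReal.ofReal (u ^ (-α - 1))
                  * ∫⁻ s in Ioi (0:ℝ), ENNReal.ofReal (p * f (s ^ (-p)) * s ^ (-p - 1)
                      * Real.exp (-(u ^ p * s ^ (-p))))) * φ u := by
                rw [lintegral_const_mul _ hmeas2]
            _ = ENNReal.ofReal (dpsi α q u) * φ u := by
                rw [core_lintegral hq hqp hf (Real.rpow_nonneg hu0.le p),
                  ← Real.rpow_mul hu0.le p (q/p),
                  show p * (q/p) = q by field_simp,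
                  ← ENNReal.ofReal_mul (Real.rpow_nonneg hu0.le _), dpsi_apply]
    _ = ∫⁻ u, φ u ∂psiMeasure α q := by
          rw [psiMeasure_eq, lintegral_wdif hdψq hφ]

private theorem min_sq_bound {a m : ℝ} (ha : 1 ≤ a) (hm : 0 ≤ m) :
    min (a * m) 1 ≤ a * min m 1 := by
  rcases le_total m 1 with h | h
  · rw [min_eq_left h]; exact min_le_left _ _
  · rw [min_eq_right h, mul_one]; exact (min_le_right _ _).trans ha

private theorem psi_q_bound {q p α : ℝ} (hq : 0 < q) (hqp : q < p) (z : E) :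
    ∫⁻ u, ENNReal.ofReal (min (‖u • z‖ ^ 2) 1) ∂psiMeasure α q
      ≤ ENNReal.ofReal (Real.exp 1)
          * (∫⁻ u, ENNReal.ofReal (min (‖u • z‖ ^ 2) 1) ∂psiMeasure α p)
        + (∫⁻ u in Ioi (1:ℝ), ENNReal.ofReal (u ^ 2 * dpsi α q u))
          * ENNReal.ofReal (min (‖z‖ ^ 2) 1) := by
  have hp : 0 < p := hq.trans hqp
  have hΦ : Measurable fun u : ℝ => ENNReal.ofReal (min (‖u • z‖ ^ 2) 1) :=
    (ENNReal.continuous_ofReal.comp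
      (((continuous_id.smul continuous_const).norm.pow 2).min continuous_const)).measurable
  rw [psiMeasure_eq, psiMeasure_eq, lintegral_wdif (measurable_dpsi α q) hΦ,
    lintegral_wdif (measurable_dpsi α p) hΦ,
    ← Ioc_union_Ioi_eq_Ioi (zero_le_one (α := ℝ)),
    lintegral_union measurableSet_Ioi (Ioc_disjoint_Ioi le_rfl)]
  have t1 : ∫⁻ u in Ioc (0:ℝ) 1, ENNReal.ofReal (dpsi α q u)
        * ENNReal.ofReal (min (‖u • z‖ ^ 2) 1)
      ≤ ENNReal.ofReal (Real.exp 1) * ∫⁻ u in Ioc (0:ℝ) 1 ∪ Ioi 1, ENNReal.ofReal (dpsi α p u)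
        * ENNReal.ofReal (min (‖u • z‖ ^ 2) 1) := by
    refine le_trans ?_ (mul_le_mul_right (lintegral_mono_set subset_union_left) _)
    rw [← lintegral_const_mul (f := fun u => ENNReal.ofReal (dpsi α p u) * ENNReal.ofReal (min (‖u • z‖ ^ 2) 1)) _ ((measurable_dpsi α p).ennreal_ofReal.mul hΦ)]
    refine lintegral_mono_ae ?_
    filter_upwards [ae_restrict_mem measurableSet_Ioc] with u hu
    rw [← mul_assoc, ← ENNReal.ofReal_mul (Real.exp_pos 1).le]
    refine mul_le_mul_left (ENNReal.ofReal_le_ofReal ?_) _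
    rw [dpsi_apply, dpsi_apply]
    have hA : (0:ℝ) ≤ u ^ (-α - 1) := Real.rpow_nonneg hu.1.le _
    have e1 : Real.exp (-(u ^ q)) ≤ 1 := by
      rw [Real.exp_le_one_iff]
      exact neg_nonpos.mpr (Real.rpow_nonneg hu.1.le q)
    have e2 : (1:ℝ) ≤ Real.exp 1 * Real.exp (-(u ^ p)) := by
      rw [← Real.exp_add]
      refine Real.one_le_exp ?_
      have := Real.rpow_le_one hu.1.le hu.2 hp.le
      linarith
    calc u ^ (-α - 1) * Real.exp (-(u ^ q)) ≤ u ^ (-α - 1) * 1 :=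
          mul_le_mul_of_nonneg_left e1 hA
      _ ≤ u ^ (-α - 1) * (Real.exp 1 * Real.exp (-(u ^ p))) :=
          mul_le_mul_of_nonneg_left e2 hA
      _ = Real.exp 1 * (u ^ (-α - 1) * Real.exp (-(u ^ p))) := by ring
  have t2 : ∫⁻ u in Ioi (1:ℝ), ENNReal.ofReal (dpsi α q u)
        * ENNReal.ofReal (min (‖u • z‖ ^ 2) 1)
      ≤ (∫⁻ u in Ioi (1:ℝ), ENNReal.ofReal (u ^ 2 * dpsi α q u))
          * ENNReal.ofReal (min (‖z‖ ^ 2) 1) := by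
    have hM2 : Measurable fun u : ℝ => ENNReal.ofReal (u ^ 2 * dpsi α q u) := by
      exact ((measurable_id.pow_const 2).mul (measurable_dpsi α q)).ennreal_ofReal
    rw [← lintegral_mul_const _ hM2]
    refine lintegral_mono_ae ?_
    filter_upwards [ae_restrict_mem measurableSet_Ioi] with u hu
    have hu1 : (1:ℝ) ≤ u := le_of_lt hu
    have hu0 : (0:ℝ) < u := lt_of_lt_of_le one_pos hu1
    have hdnn : 0 ≤ dpsi α q u := by
      rw [dpsi_apply]
      exact mul_nonneg (Real.rpow_nonneg hu0.le _) (Real.exp_pos _).le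
    rw [← ENNReal.ofReal_mul hdnn, ← ENNReal.ofReal_mul (by positivity)]
    refine ENNReal.ofReal_le_ofReal ?_
    have hns : ‖u • z‖ ^ 2 = u ^ 2 * ‖z‖ ^ 2 := by
      rw [norm_smul, Real.norm_eq_abs, mul_pow, sq_abs]
    rw [hns]
    calc dpsi α q u * min (u ^ 2 * ‖z‖ ^ 2) 1
        ≤ dpsi α q u * (u ^ 2 * min (‖z‖ ^ 2) 1) :=
          mul_le_mul_of_nonneg_left (min_sq_bound (one_le_pow₀ hu1) (by positivity)) hdnn
      _ = u ^ 2 * dpsi α q u * min (‖z‖ ^ 2) 1 := by ring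
  exact add_le_add t1 t2

private theorem tail_lt_top {q α : ℝ} (hq : 0 < q) :
    (∫⁻ u in Ioi (1:ℝ), ENNReal.ofReal (u ^ 2 * dpsi α q u)) < ⊤ := by
  set c : ℝ := max (1 - α) 0 with hc
  have hc0 : 0 ≤ c := le_max_right _ _
  have hs : 0 < (c + 1) / q := by positivity
  have hgamma : IntegrableOn (fun y : ℝ => q⁻¹ * (Real.exp (-y) * y ^ ((c+1)/q - 1))) (Ioi 0) :=
    (Real.GammaIntegral_convergent hs).const_mul _
  have hint0 : IntegrableOn (fun x : ℝ => (|q| * x ^ (q - 1))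
      • (q⁻¹ * (Real.exp (-(x ^ q)) * (x ^ q) ^ ((c+1)/q - 1)))) (Ioi 0) :=
    (integrableOn_Ioi_comp_rpow_iff (fun y : ℝ => q⁻¹ * (Real.exp (-y) * y ^ ((c+1)/q - 1))) hq.ne').mpr hgamma
  have hint : IntegrableOn (fun u : ℝ => u ^ c * Real.exp (-(u ^ q))) (Ioi 0) := by
    refine hint0.congr_fun (fun x hx => ?_) measurableSet_Ioi
    have hx0 : (0:ℝ) < x := hx
    beta_reduce
    rw [smul_eq_mul, abs_of_pos hq, ← Real.rpow_mul hx0.le]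
    have he : q * ((c+1)/q - 1) = c + 1 - q := by field_simp
    rw [he]
    rw [show q * x ^ (q-1) * (q⁻¹ * (Real.exp (-(x ^ q)) * x ^ (c+1-q)))
        = (q * q⁻¹) * (x ^ (q-1) * x ^ (c+1-q)) * Real.exp (-(x ^ q)) by ring,
      mul_inv_cancel₀ hq.ne', one_mul, ← Real.rpow_add hx0]
    norm_num
  have hb : (∫⁻ u in Ioi (1:ℝ), ENNReal.ofReal (u ^ 2 * dpsi α q u))
      ≤ ∫⁻ u in Ioi (0:ℝ), ENNReal.ofReal (u ^ c * Real.exp (-(u ^ q))) := by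
    refine le_trans ?_ (lintegral_mono_set (Ioi_subset_Ioi zero_le_one))
    refine lintegral_mono_ae ?_
    filter_upwards [ae_restrict_mem measurableSet_Ioi] with u hu
    refine ENNReal.ofReal_le_ofReal ?_
    have hu1 : (1:ℝ) ≤ u := le_of_lt hu
    have hu0 : (0:ℝ) < u := lt_of_lt_of_le one_pos hu1
    rw [dpsi_apply, ← mul_assoc]
    have h2 : u ^ 2 * u ^ (-α - 1) = u ^ (1 - α) := by
      rw [← Real.rpow_natCast u 2, ← Real.rpow_add hu0]
      congr 1
      push_cast
      ring
    rw [h2]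
    exact mul_le_mul_of_nonneg_right
      (Real.rpow_le_rpow_of_exponent_le hu1 (le_max_left _ _)) (Real.exp_pos _).le
  refine hb.trans_lt ?_
  have hnn : 0 ≤ᵐ[volume.restrict (Ioi (0:ℝ))] fun u : ℝ => u ^ c * Real.exp (-(u ^ q)) := by
    filter_upwards [ae_restrict_mem measurableSet_Ioi] with u hu
    have hu0 : (0:ℝ) < u := hu
    positivity
  rw [← ofReal_integral_eq_lintegral_ofReal hint hnn]
  exact ENNReal.ofReal_lt_top

private theorem lintegral_upsilon_upsilon (ρ₁ ρ₂ : Measure ℝ) [SFinite ρ₁] [SFinite ρ₂]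
    (M : Measure E) [SFinite M] [SFinite (Upsilon ρ₂ M)] {F : E → ℝ≥0∞} (hF : Measurable F) :
    ∫⁻ y, F y ∂Upsilon ρ₁ (Upsilon ρ₂ M)
      = ∫⁻ z, ∫⁻ s, ∫⁻ t, F ((s * t) • z) ∂ρ₂ ∂ρ₁ ∂M := by
  rw [lintegral_upsilon _ _ hF]
  have h2 : ∀ s : ℝ, ∫⁻ x, F (s • x) ∂Upsilon ρ₂ M
      = ∫⁻ z, ∫⁻ t, F ((s * t) • z) ∂ρ₂ ∂M := by
    intro s
    have hFs : Measurable fun x : E => F (s • x) :=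
      hF.comp ((continuous_const.smul continuous_id).measurable)
    calc ∫⁻ x, F (s • x) ∂Upsilon ρ₂ M
        = ∫⁻ t, ∫⁻ z, F (s • (t • z)) ∂M ∂ρ₂ := lintegral_upsilon _ _ hFs
      _ = ∫⁻ z, ∫⁻ t, F (s • (t • z)) ∂ρ₂ ∂M :=
          lintegral_lintegral_swap (Measurable.aemeasurable (hF.comp
            (((continuous_fst.smul continuous_snd).const_smul s).measurable)))
      _ = ∫⁻ z, ∫⁻ t, F ((s * t) • z) ∂ρ₂ ∂M :=
          lintegral_congr fun z => lintegral_congr fun t => by rw [smul_smul]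
  calc ∫⁻ s, ∫⁻ x, F (s • x) ∂Upsilon ρ₂ M ∂ρ₁
      = ∫⁻ s, ∫⁻ z, ∫⁻ t, F ((s * t) • z) ∂ρ₂ ∂M ∂ρ₁ := lintegral_congr h2
    _ = ∫⁻ z, ∫⁻ s, ∫⁻ t, F ((s * t) • z) ∂ρ₂ ∂ρ₁ ∂M :=
        lintegral_lintegral_swap (Measurable.aemeasurable
          (Measurable.lintegral_prod_right'
            (f := fun w : (ℝ × E) × ℝ => F ((w.1.1 * w.2) • w.1.2))
            (hF.comp (((continuous_fst.fst.mul continuous_snd).smul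
              continuous_fst.snd).measurable))))


theorem stmt5 (d : ℕ) (hd : 1 ≤ d) (α q p : ℝ) (hq : 0 < q) (hqp : q < p)
    (f : ℝ → ℝ) (hf : IsStableDensity (q / p) f) :
    UpsilonRange (E := EuclideanSpace ℝ (Fin d)) (psiMeasure α p) ⊆
      UpsilonDomain (piMeasure f α p) := by
  have hp : 0 < p := hq.trans hqp
  rintro N ⟨M, ⟨hM, hN⟩, rfl⟩
  haveI hMσ : SigmaFinite M := hM.1
  haveI hNσ : SigmaFinite (Upsilon (psiMeasure α p) M) := hN.1
  haveI : SigmaFinite (psiMeasure α p) := sigmaFinite_wdif _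
  haveI : SigmaFinite (psiMeasure α q) := sigmaFinite_wdif _
  haveI : SigmaFinite (piMeasure f α p) := sigmaFinite_wdif _
  have hG1 : Measurable fun y : EuclideanSpace ℝ (Fin d) =>
      ENNReal.ofReal (min (‖y‖ ^ 2) 1) :=
    ((measurable_norm.pow_const 2).min measurable_const).ennreal_ofReal
  have hπ0 : piMeasure f α p {0} = 0 := by
    rw [piMeasure_eq, withDensity_apply _ (measurableSet_singleton 0)]
    exact setLIntegral_measure_zero _ _ Real.volume_singleton
  have h0 : Upsilon (piMeasure f α p) (Upsilon (psiMeasure α p) M) {0} = 0 :=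
    upsilon_singleton_zero hπ0 hN.2.1
  have hΦz : ∀ z : EuclideanSpace ℝ (Fin d),
      Measurable fun u : ℝ => ENNReal.ofReal (min (‖u • z‖ ^ 2) 1) := fun z =>
    (ENNReal.continuous_ofReal.comp
      (((continuous_id.smul continuous_const).norm.pow 2).min continuous_const)).measurable
  have hIdent : ∫⁻ y, ENNReal.ofReal (min (‖y‖ ^ 2) 1)
        ∂Upsilon (piMeasure f α p) (Upsilon (psiMeasure α p) M)
      = ∫⁻ z, ∫⁻ u, ENNReal.ofReal (min (‖u • z‖ ^ 2) 1) ∂psiMeasure α q ∂M := by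
    rw [lintegral_upsilon_upsilon _ _ _ hG1]
    exact lintegral_congr fun z => key_conv hq hqp hf (hΦz z)
  have hswap : ∫⁻ z, ∫⁻ u, ENNReal.ofReal (min (‖u • z‖ ^ 2) 1) ∂psiMeasure α p ∂M
      = ∫⁻ y, ENNReal.ofReal (min (‖y‖ ^ 2) 1) ∂Upsilon (psiMeasure α p) M := by
    calc ∫⁻ z, ∫⁻ u, ENNReal.ofReal (min (‖u • z‖ ^ 2) 1) ∂psiMeasure α p ∂M
        = ∫⁻ u, ∫⁻ z, ENNReal.ofReal (min (‖u • z‖ ^ 2) 1) ∂M ∂psiMeasure α p :=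
          lintegral_lintegral_swap (Measurable.aemeasurable (hG1.comp
            (continuous_snd.smul continuous_fst).measurable))
      _ = ∫⁻ y, ENNReal.ofReal (min (‖y‖ ^ 2) 1) ∂Upsilon (psiMeasure α p) M :=
          (lintegral_upsilon _ _ hG1).symm
  have hMeas1 : Measurable fun z : EuclideanSpace ℝ (Fin d) =>
      ∫⁻ u, ENNReal.ofReal (min (‖u • z‖ ^ 2) 1) ∂psiMeasure α p := by
    exact Measurable.lintegral_prod_right'
      (f := fun w : (EuclideanSpace ℝ (Fin d)) × ℝ => ENNReal.ofReal (min (‖w.2 • w.1‖ ^ 2) 1))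
      ((ENNReal.continuous_ofReal.comp
        (((continuous_snd.smul continuous_fst).norm.pow 2).min continuous_const)).measurable)
  have hIlt : ∫⁻ y, ENNReal.ofReal (min (‖y‖ ^ 2) 1)
      ∂Upsilon (piMeasure f α p) (Upsilon (psiMeasure α p) M) < ⊤ := by
    rw [hIdent]
    calc ∫⁻ z, ∫⁻ u, ENNReal.ofReal (min (‖u • z‖ ^ 2) 1) ∂psiMeasure α q ∂M
        ≤ ∫⁻ z, (ENNReal.ofReal (Real.exp 1)
            * (∫⁻ u, ENNReal.ofReal (min (‖u • z‖ ^ 2) 1) ∂psiMeasure α p)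
          + (∫⁻ u in Ioi (1:ℝ), ENNReal.ofReal (u ^ 2 * dpsi α q u))
            * ENNReal.ofReal (min (‖z‖ ^ 2) 1)) ∂M :=
          lintegral_mono fun z => psi_q_bound (α := α) hq hqp z
      _ = ENNReal.ofReal (Real.exp 1)
            * (∫⁻ z, ∫⁻ u, ENNReal.ofReal (min (‖u • z‖ ^ 2) 1) ∂psiMeasure α p ∂M)
          + (∫⁻ u in Ioi (1:ℝ), ENNReal.ofReal (u ^ 2 * dpsi α q u))
            * ∫⁻ z, ENNReal.ofReal (min (‖z‖ ^ 2) 1) ∂M := by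
          rw [lintegral_add_left (hMeas1.const_mul _), lintegral_const_mul _ hMeas1,
            lintegral_const_mul _ hG1]
      _ < ⊤ := by
          rw [hswap]
          refine ENNReal.add_lt_top.mpr ⟨?_, ?_⟩
          · exact ENNReal.mul_lt_top ENNReal.ofReal_lt_top hN.2.2
          · exact ENNReal.mul_lt_top (tail_lt_top hq) hM.2.2
  exact ⟨hN, sigmaFinite_of_levyIntegral h0 hIlt, h0, hIlt⟩
end
end
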